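/- arXiv:2401.10538 — 11 statements merged into one kernel-verified Lean document; each statement's English description precedes it below -/
import Mathlib

section
/- For every finite simple graph G = (V, E) with m edges there exists an assignment q : E → {−1, 1} such that (i) for every vertex v ∈ V, the discrepancy |Σ_{e incident to v} q(e)| is at most 2, and (ii) one of the two values is assigned to exactly ⌊m/2⌋ edges and the other to exactly ⌈m/2⌉ edges. -/
/-!
Take a longest trail `W` in the remaining edge set: it contains every edge at its two endpoints.
Sign the edges of `W` alternately. Each passage of `W` through a vertex then contributes
`+1 - 1 = 0`, so `W` only contributes at its endpoints, at most `2` in absolute value, and those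
endpoints carry no further edges. Removing `W` and recursing keeps all discrepancies at most `2`;
choosing the overall sign of each trail keeps the total sum in `{-1, 0, 1}`, which is the balance
of the two colour classes.
-/

namespace List

variable {α : Type*} [DecidableEq α]

/-- `altSign l e = (-1) ^ i` where `i` is the index of the first occurrence of `e` in `l`, and
`altSign l e = 0` if `e ∉ l`. -/
def altSign : List α → α → ℤ
  | [], _ => 0
  | x :: l, e => if e = x then 1 else -altSign l e

theorem altSign_eq_one_or_neg_one {l : List α} {e : α} (he : e ∈ l) :
    altSign l e = 1 ∨ altSign l e = -1 := by
  induction l with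
  | nil => cases he
  | cons x l ih =>
    by_cases hex : e = x
    · simp [altSign, hex]
    · rcases ih (by simpa [hex] using he) with h | h <;> simp [altSign, hex, h]

theorem sum_filter_altSign_cons {x : α} {l : List α} (hx : x ∉ l) (p : α → Prop)
    [DecidablePred p] :
    ∑ e ∈ (x :: l).toFinset.filter p, altSign (x :: l) e =
      (if p x then 1 else 0) - ∑ e ∈ l.toFinset.filter p, altSign l e := by
  have htail : ∀ e ∈ l.toFinset.filter p, altSign (x :: l) e = -altSign l e := by
    intro e he
    have hex : e ≠ x := by rintro rfl; exact hx (by simpa using (Finset.mem_filter.mp he).1)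
    simp [altSign, hex]
  rw [toFinset_cons, Finset.filter_insert]
  split_ifs with hp
  · rw [Finset.sum_insert (by simp [hx]), Finset.sum_congr rfl htail]
    simp [altSign, sub_eq_add_neg]
  · simp [Finset.sum_congr rfl htail]

theorem sum_altSign_eq_zero_or_one {l : List α} (hl : l.Nodup) :
    ∑ e ∈ l.toFinset, altSign l e = 0 ∨ ∑ e ∈ l.toFinset, altSign l e = 1 := by
  induction l with
  | nil => simp
  | cons x l ih =>
    rw [nodup_cons] at hl
    have hcons := sum_filter_altSign_cons hl.1 (fun _ => True)
    simp only [Finset.filter_true_of_mem (fun _ _ => trivial), if_true] at hcons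
    rw [hcons]
    rcases ih hl.2 with h | h <;> simp [h]

end List

namespace SimpleGraph.Walk

variable {V : Type*} [DecidableEq V] {H : SimpleGraph V}

theorem IsTrail.sum_altSign_incident {a b : V} {W : H.Walk a b} (hW : W.IsTrail) (v : V) :
    ∑ e ∈ W.edges.toFinset.filter (v ∈ ·), W.edges.altSign e =
      (if v = a then 1 else 0) - (if v = b then (-1) ^ W.length else 0) := by
  induction W with
  | nil => simp
  | @cons a a' b h W ih =>
    rw [isTrail_cons] at hW
    rw [edges_cons, List.sum_filter_altSign_cons hW.2, ih hW.1, length_cons, pow_succ]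
    have := h.ne
    by_cases hva : v = a <;> by_cases hva' : v = a' <;> by_cases hvb : v = b <;>
      simp_all

theorem IsTrail.abs_sum_altSign_incident_le {a b : V} {W : H.Walk a b} (hW : W.IsTrail) (v : V) :
    |∑ e ∈ W.edges.toFinset.filter (v ∈ ·), W.edges.altSign e| ≤ 2 := by
  rw [hW.sum_altSign_incident]
  rcases neg_one_pow_eq_or ℤ W.length with h | h <;> rw [h] <;> split_ifs <;> norm_num

theorem mem_edges_of_forall_length_le_of_start_mem {a b : V} {W : H.Walk a b} (hW : W.IsTrail)
    (hmax : ∀ (u v : V) (p : H.Walk u v), p.IsTrail → p.length ≤ W.length)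
    {e : Sym2 V} (he : e ∈ H.edgeSet) (ha : a ∈ e) : e ∈ W.edges := by
  by_contra hnot
  obtain ⟨c, rfl⟩ := Sym2.mem_iff_exists.mp ha
  have hadj : H.Adj c a := (H.mem_edgeSet.mp he).symm
  have hlonger := hmax _ _ (cons hadj W) ((isTrail_cons hadj W).mpr ⟨hW, by rwa [Sym2.eq_swap]⟩)
  simp at hlonger

theorem mem_edges_of_forall_length_le {a b : V} {W : H.Walk a b} (hW : W.IsTrail)
    (hmax : ∀ (u v : V) (p : H.Walk u v), p.IsTrail → p.length ≤ W.length)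
    {e : Sym2 V} (he : e ∈ H.edgeSet) (hab : a ∈ e ∨ b ∈ e) : e ∈ W.edges := by
  rcases hab with ha | hb
  · exact mem_edges_of_forall_length_le_of_start_mem hW hmax he ha
  · have hrev := mem_edges_of_forall_length_le_of_start_mem hW.reverse
      (by simpa using hmax) he hb
    simpa using hrev

end SimpleGraph.Walk

open SimpleGraph Finset

theorem Finset.sum_filter_ite_mem {α M : Type*} [DecidableEq α] [AddCommMonoid M]
    {T E : Finset α} (hTE : T ⊆ E) (p : α → Prop) [DecidablePred p] (f g : α → M) :
    ∑ e ∈ E.filter p, (if e ∈ T then f e else g e) =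
      ∑ e ∈ T.filter p, f e + ∑ e ∈ (E \ T).filter p, g e := by
  rw [sum_ite, filter_filter, filter_filter]
  congr 2 <;> ext e <;> have := @hTE e <;> simp only [mem_filter, mem_sdiff] <;> tauto

section

variable {V : Type*} [DecidableEq V]

structure IsBalancedSplitting (E : Finset (Sym2 V)) (q : Sym2 V → ℤ) : Prop where
  sign : ∀ e ∈ E, q e = 1 ∨ q e = -1
  discrepancy_le : ∀ v : V, |∑ e ∈ E.filter (fun e => v ∈ e), q e| ≤ 2
  imbalance_le : |∑ e ∈ E, q e| ≤ 1

namespace IsBalancedSplitting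

theorem card_filter_eq {E : Finset (Sym2 V)} {q : Sym2 V → ℤ} (hq : IsBalancedSplitting E q) :
    ((E.filter (fun e => q e = 1)).card = E.card / 2 ∧
        (E.filter (fun e => q e = -1)).card = (E.card + 1) / 2) ∨
      ((E.filter (fun e => q e = 1)).card = (E.card + 1) / 2 ∧
        (E.filter (fun e => q e = -1)).card = E.card / 2) := by
  have hcard : (E.filter (fun e => q e = 1)).card + (E.filter (fun e => q e = -1)).card
      = E.card := by
    have hneg : E.filter (fun e => ¬q e = 1) = E.filter (fun e => q e = -1) :=
      filter_congr fun e he => by rcases hq.sign e he with h | h <;> simp [h]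
    rw [← hneg, card_filter_add_card_filter_not]
  have hsum : ∑ e ∈ E, q e
      = (E.filter (fun e => q e = 1)).card - (E.filter (fun e => q e = -1)).card := by
    rw [natCast_card_filter, natCast_card_filter, ← sum_sub_distrib]
    refine sum_congr rfl fun e he => ?_
    rcases hq.sign e he with h | h <;> simp [h]
  have := abs_le.mp hq.imbalance_le
  omega

theorem extend_trail {E : Finset (Sym2 V)} {H : SimpleGraph V} {a b : V} {W : H.Walk a b}
    (hW : W.IsTrail) (hWE : W.edges.toFinset ⊆ E)
    (hends : ∀ e ∈ E, a ∈ e ∨ b ∈ e → e ∈ W.edges) {q : Sym2 V → ℤ}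
    (hq : IsBalancedSplitting (E \ W.edges.toFinset) q) :
    ∃ q' : Sym2 V → ℤ, IsBalancedSplitting E q' := by
  obtain ⟨s, hs_abs, hs_total⟩ : ∃ s : ℤ, |s| = 1 ∧
      |∑ e ∈ W.edges.toFinset, s * W.edges.altSign e +
        ∑ e ∈ E \ W.edges.toFinset, q e| ≤ 1 := by
    have ht := abs_le.mp hq.imbalance_le
    rcases List.sum_altSign_eq_zero_or_one hW.edges_nodup with h | h
    · exact ⟨1, by simp, by simpa [← mul_sum, h] using hq.imbalance_le⟩
    · by_cases ht1 : ∑ e ∈ E \ W.edges.toFinset, q e = 1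
      · exact ⟨-1, by simp, by rw [← mul_sum, h, ht1]; norm_num⟩
      · exact ⟨1, by simp, by rw [← mul_sum, h]; exact abs_le.mpr ⟨by omega, by omega⟩⟩
  refine ⟨fun e => if e ∈ W.edges.toFinset then s * W.edges.altSign e else q e,
    ⟨fun e he => ?_, fun v => ?_, ?_⟩⟩
  · by_cases heW : e ∈ W.edges
    · rcases abs_eq (zero_le_one' ℤ) |>.mp hs_abs with hs | hs <;>
        rcases List.altSign_eq_one_or_neg_one heW with h | h <;> simp [heW, h, hs]
    · simpa [heW] using hq.sign e (mem_sdiff.mpr ⟨he, by simpa using heW⟩)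
  · rw [sum_filter_ite_mem hWE, ← mul_sum]
    by_cases hv : v = a ∨ v = b
    · have hrest : (E \ W.edges.toFinset).filter (fun e => v ∈ e) = ∅ := by
        refine filter_eq_empty_iff.mpr fun e he hve => (mem_sdiff.mp he).2 ?_
        refine List.mem_toFinset.mpr (hends e (mem_sdiff.mp he).1 ?_)
        rcases hv with rfl | rfl <;> simp [hve]
      rw [hrest, sum_empty, add_zero, abs_mul, hs_abs, one_mul]
      exact hW.abs_sum_altSign_incident_le v
    · push Not at hv
      rw [hW.sum_altSign_incident, if_neg hv.1, if_neg hv.2, sub_zero, mul_zero, zero_add]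
      exact hq.discrepancy_le v
  · have htotal := sum_filter_ite_mem hWE (fun _ => True) (fun e => s * W.edges.altSign e) q
    simp only [filter_true_of_mem (fun _ _ => trivial)] at htotal
    rwa [htotal]

end IsBalancedSplitting

theorem exists_isTrail_forall_mem_edges_of_endpoint_mem {E : Finset (Sym2 V)}
    (hE : ∀ e ∈ E, ¬e.IsDiag) (hne : E.Nonempty) :
    ∃ (a b : V) (W : (fromEdgeSet (E : Set (Sym2 V))).Walk a b), W.IsTrail ∧
      W.edges.toFinset.Nonempty ∧ W.edges.toFinset ⊆ E ∧
      ∀ e ∈ E, a ∈ e ∨ b ∈ e → e ∈ W.edges := by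
  set H := fromEdgeSet (E : Set (Sym2 V))
  have hEH : ∀ e ∈ E, e ∈ H.edgeSet := fun e he => by simp [H, he, hE e he]
  obtain ⟨e₀, he₀⟩ := hne
  induction e₀ using Sym2.inductionOn with
  | hf x y =>
  have : Nonempty V := ⟨x⟩
  have : Finite H.edgeSet := (E.finite_toSet.subset (by simp [H])).to_subtype
  obtain ⟨a, b, W, hW, hmax⟩ := Walk.exists_isTrail_forall_isTrail_length_le_length H
  have hxy : H.Adj x y := hEH _ he₀
  have hlen : 0 < W.length := hmax x y (.cons hxy .nil) (by simp)
  refine ⟨a, b, W, hW, ?_, fun e he => ?_,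
    fun e he hab => Walk.mem_edges_of_forall_length_le hW hmax (hEH e he) hab⟩
  · rwa [List.toFinset_nonempty_iff, ← List.length_pos_iff, Walk.length_edges]
  · have h := W.edges_subset_edgeSet (List.mem_toFinset.mp he)
    rw [edgeSet_fromEdgeSet] at h
    exact h.1

theorem exists_isBalancedSplitting (E : Finset (Sym2 V)) (hE : ∀ e ∈ E, ¬e.IsDiag) :
    ∃ q, IsBalancedSplitting E q := by
  induction E using Finset.strongInduction with
  | H E ih =>
  rcases E.eq_empty_or_nonempty with rfl | hne
  · exact ⟨0, ⟨by simp, by simp, by simp⟩⟩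
  obtain ⟨a, b, W, hW, hW_ne, hWE, hends⟩ :=
    exists_isTrail_forall_mem_edges_of_endpoint_mem hE hne
  obtain ⟨q, hq⟩ := ih _ (sdiff_ssubset hWE hW_ne) fun e he => hE e (mem_sdiff.mp he).1
  exact hq.extend_trail hW hWE hends

end

/-- Degree-splitting with discrepancy at most 2 and balanced color classes. -/
theorem degree_splitting_exists {V : Type*} [Fintype V] [DecidableEq V]
    (G : SimpleGraph V) [DecidableRel G.Adj] :
    ∃ q : Sym2 V → ℤ,
      (∀ e ∈ G.edgeFinset, q e = 1 ∨ q e = -1) ∧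
      (∀ v : V, |∑ e ∈ G.edgeFinset.filter (fun e => v ∈ e), q e| ≤ 2) ∧
      (((G.edgeFinset.filter (fun e => q e = 1)).card = G.edgeFinset.card / 2 ∧
        (G.edgeFinset.filter (fun e => q e = -1)).card = (G.edgeFinset.card + 1) / 2) ∨
       ((G.edgeFinset.filter (fun e => q e = 1)).card = (G.edgeFinset.card + 1) / 2 ∧
        (G.edgeFinset.filter (fun e => q e = -1)).card = G.edgeFinset.card / 2)) := by
  obtain ⟨q, hq⟩ :=
    exists_isBalancedSplitting G.edgeFinset fun _ => G.not_isDiag_of_mem_edgeFinset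
  exact ⟨q, hq.sign, hq.discrepancy_le, hq.card_filter_eq⟩
end

section
/- Let G = (V, E) be a finite simple graph with maximum degree Δ and let i be a natural number with 2^i ≤ Δ. Then there exists a partition of E into 2^i pairwise disjoint sets E_1, …, E_{2^i} such that for every j ∈ {1, …, 2^i}, the maximum degree Δ_j of the spanning subgraph (V, E_j) satisfies Δ/2^i − 2 ≤ Δ_j ≤ Δ/2^i + 2 (as inequalities between real numbers). -/
/-!
Halve the edge set so that at every vertex the two halves have degrees differing by at most 2,
and recurse `i` times; the deviation of each part from `deg v / 2 ^ i` then stays within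
`2 - 2 / 2 ^ i`. To halve, take a maximal trail through some vertex `w`, extended as far as
possible in both directions, and color its edges alternately: the color imbalance vanishes
except at the two ends, where it is at most 1 each, and both ends have no edges left outside the
trail. Hence recursing on the remaining edges never touches an imbalanced vertex again.
-/

/-- The maximum degree of the spanning subgraph `(V, F)` determined by a set `F` of edges. -/
def maxDegreeOn {V : Type*} [Fintype V] [DecidableEq V] (F : Finset (Sym2 V)) : ℕ :=
  Finset.univ.sup (fun v : V => (F.filter (fun e => v ∈ e)).card)

open Finset

section

variable {V : Type*} [DecidableEq V]

def degOn (F : Finset (Sym2 V)) (v : V) : ℕ := #{e ∈ F | v ∈ e}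

def imbalance (A B : Finset (Sym2 V)) (v : V) : ℤ := degOn A v - degOn B v

lemma degOn_mono {A B : Finset (Sym2 V)} (h : A ⊆ B) (v : V) : degOn A v ≤ degOn B v :=
  card_le_card (filter_subset_filter _ h)

lemma degOn_union {A B : Finset (Sym2 V)} (h : Disjoint A B) (v : V) :
    degOn (A ∪ B) v = degOn A v + degOn B v := by
  rw [degOn, filter_union, card_union_of_disjoint (disjoint_filter_filter h)]; rfl

lemma degOn_insert_mk {A : Finset (Sym2 V)} {x y : V} (hxy : x ≠ y) (h : s(x, y) ∉ A) (v : V) :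
    (degOn (insert s(x, y) A) v : ℤ) =
      degOn A v + (if v = x then 1 else 0) + (if v = y then 1 else 0) := by
  rw [degOn, filter_insert]
  by_cases hx : v = x <;> by_cases hy : v = y <;> simp_all [degOn]

lemma imbalance_union {A B A' B' : Finset (Sym2 V)} (hA : Disjoint A A') (hB : Disjoint B B')
    (v : V) : imbalance (A ∪ A') (B ∪ B') v = imbalance A B v + imbalance A' B' v := by
  simp only [imbalance, degOn_union hA, degOn_union hB]; push_cast; ring

lemma imbalance_swap (A B : Finset (Sym2 V)) (v : V) : imbalance B A v = -imbalance A B v :=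
  (neg_sub _ _).symm

lemma imbalance_insert_mk {A B : Finset (Sym2 V)} {x y : V} (hxy : x ≠ y) (h : s(x, y) ∉ A)
    (v : V) : imbalance (insert s(x, y) A) B v =
      imbalance A B v + (if v = x then 1 else 0) + (if v = y then 1 else 0) := by
  rw [imbalance, imbalance, degOn_insert_mk hxy h]; ring

/-- `A`, `B` are the color classes of a maximal trail from `z` colored alternately, starting
with `A`; it ends at `z'`, where no edge of `R` is left. -/
lemma exists_alternating_trail (R : Finset (Sym2 V)) (hR : ∀ e ∈ R, ¬ e.IsDiag) (z : V)
    (hz : degOn R z ≠ 0) :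
    ∃ A B : Finset (Sym2 V), ∃ z' : V, ∃ b : ℤ, Disjoint A B ∧ A ∪ B ⊆ R ∧ A.Nonempty ∧
      degOn (R \ (A ∪ B)) z' = 0 ∧ |b| ≤ 1 ∧
      ∀ v, imbalance A B v = (if v = z then 1 else 0) + (if v = z' then b else 0) := by
  induction R using Finset.strongInduction generalizing z with
  | _ R ih =>
  obtain ⟨e, he⟩ := card_ne_zero.1 hz
  rw [mem_filter] at he
  obtain ⟨x, rfl⟩ := Sym2.mem_iff_exists.1 he.2
  have hzx : z ≠ x := fun h => hR _ he.1 (Sym2.mk_isDiag_iff.2 h)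
  have hrest : R \ {s(z, x)} = R.erase s(z, x) := sdiff_singleton_eq_erase _ _
  by_cases hx : degOn (R.erase s(z, x)) x = 0
  · refine ⟨{s(z, x)}, ∅, x, 1, disjoint_empty_right _, by simpa using he.1,
      singleton_nonempty _, by simpa [hrest] using hx, le_of_eq abs_one, fun v => ?_⟩
    rw [← insert_empty, imbalance_insert_mk hzx (notMem_empty _)]
    simp [imbalance, degOn]
  obtain ⟨A, B, z', b, hAB, hsub, hA, hz', hb, himb⟩ :=
    ih _ (erase_ssubset he.1) (fun f hf => hR f (mem_of_mem_erase hf)) x hx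
  have hnot : s(z, x) ∉ B := fun h => notMem_erase _ R (hsub (mem_union_right _ h))
  refine ⟨insert s(z, x) B, A, z', -b, ?_, ?_, insert_nonempty _ _, ?_, by rwa [abs_neg],
    fun v => ?_⟩
  · exact disjoint_insert_left.2
      ⟨fun h => notMem_erase _ R (hsub (mem_union_left _ h)), hAB.symm⟩
  · rw [insert_union, union_comm]
    exact insert_subset he.1 (hsub.trans (erase_subset _ _))
  · rwa [insert_union, union_comm, sdiff_insert, ← erase_sdiff_comm]
  · rw [imbalance_insert_mk hzx hnot, imbalance_swap, himb]
    split_ifs <;> ring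

lemma exists_balanced_piece (F : Finset (Sym2 V)) (hF : ∀ e ∈ F, ¬ e.IsDiag) (w : V)
    (hw : degOn F w ≠ 0) :
    ∃ A B : Finset (Sym2 V), Disjoint A B ∧ A ∪ B ⊆ F ∧ (A ∪ B).Nonempty ∧
      ∀ v, |imbalance A B v| ≤ 2 ∧ (imbalance A B v ≠ 0 → degOn (F \ (A ∪ B)) v = 0) := by
  obtain ⟨A₁, B₁, z₁, b₁, hAB₁, hsub₁, hA₁, hz₁, hb₁, himb₁⟩ :=
    exists_alternating_trail F hF w hw
  set R := F \ (A₁ ∪ B₁)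
  have hne₁ : (A₁ ∪ B₁).Nonempty := hA₁.mono subset_union_left
  by_cases hwR : degOn R w = 0
  · refine ⟨A₁, B₁, hAB₁, hsub₁, hne₁, fun v => ⟨?_, fun hv => ?_⟩⟩
    · rw [himb₁, abs_le] at *
      split_ifs <;> omega
    · rw [himb₁] at hv
      by_cases hvw : v = w
      · rwa [hvw]
      · by_cases hvz : v = z₁
        · rwa [hvz]
        · simp [hvw, hvz] at hv
  obtain ⟨A₂, B₂, z₂, b₂, hAB₂, hsub₂, -, hz₂, hb₂, himb₂⟩ :=
    exists_alternating_trail R (fun e he => hF e (mem_sdiff.1 he).1) w hwR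
  have hdisj : Disjoint (A₁ ∪ B₁) (A₂ ∪ B₂) := disjoint_sdiff.mono_right hsub₂
  have hrest : F \ ((A₁ ∪ B₂) ∪ (B₁ ∪ A₂)) = R \ (A₂ ∪ B₂) := by
    ext e; simp only [mem_sdiff, mem_union, R]; tauto
  refine ⟨A₁ ∪ B₂, B₁ ∪ A₂, ?_, ?_, hne₁.mono (union_subset_union subset_union_left
    subset_union_left), fun v => ?_⟩
  · exact disjoint_union_left.2
      ⟨disjoint_union_right.2 ⟨hAB₁, hdisj.mono subset_union_left subset_union_left⟩,
        disjoint_union_right.2 ⟨(hdisj.mono subset_union_right subset_union_right).symm,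
          hAB₂.symm⟩⟩
  · have hR : R ⊆ F := sdiff_subset
    exact union_subset (union_subset (subset_union_left.trans hsub₁)
      ((subset_union_right.trans hsub₂).trans hR)) (union_subset
      (subset_union_right.trans hsub₁) ((subset_union_left.trans hsub₂).trans hR))
  have himb : imbalance (A₁ ∪ B₂) (B₁ ∪ A₂) v =
      (if v = z₁ then b₁ else 0) - (if v = z₂ then b₂ else 0) := by
    rw [imbalance_union (hdisj.mono subset_union_left subset_union_right)
      (hdisj.mono subset_union_right subset_union_left), imbalance_swap A₂, himb₁, himb₂]
    ring
  rw [himb, hrest]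
  refine ⟨?_, fun hv => ?_⟩
  · rw [abs_le] at *
    split_ifs <;> omega
  · by_cases hvz : v = z₁
    · subst hvz; exact Nat.eq_zero_of_le_zero (hz₁ ▸ degOn_mono sdiff_subset v)
    · by_cases hvz₂ : v = z₂
      · rwa [hvz₂]
      · simp [hvz, hvz₂] at hv

lemma exists_balanced_split (F : Finset (Sym2 V)) (hF : ∀ e ∈ F, ¬ e.IsDiag) :
    ∃ A ⊆ F, ∀ v, |imbalance A (F \ A) v| ≤ 2 := by
  induction F using Finset.strongInduction with
  | _ F ih =>
  obtain rfl | ⟨e, he⟩ := F.eq_empty_or_nonempty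
  · exact ⟨∅, empty_subset _, fun v => by simp [imbalance, degOn]⟩
  have hw : degOn F e.out.1 ≠ 0 := card_ne_zero_of_mem (mem_filter.2 ⟨he, e.out_fst_mem⟩)
  obtain ⟨A, B, hAB, hsub, hne, hbal⟩ := exists_balanced_piece F hF _ hw
  set R := F \ (A ∪ B)
  obtain ⟨A', hA'R, hbal'⟩ :=
    ih R (sdiff_ssubset hsub hne) (fun f hf => hF f (mem_sdiff.1 hf).1)
  have hdisj : Disjoint (A ∪ B) R := disjoint_sdiff
  have hrest : F \ (A ∪ A') = B ∪ (R \ A') := by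
    ext f
    have hB : f ∈ B → f ∈ F ∧ f ∉ A ∧ f ∉ A' := fun hf =>
      ⟨hsub (mem_union_right _ hf), disjoint_right.1 hAB hf,
        fun hf' => disjoint_left.1 hdisj (mem_union_right _ hf) (hA'R hf')⟩
    simp only [mem_sdiff, mem_union, R]
    tauto
  refine ⟨A ∪ A', union_subset (subset_union_left.trans hsub) (hA'R.trans sdiff_subset),
    fun v => ?_⟩
  rw [hrest, imbalance_union (hdisj.mono subset_union_left hA'R)
    (hdisj.mono subset_union_right sdiff_subset)]
  obtain ⟨hle, hzero⟩ := hbal v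
  by_cases hv : imbalance A B v = 0
  · rw [hv, zero_add]; exact hbal' v
  · have hR := hzero hv
    have h₁ := degOn_mono hA'R v
    have h₂ := degOn_mono (sdiff_subset : R \ A' ⊆ R) v
    have h₀ : imbalance A' (R \ A') v = 0 := by rw [imbalance]; omega
    rwa [h₀, add_zero]

lemma abs_sub_div_two_pow_succ_le {x a b : ℝ} {i : ℕ} (hx : |x - a / 2 ^ i| ≤ 2 - 2 / 2 ^ i)
    (hab : |a - b| ≤ 2) : |x - (a + b) / 2 ^ (i + 1)| ≤ 2 - 2 / 2 ^ (i + 1) := by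
  have hpos : (0 : ℝ) < 2 ^ (i + 1) := by positivity
  have hsplit : x - (a + b) / 2 ^ (i + 1) = (x - a / 2 ^ i) + (a - b) / 2 ^ (i + 1) := by
    rw [pow_succ]; field_simp; ring
  have hsum : 2 - 2 / 2 ^ i + 2 / 2 ^ (i + 1) = (2 - 2 / 2 ^ (i + 1) : ℝ) := by
    rw [pow_succ]; field_simp; ring
  have hab' : |(a - b) / 2 ^ (i + 1)| ≤ 2 / 2 ^ (i + 1) := by
    rw [abs_div, abs_of_pos hpos]; gcongr
  rw [hsplit, ← hsum]
  exact (abs_add_le _ _).trans (add_le_add hx hab')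

lemma degOn_add_degOn_sdiff {A F : Finset (Sym2 V)} (h : A ⊆ F) (v : V) :
    degOn A v + degOn (F \ A) v = degOn F v := by
  rw [← degOn_union disjoint_sdiff, union_sdiff_of_subset h]

lemma exists_coloring (i : ℕ) (F : Finset (Sym2 V)) (hF : ∀ e ∈ F, ¬ e.IsDiag) :
    ∃ c : Sym2 V → (Fin i → Bool), ∀ j v,
      |(degOn {e ∈ F | c e = j} v : ℝ) - degOn F v / 2 ^ i| ≤ 2 - 2 / 2 ^ i := by
  induction i generalizing F with
  | zero => exact ⟨fun _ => Fin.elim0, fun j v => by simp [Subsingleton.elim _ j]⟩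
  | succ i ih =>
  obtain ⟨A, hAF, hbal⟩ := exists_balanced_split F hF
  obtain ⟨cA, hcA⟩ := ih A fun e he => hF e (hAF he)
  obtain ⟨cB, hcB⟩ := ih (F \ A) fun e he => hF e (mem_sdiff.1 he).1
  refine ⟨fun e => Fin.cons (decide (e ∈ A)) (if e ∈ A then cA e else cB e), fun j v => ?_⟩
  have hdeg : (degOn F v : ℝ) = degOn A v + degOn (F \ A) v := by
    exact_mod_cast (degOn_add_degOn_sdiff hAF v).symm
  have hAB : |(degOn A v : ℝ) - degOn (F \ A) v| ≤ 2 := by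
    have := hbal v; rw [imbalance] at this; exact_mod_cast this
  rw [← Fin.cons_self_tail j, hdeg]
  cases hj : j 0
  · have hclass : {e ∈ F | Fin.cons (decide (e ∈ A)) (if e ∈ A then cA e else cB e) =
        Fin.cons false (Fin.tail j)} = {e ∈ F \ A | cB e = Fin.tail j} := by
      ext e; by_cases he : e ∈ A <;> simp [he]
    rw [hclass, add_comm (degOn A v : ℝ)]
    exact abs_sub_div_two_pow_succ_le (hcB _ v) (by rwa [abs_sub_comm])
  · have hclass : {e ∈ F | Fin.cons (decide (e ∈ A)) (if e ∈ A then cA e else cB e) =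
        Fin.cons true (Fin.tail j)} = {e ∈ A | cA e = Fin.tail j} := by
      ext e
      by_cases he : e ∈ A
      · simp [he, hAF he]
      · simp [he]
    rw [hclass]
    exact abs_sub_div_two_pow_succ_le (hcA _ v) hAB

end

section

variable {V : Type*} [Fintype V] [DecidableEq V]

lemma degOn_le_maxDegreeOn (F : Finset (Sym2 V)) (v : V) : degOn F v ≤ maxDegreeOn F :=
  le_sup (f := degOn F) (mem_univ v)

lemma maxDegreeOn_le_of_forall_degOn_le {F : Finset (Sym2 V)} {b : ℝ} (hb : 0 ≤ b)
    (h : ∀ v, (degOn F v : ℝ) ≤ b) : (maxDegreeOn F : ℝ) ≤ b := by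
  rw [← Nat.le_floor_iff hb]
  exact Finset.sup_le fun v _ => Nat.le_floor (h v)

lemma degOn_edgeFinset (G : SimpleGraph V) [DecidableRel G.Adj] (v : V) :
    degOn G.edgeFinset v = G.degree v := by
  rw [← G.card_incidenceFinset_eq_degree, G.incidenceFinset_eq_filter]; rfl

lemma maxDegreeOn_bounds (G : SimpleGraph V) [DecidableRel G.Adj] {E : Finset (Sym2 V)}
    {k : ℝ} (hk : 0 < k) (h : ∀ v, |(degOn E v : ℝ) - G.degree v / k| ≤ 2) :
    (G.maxDegree : ℝ) / k - 2 ≤ maxDegreeOn E ∧ (maxDegreeOn E : ℝ) ≤ G.maxDegree / k + 2 := by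
  constructor
  · have hΔ : G.maxDegree ≤ ⌊k * (maxDegreeOn E + 2)⌋₊ := by
      refine G.maxDegree_le_of_forall_degree_le _ fun v => Nat.le_floor ?_
      have hv := (abs_le.1 (h v)).1
      have hle : (degOn E v : ℝ) ≤ maxDegreeOn E := by exact_mod_cast degOn_le_maxDegreeOn E v
      rw [← div_le_iff₀' hk]
      linarith
    rw [Nat.le_floor_iff (by positivity), ← div_le_iff₀' hk] at hΔ
    linarith
  · refine maxDegreeOn_le_of_forall_degOn_le (by positivity) fun v => ?_
    have hv := (abs_le.1 (h v)).2
    have hdeg : (G.degree v : ℝ) / k ≤ G.maxDegree / k := by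
      gcongr; exact_mod_cast G.degree_le_maxDegree v
    linarith

end

theorem partition_maxDegree_bounds_general {V : Type*} [Fintype V] [DecidableEq V]
    (G : SimpleGraph V) [DecidableRel G.Adj] (i : ℕ) :
    ∃ E : Fin (2 ^ i) → Finset (Sym2 V),
      (∀ j k, j ≠ k → Disjoint (E j) (E k)) ∧
      Finset.univ.biUnion E = G.edgeFinset ∧
      ∀ j, (G.maxDegree : ℝ) / 2 ^ i - 2 ≤ (maxDegreeOn (E j) : ℝ) ∧
        (maxDegreeOn (E j) : ℝ) ≤ (G.maxDegree : ℝ) / 2 ^ i + 2 := by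
  obtain ⟨c, hc⟩ := exists_coloring i G.edgeFinset fun e he =>
    G.not_isDiag_of_mem_edgeSet (SimpleGraph.mem_edgeFinset.1 he)
  let σ : Fin (2 ^ i) ≃ (Fin i → Bool) := (Fintype.equivFinOfCardEq (by simp)).symm
  refine ⟨fun j => {e ∈ G.edgeFinset | c e = σ j}, fun j k hjk => ?_, ?_, fun j => ?_⟩
  · exact disjoint_filter.2 fun e _ h₁ h₂ => hjk (σ.injective (h₁.symm.trans h₂))
  · ext e
    simpa using fun _ => ⟨σ.symm (c e), by simp⟩
  · refine maxDegreeOn_bounds G (by positivity) fun v => ?_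
    rw [← degOn_edgeFinset]
    exact (hc (σ j) v).trans (sub_le_self _ (by positivity))

/-- E can be partitioned into 2^i parts whose maximum degrees are
Δ/2^i ± 2. -/
theorem partition_maxDegree_bounds {V : Type*} [Fintype V] [DecidableEq V]
    (G : SimpleGraph V) [DecidableRel G.Adj] (i : ℕ) (hi : 2 ^ i ≤ G.maxDegree) :
    ∃ E : Fin (2 ^ i) → Finset (Sym2 V),
      (∀ j k, j ≠ k → Disjoint (E j) (E k)) ∧
      Finset.univ.biUnion E = G.edgeFinset ∧
      ∀ j, (G.maxDegree : ℝ) / 2 ^ i - 2 ≤ (maxDegreeOn (E j) : ℝ) ∧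
        (maxDegreeOn (E j) : ℝ) ≤ (G.maxDegree : ℝ) / 2 ^ i + 2 :=
  partition_maxDegree_bounds_general G i
end

section
/- Let G = (V, E) be a finite simple graph and let μ be an orientation of its edges. Then E can be partitioned into a collection D of edge-disjoint alternating-directions paths such that every vertex v ∈ V is an incoming endpoint of at most one path of D and an outgoing endpoint of at most one path of D. -/
/-- An alternating-directions (AD) path in the graph `G` with respect to the
orientation `μ`: a walk `(v_0, e_1, v_1, …, e_k, v_k)` with pairwise distinct edges such
that every two consecutive edges are both oriented toward their common vertex or both
oriented away from it. -/
structure ADPath {V : Type*} (G : SimpleGraph V) (μ : Sym2 V → V × V) where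
  /-- the number of edges of the path -/
  len : ℕ
  len_pos : 0 < len
  /-- the vertices `v_0, …, v_len` of the path -/
  vert : Fin (len + 1) → V
  /-- the edges `e_1, …, e_len` of the path (indexed from `0`) -/
  edge : Fin len → Sym2 V
  edge_eq : ∀ i : Fin len, edge i = s(vert i.castSucc, vert i.succ)
  edge_mem : ∀ i : Fin len, edge i ∈ G.edgeSet
  edge_inj : Function.Injective edge
  alternating : ∀ (i : ℕ) (h1 : i + 1 < len),
    ((μ (edge ⟨i, Nat.lt_of_succ_lt h1⟩)).2 = vert ⟨i + 1, by omega⟩ ∧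
     (μ (edge ⟨i + 1, h1⟩)).2 = vert ⟨i + 1, by omega⟩) ∨
    ((μ (edge ⟨i, Nat.lt_of_succ_lt h1⟩)).1 = vert ⟨i + 1, by omega⟩ ∧
     (μ (edge ⟨i + 1, h1⟩)).1 = vert ⟨i + 1, by omega⟩)

namespace ADPath

variable {V : Type*} {G : SimpleGraph V} {μ : Sym2 V → V × V}

/-- The first edge `e_1` of an AD path. -/
def firstEdge (P : ADPath G μ) : Sym2 V := P.edge ⟨0, P.len_pos⟩

/-- The last edge `e_k` of an AD path. -/
def lastEdge (P : ADPath G μ) : Sym2 V := P.edge ⟨P.len - 1, Nat.sub_lt P.len_pos one_pos⟩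

/-- `v` is an outgoing endpoint of `P`: it is `v_0` and `e_1` is oriented from `v_0`,
or it is `v_k` and `e_k` is oriented from `v_k`. -/
def IsOutgoingEndpoint (P : ADPath G μ) (v : V) : Prop :=
  (v = P.vert 0 ∧ (μ P.firstEdge).1 = v) ∨
  (v = P.vert (Fin.last P.len) ∧ (μ P.lastEdge).1 = v)

/-- `v` is an incoming endpoint of `P`: it is `v_0` and `e_1` is oriented toward `v_0`,
or it is `v_k` and `e_k` is oriented toward `v_k`. -/
def IsIncomingEndpoint (P : ADPath G μ) (v : V) : Prop :=
  (v = P.vert 0 ∧ (μ P.firstEdge).2 = v) ∨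
  (v = P.vert (Fin.last P.len) ∧ (μ P.lastEdge).2 = v)

/-- The set of edges of an AD path. -/
def edges (P : ADPath G μ) : Set (Sym2 V) := Set.range P.edge

end ADPath

/-!
Induction on the edges. Suppose the edges other than `e`, oriented from `a` to `b`, are
already decomposed. The new edge points away from `a` and into `b`, so it can be glued to a
path having `a` as an outgoing endpoint and to a path having `b` as an incoming endpoint: at
the junctions both edges point away from `a`, resp. into `b`. Gluing replaces these (at most
two) paths by one whose incoming endpoints lie among theirs and `b`, and whose outgoing
endpoints lie among theirs and `a`; since no other path has `a` outgoing or `b` incoming,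
uniqueness of endpoints survives.
-/

namespace ADPath

variable {V : Type*} {G : SimpleGraph V} {μ : Sym2 V → V × V}

section Single

variable {e : Sym2 V} {he : e ∈ G.edgeSet} {hμe : s((μ e).1, (μ e).2) = e} {v : V}

variable (e he hμe) in
def single : ADPath G μ where
  len := 1
  len_pos := one_pos
  vert := ![(μ e).1, (μ e).2]
  edge := fun _ => e
  edge_eq := fun i => by fin_cases i; exact hμe.symm
  edge_mem := fun _ => he
  edge_inj := fun i j _ => Subsingleton.elim i j
  alternating := fun i h => absurd h (by omega)

@[simp] lemma single_vert_zero : (single e he hμe).vert 0 = (μ e).1 := rfl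
@[simp] lemma single_vert_last : (single e he hμe).vert (Fin.last _) = (μ e).2 := rfl
@[simp] lemma single_firstEdge : (single e he hμe).firstEdge = e := rfl
@[simp] lemma single_lastEdge : (single e he hμe).lastEdge = e := rfl
@[simp] lemma edges_single : (single e he hμe).edges = {e} :=
  show Set.range (fun _ : Fin 1 => e) = {e} from Set.range_const

lemma IsOutgoingEndpoint.of_single (h : (single e he hμe).IsOutgoingEndpoint v) :
    v = (μ e).1 := by
  rcases h with ⟨rfl, -⟩ | ⟨-, h⟩
  exacts [rfl, h.symm]

lemma IsIncomingEndpoint.of_single (h : (single e he hμe).IsIncomingEndpoint v) :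
    v = (μ e).2 := by
  rcases h with ⟨-, h⟩ | ⟨rfl, -⟩
  exacts [h.symm, rfl]

end Single

section Reverse

def reverse (P : ADPath G μ) : ADPath G μ where
  len := P.len
  len_pos := P.len_pos
  vert := fun i => P.vert i.rev
  edge := fun i => P.edge i.rev
  edge_eq := fun i => by
    rw [P.edge_eq i.rev, Sym2.eq_swap, Fin.rev_castSucc, Fin.rev_succ]
  edge_mem := fun i => P.edge_mem i.rev
  edge_inj := P.edge_inj.comp Fin.rev_injective
  alternating := fun i h => by
    have h' : P.len - i - 2 + 1 < P.len := by omega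
    convert (P.alternating _ h').imp And.symm And.symm using 6 <;>
      simp only [Fin.ext_iff, Fin.val_rev] <;> omega

variable (P : ADPath G μ)

@[simp] lemma reverse_len : P.reverse.len = P.len := rfl
@[simp] lemma reverse_vert_zero : P.reverse.vert 0 = P.vert (Fin.last P.len) :=
  congrArg P.vert (Fin.rev_zero _)
@[simp] lemma reverse_vert_last : P.reverse.vert (Fin.last P.len) = P.vert 0 :=
  congrArg P.vert (Fin.rev_last _)
@[simp] lemma reverse_firstEdge : P.reverse.firstEdge = P.lastEdge :=
  congrArg P.edge (Fin.ext (by simp [Fin.val_rev]))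
@[simp] lemma reverse_lastEdge : P.reverse.lastEdge = P.firstEdge :=
  congrArg P.edge (Fin.ext (by simp [Fin.val_rev]; have := P.len_pos; omega))
@[simp] lemma edges_reverse : P.reverse.edges = P.edges :=
  Fin.rev_surjective.range_comp P.edge

@[simp] lemma isOutgoingEndpoint_reverse :
    P.reverse.IsOutgoingEndpoint = P.IsOutgoingEndpoint := by
  ext v; simp [IsOutgoingEndpoint, or_comm]

@[simp] lemma isIncomingEndpoint_reverse :
    P.reverse.IsIncomingEndpoint = P.IsIncomingEndpoint := by
  ext v; simp [IsIncomingEndpoint, or_comm]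

variable {P} {v : V}

lemma IsIncomingEndpoint.exists_start_eq (h : P.IsIncomingEndpoint v) :
    ∃ P' : ADPath G μ, P'.edges = P.edges ∧ P'.IsOutgoingEndpoint = P.IsOutgoingEndpoint ∧
      P'.IsIncomingEndpoint = P.IsIncomingEndpoint ∧ P'.vert 0 = v ∧ (μ P'.firstEdge).2 = v := by
  rcases h with ⟨rfl, h⟩ | ⟨rfl, h⟩
  · exact ⟨P, rfl, rfl, rfl, rfl, h⟩
  · exact ⟨P.reverse, by simpa⟩

lemma IsOutgoingEndpoint.exists_end_eq (h : P.IsOutgoingEndpoint v) :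
    ∃ P' : ADPath G μ, P'.edges = P.edges ∧ P'.IsOutgoingEndpoint = P.IsOutgoingEndpoint ∧
      P'.IsIncomingEndpoint = P.IsIncomingEndpoint ∧
      P'.vert (Fin.last P'.len) = v ∧ (μ P'.lastEdge).1 = v := by
  rcases h with ⟨rfl, h⟩ | ⟨rfl, h⟩
  · exact ⟨P.reverse, by simpa⟩
  · exact ⟨P, rfl, rfl, rfl, rfl, h⟩

end Reverse

section Append

variable (P Q : ADPath G μ)

def appendVert (i : Fin (P.len + Q.len + 1)) : V :=
  if h : (i : ℕ) < P.len then P.vert ⟨i, by omega⟩ else Q.vert ⟨i - P.len, by omega⟩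

def appendEdge (i : Fin (P.len + Q.len)) : Sym2 V :=
  if h : (i : ℕ) < P.len then P.edge ⟨i, h⟩ else Q.edge ⟨i - P.len, by omega⟩

variable {P Q}

lemma appendVert_of_le {i : ℕ} (hv : P.vert (Fin.last P.len) = Q.vert 0) (hi : i ≤ P.len)
    (h : i < P.len + Q.len + 1) : appendVert P Q ⟨i, h⟩ = P.vert ⟨i, by omega⟩ := by
  unfold appendVert
  rcases hi.lt_or_eq with hlt | rfl
  · exact dif_pos hlt
  · rw [dif_neg (lt_irrefl _)]
    convert hv.symm using 2 <;> ext <;> simp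

lemma appendVert_of_ge {i : ℕ} (hi : P.len ≤ i) (h : i < P.len + Q.len + 1) :
    appendVert P Q ⟨i, h⟩ = Q.vert ⟨i - P.len, by omega⟩ :=
  dif_neg (by simpa using hi)

lemma appendEdge_of_lt {i : ℕ} (hi : i < P.len) (h : i < P.len + Q.len) :
    appendEdge P Q ⟨i, h⟩ = P.edge ⟨i, hi⟩ :=
  dif_pos hi

lemma appendEdge_of_ge {i : ℕ} (hi : P.len ≤ i) (h : i < P.len + Q.len) :
    appendEdge P Q ⟨i, h⟩ = Q.edge ⟨i - P.len, by omega⟩ :=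
  dif_neg (by simpa using hi)

variable (P Q) in
def append (hv : P.vert (Fin.last P.len) = Q.vert 0) (hd : Disjoint P.edges Q.edges)
    (hs : ((μ P.lastEdge).2 = Q.vert 0 ∧ (μ Q.firstEdge).2 = Q.vert 0) ∨
      ((μ P.lastEdge).1 = Q.vert 0 ∧ (μ Q.firstEdge).1 = Q.vert 0)) : ADPath G μ where
  len := P.len + Q.len
  len_pos := Nat.add_pos_left P.len_pos _
  vert := appendVert P Q
  edge := appendEdge P Q
  edge_eq := by
    rintro ⟨i, hi⟩
    rw [Fin.castSucc_mk, Fin.succ_mk]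
    by_cases h : i < P.len
    · rw [appendEdge_of_lt h, appendVert_of_le hv h.le, appendVert_of_le hv h, P.edge_eq]
      rfl
    · rw [appendEdge_of_ge (not_lt.1 h), appendVert_of_ge (not_lt.1 h),
        appendVert_of_ge (by omega), Q.edge_eq]
      simp only [Fin.castSucc_mk, Fin.succ_mk]
      congr 3
      omega
  edge_mem := by
    rintro ⟨i, hi⟩
    by_cases h : i < P.len
    · rw [appendEdge_of_lt h]; exact P.edge_mem _
    · rw [appendEdge_of_ge (not_lt.1 h)]; exact Q.edge_mem _
  edge_inj := by
    have hPQ : ∀ j k, P.edge j ≠ Q.edge k := fun j k hjk =>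
      Set.disjoint_left.1 hd ⟨j, rfl⟩ ⟨k, hjk.symm⟩
    rintro ⟨i, hi⟩ ⟨j, hj⟩ hij
    by_cases h1 : i < P.len <;> by_cases h2 : j < P.len
    · rw [appendEdge_of_lt h1, appendEdge_of_lt h2] at hij
      simpa using P.edge_inj hij
    · rw [appendEdge_of_lt h1, appendEdge_of_ge (not_lt.1 h2)] at hij
      exact absurd hij (hPQ _ _)
    · rw [appendEdge_of_ge (not_lt.1 h1), appendEdge_of_lt h2] at hij
      exact absurd hij.symm (hPQ _ _)
    · rw [appendEdge_of_ge (not_lt.1 h1), appendEdge_of_ge (not_lt.1 h2)] at hij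
      have := Fin.mk.inj_iff.1 (Q.edge_inj hij)
      exact Fin.mk.inj_iff.2 (by omega)
  alternating := by
    intro i h
    rcases lt_trichotomy (i + 1) P.len with hlt | heq | hgt
    · rw [appendEdge_of_lt (by omega), appendEdge_of_lt hlt, appendVert_of_le hv hlt.le]
      exact P.alternating i hlt
    · rw [appendEdge_of_lt (by omega), appendEdge_of_ge heq.ge, appendVert_of_ge heq.ge]
      simp only [lastEdge, firstEdge] at hs
      convert hs using 6 <;> simp [Fin.ext_iff] <;> omega
    · have h' : i - P.len + 1 < Q.len := by omega
      have e : i + 1 - P.len = i - P.len + 1 := by omega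
      rw [appendEdge_of_ge (by omega), appendEdge_of_ge (by omega), appendVert_of_ge (by omega)]
      simp only [e]
      exact Q.alternating _ h'

variable {hv : P.vert (Fin.last P.len) = Q.vert 0} {hd : Disjoint P.edges Q.edges}
  {hs : ((μ P.lastEdge).2 = Q.vert 0 ∧ (μ Q.firstEdge).2 = Q.vert 0) ∨
    ((μ P.lastEdge).1 = Q.vert 0 ∧ (μ Q.firstEdge).1 = Q.vert 0)} {v : V}

@[simp] lemma append_vert_zero : (P.append Q hv hd hs).vert 0 = P.vert 0 :=
  appendVert_of_le hv (Nat.zero_le _) _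

@[simp] lemma append_len : (P.append Q hv hd hs).len = P.len + Q.len := rfl

@[simp] lemma append_vert_last :
    (P.append Q hv hd hs).vert (Fin.last _) = Q.vert (Fin.last Q.len) := by
  refine (appendVert_of_ge (Nat.le_add_right _ _) (by simp)).trans ?_
  congr 1; ext; simp

@[simp] lemma append_firstEdge : (P.append Q hv hd hs).firstEdge = P.firstEdge :=
  appendEdge_of_lt P.len_pos _

@[simp] lemma append_lastEdge : (P.append Q hv hd hs).lastEdge = Q.lastEdge := by
  have := P.len_pos
  have := Q.len_pos
  refine (appendEdge_of_ge (i := P.len + Q.len - 1) (by omega) (by omega)).trans ?_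
  congr 1
  ext; simp; omega

@[simp] lemma edges_append : (P.append Q hv hd hs).edges = P.edges ∪ Q.edges := by
  ext x
  constructor
  · rintro ⟨⟨i, hi : i < P.len + Q.len⟩, rfl⟩
    by_cases h : i < P.len
    · exact Or.inl ⟨_, (appendEdge_of_lt h hi).symm⟩
    · exact Or.inr ⟨_, (appendEdge_of_ge (not_lt.1 h) hi).symm⟩
  · rintro (⟨⟨i, hi⟩, rfl⟩ | ⟨⟨i, hi⟩, rfl⟩)
    · exact ⟨⟨i, by simp; omega⟩, appendEdge_of_lt hi _⟩
    · refine ⟨⟨P.len + i, by simp [hi]⟩, ?_⟩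
      show appendEdge P Q ⟨P.len + i, by omega⟩ = _
      rw [appendEdge_of_ge (Nat.le_add_right _ _)]
      simp

lemma IsOutgoingEndpoint.of_append (h : (P.append Q hv hd hs).IsOutgoingEndpoint v) :
    P.IsOutgoingEndpoint v ∨ Q.IsOutgoingEndpoint v := by
  unfold IsOutgoingEndpoint at h ⊢
  rw [append_vert_zero, append_vert_last, append_firstEdge, append_lastEdge] at h
  tauto

lemma IsIncomingEndpoint.of_append (h : (P.append Q hv hd hs).IsIncomingEndpoint v) :
    P.IsIncomingEndpoint v ∨ Q.IsIncomingEndpoint v := by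
  unfold IsIncomingEndpoint at h ⊢
  rw [append_vert_zero, append_vert_last, append_firstEdge, append_lastEdge] at h
  tauto

end Append

section Extend

variable {e : Sym2 V} {P Q : ADPath G μ}

lemma exists_extend_outgoing (he : e ∈ G.edgeSet) (hμe : s((μ e).1, (μ e).2) = e)
    (hP : P.IsOutgoingEndpoint (μ e).1) (heP : e ∉ P.edges) :
    ∃ N : ADPath G μ, N.edges = insert e P.edges ∧
      N.vert (Fin.last N.len) = (μ e).2 ∧ N.lastEdge = e ∧
      (∀ v, N.IsIncomingEndpoint v → v = (μ e).2 ∨ P.IsIncomingEndpoint v) ∧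
      (∀ v, N.IsOutgoingEndpoint v → v = (μ e).1 ∨ P.IsOutgoingEndpoint v) := by
  obtain ⟨P', hE, hO, hI, hlast, hl⟩ := hP.exists_end_eq
  refine ⟨P'.append (single e he hμe) (by simpa using hlast) (by simpa [hE])
      (Or.inr ⟨by simpa using hl, by simp⟩),
    by simp [hE, Set.union_singleton], append_vert_last.trans single_vert_last, by simp,
    fun v hv => ?_, fun v hv => ?_⟩
  · rcases hv.of_append with h | h
    exacts [Or.inr (hI ▸ h), Or.inl h.of_single]
  · rcases hv.of_append with h | h
    exacts [Or.inr (hO ▸ h), Or.inl h.of_single]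

lemma exists_extend_incoming (he : e ∈ G.edgeSet) (hμe : s((μ e).1, (μ e).2) = e)
    (hQ : Q.IsIncomingEndpoint (μ e).2) (heQ : e ∉ Q.edges) :
    ∃ N : ADPath G μ, N.edges = insert e Q.edges ∧
      (∀ v, N.IsIncomingEndpoint v → v = (μ e).2 ∨ Q.IsIncomingEndpoint v) ∧
      (∀ v, N.IsOutgoingEndpoint v → v = (μ e).1 ∨ Q.IsOutgoingEndpoint v) := by
  obtain ⟨Q', hE, hO, hI, h0, hf⟩ := hQ.exists_start_eq
  refine ⟨(single e he hμe).append Q' (by simpa using h0.symm) (by simpa [hE])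
      (Or.inl ⟨by simpa using h0.symm, hf.trans h0.symm⟩), by simp [hE],
    fun v hv => ?_, fun v hv => ?_⟩
  · rcases hv.of_append with h | h
    exacts [Or.inl h.of_single, Or.inr (hI ▸ h)]
  · rcases hv.of_append with h | h
    exacts [Or.inl h.of_single, Or.inr (hO ▸ h)]

lemma exists_join (he : e ∈ G.edgeSet) (hμe : s((μ e).1, (μ e).2) = e)
    (hP : P.IsOutgoingEndpoint (μ e).1) (hQ : Q.IsIncomingEndpoint (μ e).2)
    (hPQ : Disjoint P.edges Q.edges) (heP : e ∉ P.edges) (heQ : e ∉ Q.edges) :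
    ∃ N : ADPath G μ, N.edges = insert e (P.edges ∪ Q.edges) ∧
      (∀ v, N.IsIncomingEndpoint v →
        v = (μ e).2 ∨ P.IsIncomingEndpoint v ∨ Q.IsIncomingEndpoint v) ∧
      (∀ v, N.IsOutgoingEndpoint v →
        v = (μ e).1 ∨ P.IsOutgoingEndpoint v ∨ Q.IsOutgoingEndpoint v) := by
  obtain ⟨N, hNE, hNv, hNl, hNI, hNO⟩ := exists_extend_outgoing he hμe hP heP
  obtain ⟨Q', hE, hO, hI, h0, hf⟩ := hQ.exists_start_eq
  have hd : Disjoint N.edges Q'.edges := by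
    rw [hNE, hE]
    exact Set.disjoint_insert_left.2 ⟨heQ, hPQ⟩
  refine ⟨N.append Q' (hNv.trans h0.symm) hd (Or.inl ⟨by rw [hNl, h0], hf.trans h0.symm⟩),
    by simp [hNE, hE, Set.insert_union], fun v hv => ?_, fun v hv => ?_⟩
  · rcases hv.of_append with h | h
    · rcases hNI v h with h | h
      exacts [Or.inl h, Or.inr (Or.inl h)]
    · exact Or.inr (Or.inr (hI ▸ h))
  · rcases hv.of_append with h | h
    · rcases hNO v h with h | h
      exacts [Or.inl h, Or.inr (Or.inl h)]
    · exact Or.inr (Or.inr (hO ▸ h))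

end Extend

structure IsDecomposition {ι : Type*} (D : ι → ADPath G μ) (E : Set (Sym2 V)) : Prop where
  pairwise_disjoint : Pairwise fun i j => Disjoint (D i).edges (D j).edges
  iUnion_edges : ⋃ i, (D i).edges = E
  incoming_subsingleton (v : V) : {i | (D i).IsIncomingEndpoint v}.Subsingleton
  outgoing_subsingleton (v : V) : {i | (D i).IsOutgoingEndpoint v}.Subsingleton

namespace IsDecomposition

variable {ι κ : Type*} {D : ι → ADPath G μ} {E : Set (Sym2 V)}

lemma of_isEmpty [IsEmpty ι] (D : ι → ADPath G μ) : IsDecomposition D ∅ where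
  pairwise_disjoint i := isEmptyElim i
  iUnion_edges := Set.iUnion_of_empty _
  incoming_subsingleton _ i := isEmptyElim i
  outgoing_subsingleton _ i := isEmptyElim i

lemma comp_equiv (hD : IsDecomposition D E) (f : κ ≃ ι) : IsDecomposition (D ∘ f) E where
  pairwise_disjoint := hD.pairwise_disjoint.comp_of_injective f.injective
  iUnion_edges := (f.surjective.iUnion_comp fun i => (D i).edges).trans hD.iUnion_edges
  incoming_subsingleton v := (hD.incoming_subsingleton v).preimage f.injective
  outgoing_subsingleton v := (hD.outgoing_subsingleton v).preimage f.injective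

lemma edges_subset (hD : IsDecomposition D E) (i : ι) : (D i).edges ⊆ E :=
  hD.iUnion_edges ▸ Set.subset_iUnion (fun i => (D i).edges) i

lemma replace (hD : IsDecomposition D E) {e : Sym2 V} (heE : e ∉ E) {J : Set ι}
    {N : ADPath G μ} (hN : N.edges = insert e (⋃ j ∈ J, (D j).edges))
    (hJ : ∀ i, (D i).IsOutgoingEndpoint (μ e).1 ∨ (D i).IsIncomingEndpoint (μ e).2 → i ∈ J)
    (hin : ∀ v, N.IsIncomingEndpoint v → v = (μ e).2 ∨ ∃ j ∈ J, (D j).IsIncomingEndpoint v)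
    (hout : ∀ v, N.IsOutgoingEndpoint v → v = (μ e).1 ∨ ∃ j ∈ J, (D j).IsOutgoingEndpoint v) :
    IsDecomposition (fun o : Option ↥Jᶜ => o.elim N fun i => D i) (insert e E) := by
  have hNdisj : ∀ i ∉ J, Disjoint N.edges (D i).edges := fun i hi => by
    rw [hN, Set.disjoint_insert_left, Set.disjoint_iUnion₂_left]
    exact ⟨fun h => heE (hD.edges_subset i h),
      fun j hj => hD.pairwise_disjoint (ne_of_mem_of_not_mem hj hi)⟩
  have hsubsingleton (p : ADPath G μ → Prop) (hp : {i | p (D i)}.Subsingleton)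
      (hpN : p N → ∀ i ∉ J, ¬p (D i)) :
      {o : Option ↥Jᶜ | p (o.elim N fun i => D i)}.Subsingleton := by
    rintro (_ | ⟨i, hi⟩) ho (_ | ⟨j, hj⟩) ho'
    · rfl
    · exact absurd ho' (hpN ho j hj)
    · exact absurd ho (hpN ho' i hi)
    · exact congrArg some (Subtype.ext (hp ho ho'))
  refine ⟨?_, ?_,
    fun v => hsubsingleton (·.IsIncomingEndpoint v) (hD.incoming_subsingleton v)
      fun hv i hi hiv => ?_,
    fun v => hsubsingleton (·.IsOutgoingEndpoint v) (hD.outgoing_subsingleton v)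
      fun hv i hi hiv => ?_⟩
  · rintro (_ | ⟨i, hi⟩) (_ | ⟨j, hj⟩) hij
    · exact absurd rfl hij
    · exact hNdisj j hj
    · exact (hNdisj i hi).symm
    · exact hD.pairwise_disjoint fun h => hij (congrArg some (Subtype.ext h))
  · rw [Set.iUnion_option, ← hD.iUnion_edges]
    ext x
    simp only [Option.elim, hN, Set.mem_union, Set.mem_insert_iff, Set.mem_iUnion, exists_prop,
      Subtype.exists, Set.mem_compl_iff, or_assoc]
    refine or_congr_right ⟨?_, fun ⟨i, hx⟩ => (em (i ∈ J)).imp (⟨i, ·, hx⟩) (⟨i, ·, hx⟩)⟩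
    rintro (⟨i, -, hx⟩ | ⟨i, -, hx⟩) <;> exact ⟨i, hx⟩
  · rcases hin v hv with rfl | ⟨j, hj, hjv⟩
    exacts [hi (hJ i (Or.inr hiv)), hi (hD.incoming_subsingleton v hjv hiv ▸ hj)]
  · rcases hout v hv with rfl | ⟨j, hj, hjv⟩
    exacts [hi (hJ i (Or.inl hiv)), hi (hD.outgoing_subsingleton v hjv hiv ▸ hj)]

lemma exists_insert_path (hD : IsDecomposition D E) {e : Sym2 V} (he : e ∈ G.edgeSet)
    (hμe : s((μ e).1, (μ e).2) = e) (heE : e ∉ E) :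
    ∃ (J : Set ι) (N : ADPath G μ), N.edges = insert e (⋃ j ∈ J, (D j).edges) ∧
      (∀ i, (D i).IsOutgoingEndpoint (μ e).1 ∨ (D i).IsIncomingEndpoint (μ e).2 → i ∈ J) ∧
      (∀ v, N.IsIncomingEndpoint v → v = (μ e).2 ∨ ∃ j ∈ J, (D j).IsIncomingEndpoint v) ∧
      (∀ v, N.IsOutgoingEndpoint v → v = (μ e).1 ∨ ∃ j ∈ J, (D j).IsOutgoingEndpoint v) := by
  have heD (i : ι) : e ∉ (D i).edges := fun h => heE (hD.edges_subset i h)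
  by_cases hp : ∃ p, (D p).IsOutgoingEndpoint (μ e).1
  · obtain ⟨p, hp⟩ := hp
    by_cases hq : ∃ q, q ≠ p ∧ (D q).IsIncomingEndpoint (μ e).2
    · obtain ⟨q, hqp, hq⟩ := hq
      obtain ⟨N, hN, hin, hout⟩ :=
        exists_join he hμe hp hq (hD.pairwise_disjoint hqp.symm) (heD p) (heD q)
      refine ⟨{p, q}, N, by rw [hN, Set.biUnion_pair], ?_, by simpa using hin,
        by simpa using hout⟩
      rintro i (hi | hi)
      exacts [Or.inl (hD.outgoing_subsingleton _ hi hp),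
        Or.inr (hD.incoming_subsingleton _ hi hq)]
    · push Not at hq
      obtain ⟨N, hN, -, -, hin, hout⟩ := exists_extend_outgoing he hμe hp (heD p)
      refine ⟨{p}, N, by rw [hN, Set.biUnion_singleton], ?_, by simpa using hin,
        by simpa using hout⟩
      rintro i (hi | hi)
      · exact hD.outgoing_subsingleton _ hi hp
      · by_contra hip
        exact hq i hip hi
  · push Not at hp
    by_cases hq : ∃ q, (D q).IsIncomingEndpoint (μ e).2
    · obtain ⟨q, hq⟩ := hq
      obtain ⟨N, hN, hin, hout⟩ := exists_extend_incoming he hμe hq (heD q)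
      refine ⟨{q}, N, by rw [hN, Set.biUnion_singleton], ?_, by simpa using hin,
        by simpa using hout⟩
      rintro i (hi | hi)
      exacts [absurd hi (hp i), hD.incoming_subsingleton _ hi hq]
    · push Not at hq
      refine ⟨∅, single e he hμe, by simp, ?_, fun v hv => Or.inl hv.of_single,
        fun v hv => Or.inl hv.of_single⟩
      rintro i (hi | hi)
      exacts [absurd hi (hp i), absurd hi (hq i)]

end IsDecomposition

theorem exists_isDecomposition (hμ : ∀ e ∈ G.edgeSet, s((μ e).1, (μ e).2) = e)
    {E : Set (Sym2 V)} (hE : E.Finite) (hEG : E ⊆ G.edgeSet) :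
    ∃ (ι : Type) (_ : Finite ι) (D : ι → ADPath G μ), IsDecomposition D E := by
  induction E, hE using Set.Finite.induction_on with
  | empty => exact ⟨Empty, inferInstance, Empty.elim, .of_isEmpty _⟩
  | @insert e E heE _ ih =>
    obtain ⟨ι, _, D, hD⟩ := ih ((Set.subset_insert e E).trans hEG)
    have he := hEG (Set.mem_insert e E)
    obtain ⟨J, N, hN, hJ, hin, hout⟩ := hD.exists_insert_path he (hμ e he) heE
    exact ⟨_, inferInstance, _, hD.replace heE hN hJ hin hout⟩

end ADPath

theorem ad_paths_decomposition_general {V : Type*} [Fintype V]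
    (G : SimpleGraph V) (μ : Sym2 V → V × V)
    (hμ : ∀ e ∈ G.edgeSet, s((μ e).1, (μ e).2) = e) :
    ∃ (n : ℕ) (D : Fin n → ADPath G μ),
      (∀ j k, j ≠ k → Disjoint (D j).edges (D k).edges) ∧
      (⋃ j, (D j).edges) = G.edgeSet ∧
      (∀ v : V, ∀ j k, (D j).IsIncomingEndpoint v → (D k).IsIncomingEndpoint v → j = k) ∧
      (∀ v : V, ∀ j k, (D j).IsOutgoingEndpoint v → (D k).IsOutgoingEndpoint v → j = k) := by
  obtain ⟨ι, _, D, hD⟩ := ADPath.exists_isDecomposition hμ (Set.toFinite G.edgeSet) subset_rfl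
  have hD' := hD.comp_equiv (Finite.equivFin ι).symm
  exact ⟨_, _, fun j k hjk => hD'.pairwise_disjoint hjk, hD'.iUnion_edges,
    fun v _ _ hj hk => hD'.incoming_subsingleton v hj hk,
    fun v _ _ hj hk => hD'.outgoing_subsingleton v hj hk⟩

/-- the edge set of `G` can be partitioned into edge-disjoint
alternating-directions paths so that every vertex is an incoming endpoint of at most one
path and an outgoing endpoint of at most one path. -/
theorem ad_paths_decomposition {V : Type*} [Fintype V] [DecidableEq V]
    (G : SimpleGraph V) (μ : Sym2 V → V × V)
    (hμ : ∀ e ∈ G.edgeSet, s((μ e).1, (μ e).2) = e) :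
    ∃ (n : ℕ) (D : Fin n → ADPath G μ),
      (∀ j k, j ≠ k → Disjoint (D j).edges (D k).edges) ∧
      (⋃ j, (D j).edges) = G.edgeSet ∧
      (∀ v : V, ∀ j k, (D j).IsIncomingEndpoint v → (D k).IsIncomingEndpoint v → j = k) ∧
      (∀ v : V, ∀ j k, (D j).IsOutgoingEndpoint v → (D k).IsOutgoingEndpoint v → j = k) :=
  ad_paths_decomposition_general G μ hμ
end

section
/- Let G = (V, E) be a finite simple graph with an orientation μ, and let D be a partition of E into edge-disjoint alternating-directions paths such that every vertex is an incoming endpoint of at most one path of D and an outgoing endpoint of at most one path of D. Let q : E → {−1, 1} be any assignment that colors each path of D alternately, i.e., for every path (v_0, e_1, v_1, …, e_k, v_k) in D and every 1 ≤ t ≤ k−1, q(e_{t+1}) = −q(e_t). Then for every vertex v ∈ V, both the incoming discrepancy |Σ_{e incoming to v} q(e)| and the outgoing discrepancy |Σ_{e outgoing from v} q(e)| are at most 1. -/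
theorem Finset.sum_range_succ_sub_of_eq_succ {M : Type*} [AddCommGroup M] {a b : ℕ → M} {m : ℕ}
    (h : ∀ i < m, a i = b (i + 1)) :
    ∑ i ∈ Finset.range (m + 1), (a i - b i) = a m - b 0 := by
  rw [Finset.sum_sub_distrib, Finset.sum_range_succ a, Finset.sum_range_succ' b,
    Finset.sum_congr rfl fun i hi => h i (Finset.mem_range.1 hi)]
  abel

theorem abs_sum_le_of_subsingleton_support {ι M : Type*} [Fintype ι] [AddCommGroup M]
    [LinearOrder M] [IsOrderedAddMonoid M] {f : ι → M} {b : M} (hb : 0 ≤ b) (hf : ∀ j, |f j| ≤ b)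
    (hsupp : (Function.support f).Subsingleton) :
    |∑ j, f j| ≤ b := by
  by_cases h : ∃ j, f j ≠ 0
  · obtain ⟨j, hj⟩ := h
    rw [Fintype.sum_eq_single j fun k hk => by_contra fun hk' => hk (hsupp hk' hj)]
    exact hf j
  · push Not at h
    simpa [h] using hb

section Telescoping

variable {V : Type*} [DecidableEq V] {W head : ℕ → V} {c : ℕ → ℤ} {m : ℕ}

theorem ite_head_eq_succ_eq_of_alternating (hne : ∀ i ≤ m, W i ≠ W (i + 1))
    (hhead : ∀ i ≤ m, head i = W i ∨ head i = W (i + 1))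
    (hturn : ∀ i < m, (head i = W (i + 1) ↔ head (i + 1) = W (i + 1)))
    (hc : ∀ i < m, c (i + 1) = -c i) :
    ∀ i ≤ m, (if head i = W (i + 1) then c i else -c i) = if head 0 = W 1 then c 0 else -c 0 := by
  intro i
  induction i with
  | zero => simp
  | succ i ih =>
    intro hi
    have hflip : head (i + 1) = W (i + 1 + 1) ↔ ¬head i = W (i + 1) := by
      rw [hturn i hi]
      rcases hhead (i + 1) hi with h | h <;> simp [h, hne (i + 1) hi, (hne (i + 1) hi).symm]
    rw [← ih (by omega), hc i hi]
    by_cases h : head i = W (i + 1) <;> simp [h, hflip]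

theorem sum_range_ite_head_eq_of_alternating (v : V) (hne : ∀ i ≤ m, W i ≠ W (i + 1))
    (hhead : ∀ i ≤ m, head i = W i ∨ head i = W (i + 1))
    (hturn : ∀ i < m, (head i = W (i + 1) ↔ head (i + 1) = W (i + 1)))
    (hc : ∀ i < m, c (i + 1) = -c i) :
    ∑ i ∈ Finset.range (m + 1), (if head i = v then c i else 0) =
      (if head 0 = W 1 then c 0 else -c 0) *
        ((if v = W (m + 1) ∧ head m = v then 1 else 0) -
          (if v = W 0 ∧ head 0 = v then 1 else 0)) := by
  set A : ℕ → ℤ := fun i => if v = W (i + 1) ∧ head i = v then 1 else 0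
  set B : ℕ → ℤ := fun i => if v = W i ∧ head i = v then 1 else 0
  have hterm : ∀ i ∈ Finset.range (m + 1), (if head i = v then c i else 0) =
      (if head 0 = W 1 then c 0 else -c 0) * (A i - B i) := by
    intro i hi
    have hi : i ≤ m := Nat.lt_succ_iff.1 (Finset.mem_range.1 hi)
    rw [← ite_head_eq_succ_eq_of_alternating hne hhead hturn hc i hi]
    have hW := hne i hi
    rcases hhead i hi with h | h
    · by_cases hv : W i = v
      · subst hv
        simp [A, B, h, hW]
      · simp [A, B, h, hv, Ne.symm hv]
    · by_cases hv : W (i + 1) = v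
      · subst hv
        simp [A, B, h, hW.symm]
      · simp [A, B, h, hv, Ne.symm hv]
  have hAB : ∀ i < m, A i = B (i + 1) := by
    intro i hi
    by_cases hv : v = W (i + 1)
    · simp only [A, B, hv, hturn i hi]
    · simp [A, B, hv]
  rw [Finset.sum_congr rfl hterm, ← Finset.mul_sum, Finset.sum_range_succ_sub_of_eq_succ hAB]

end Telescoping

theorem snd_mem_of_mk_uncurry_eq {V : Type*} {p : V × V} {e : Sym2 V}
    (hp : Sym2.mk.uncurry p = e) : p.2 ∈ e :=
  hp ▸ Sym2.mem_mk_right p.1 p.2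

theorem SimpleGraph.fst_ne_snd_of_mk_uncurry_eq {V : Type*} {G : SimpleGraph V} {p : V × V}
    {e : Sym2 V} (he : e ∈ G.edgeSet) (hp : Sym2.mk.uncurry p = e) : p.1 ≠ p.2 :=
  G.ne_of_adj (by subst hp; exact he)

namespace ADPath

variable {V : Type*} {G : SimpleGraph V} {μ : Sym2 V → V × V} (P : ADPath G μ)

def vertAt (i : ℕ) : V := P.vert (Fin.clamp i P.len)

def edgeAt (i : ℕ) : Sym2 V := s(P.vertAt i, P.vertAt (i + 1))

theorem vertAt_of_le {i : ℕ} (h : i ≤ P.len) : P.vertAt i = P.vert ⟨i, Nat.lt_succ_of_le h⟩ :=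
  congrArg P.vert (Fin.ext (by simp [Fin.clamp, h]))

theorem edge_eq_edgeAt (i : Fin P.len) : P.edge i = P.edgeAt i := by
  rw [P.edge_eq, edgeAt, P.vertAt_of_le i.2.le, P.vertAt_of_le i.2]
  rfl

theorem edgeAt_mem {i : ℕ} (h : i < P.len) : P.edgeAt i ∈ G.edgeSet :=
  P.edge_eq_edgeAt ⟨i, h⟩ ▸ P.edge_mem ⟨i, h⟩

def incomingSum [DecidableEq V] (q : Sym2 V → ℤ) (v : V) : ℤ :=
  ∑ i, if (μ (P.edge i)).2 = v then q (P.edge i) else 0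

theorem vertAt_zero : P.vertAt 0 = P.vert 0 := P.vertAt_of_le (Nat.zero_le _)

theorem vertAt_len : P.vertAt P.len = P.vert (Fin.last P.len) := P.vertAt_of_le le_rfl

theorem edgeAt_zero : P.edgeAt 0 = P.firstEdge := (P.edge_eq_edgeAt ⟨0, P.len_pos⟩).symm

theorem edgeAt_len_sub_one : P.edgeAt (P.len - 1) = P.lastEdge :=
  (P.edge_eq_edgeAt ⟨P.len - 1, Nat.sub_lt P.len_pos one_pos⟩).symm

theorem firstEdge_mem : P.firstEdge ∈ G.edgeSet := P.edge_mem _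

theorem exists_incomingSum_eq [DecidableEq V] (hμ : ∀ e ∈ G.edgeSet, Sym2.mk.uncurry (μ e) = e)
    {q : Sym2 V → ℤ} (hq : ∀ e ∈ G.edgeSet, q e = 1 ∨ q e = -1)
    (halt : ∀ (i : ℕ) (h1 : i + 1 < P.len),
      q (P.edge ⟨i + 1, h1⟩) = -q (P.edge ⟨i, Nat.lt_of_succ_lt h1⟩)) (v : V) :
    ∃ σ : ℤ, |σ| = 1 ∧ P.incomingSum q v =
      σ * ((if v = P.vert (Fin.last P.len) ∧ (μ P.lastEdge).2 = v then 1 else 0) -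
        (if v = P.vert 0 ∧ (μ P.firstEdge).2 = v then 1 else 0)) := by
  have hlen : P.len - 1 + 1 = P.len := Nat.sub_add_cancel P.len_pos
  have hsum : P.incomingSum q v = ∑ i ∈ Finset.range P.len,
      if (μ (P.edgeAt i)).2 = v then q (P.edgeAt i) else 0 := by
    rw [incomingSum, ← Fin.sum_univ_eq_sum_range]
    simp only [edge_eq_edgeAt]
  have hne : ∀ i ≤ P.len - 1, P.vertAt i ≠ P.vertAt (i + 1) := fun i hi =>
    G.ne_of_adj (P.edgeAt_mem (i := i) (by omega))
  have hhead : ∀ i ≤ P.len - 1,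
      (μ (P.edgeAt i)).2 = P.vertAt i ∨ (μ (P.edgeAt i)).2 = P.vertAt (i + 1) := fun i hi =>
    Sym2.mem_iff.1 (snd_mem_of_mk_uncurry_eq (hμ _ (P.edgeAt_mem (by omega))))
  have hturn : ∀ i < P.len - 1, ((μ (P.edgeAt i)).2 = P.vertAt (i + 1) ↔
      (μ (P.edgeAt (i + 1))).2 = P.vertAt (i + 1)) := by
    intro i hi
    have hdiag : ∀ j < P.len, (μ (P.edgeAt j)).1 ≠ (μ (P.edgeAt j)).2 := fun j hj =>
      G.fst_ne_snd_of_mk_uncurry_eq (P.edgeAt_mem hj) (hμ _ (P.edgeAt_mem hj))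
    have h := P.alternating i (by omega)
    simp only [edge_eq_edgeAt] at h
    rw [← P.vertAt_of_le (i := i + 1) (by omega)] at h
    rcases h with ⟨h1, h2⟩ | ⟨h1, h2⟩
    · simp [h1, h2]
    · exact iff_of_false (fun h => hdiag i (by omega) (h1.trans h.symm))
        (fun h => hdiag (i + 1) (by omega) (h2.trans h.symm))
  have hc : ∀ i < P.len - 1, q (P.edgeAt (i + 1)) = -q (P.edgeAt i) := fun i hi => by
    simpa only [edge_eq_edgeAt] using halt i (by omega)
  have key := sum_range_ite_head_eq_of_alternating (c := fun i => q (P.edgeAt i)) v hne hhead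
    hturn hc
  rw [hlen, vertAt_len, vertAt_zero, edgeAt_zero, edgeAt_len_sub_one] at key
  refine ⟨_, ?_, hsum.trans key⟩
  rcases hq _ P.firstEdge_mem with h | h <;> split_ifs <;> simp [h]

theorem abs_incomingSum_le_one [DecidableEq V] (hμ : ∀ e ∈ G.edgeSet, Sym2.mk.uncurry (μ e) = e)
    {q : Sym2 V → ℤ} (hq : ∀ e ∈ G.edgeSet, q e = 1 ∨ q e = -1)
    (halt : ∀ (i : ℕ) (h1 : i + 1 < P.len),
      q (P.edge ⟨i + 1, h1⟩) = -q (P.edge ⟨i, Nat.lt_of_succ_lt h1⟩)) (v : V) :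
    |P.incomingSum q v| ≤ 1 := by
  obtain ⟨σ, hσ, h⟩ := P.exists_incomingSum_eq hμ hq halt v
  rw [h, abs_mul, hσ, one_mul]
  split_ifs <;> norm_num

theorem isIncomingEndpoint_of_incomingSum_ne_zero [DecidableEq V]
    (hμ : ∀ e ∈ G.edgeSet, Sym2.mk.uncurry (μ e) = e)
    {q : Sym2 V → ℤ} (hq : ∀ e ∈ G.edgeSet, q e = 1 ∨ q e = -1)
    (halt : ∀ (i : ℕ) (h1 : i + 1 < P.len),
      q (P.edge ⟨i + 1, h1⟩) = -q (P.edge ⟨i, Nat.lt_of_succ_lt h1⟩)) {v : V}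
    (hv : P.incomingSum q v ≠ 0) : P.IsIncomingEndpoint v := by
  obtain ⟨σ, -, h⟩ := P.exists_incomingSum_eq hμ hq halt v
  by_contra hend
  simp only [IsIncomingEndpoint, not_or] at hend
  simp [h, hend.1, hend.2] at hv

def swapOrientation : ADPath G (Prod.swap ∘ μ) where
  __ := P
  alternating i h1 := (P.alternating i h1).symm

theorem sum_edgeFinset_eq_sum_sum_edge {ι M : Type*} [Fintype ι] [AddCommMonoid M] [Fintype V]
    [DecidableRel G.Adj] (D : ι → ADPath G μ)
    (hdisj : ∀ j k, j ≠ k → Disjoint (D j).edges (D k).edges)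
    (hcover : (⋃ j, (D j).edges) = G.edgeSet) (g : Sym2 V → M) :
    ∑ e ∈ G.edgeFinset, g e = ∑ j, ∑ i, g ((D j).edge i) := by
  rw [← Fintype.sum_sigma fun p : (Σ j, Fin (D j).len) => g ((D p.1).edge p.2)]
  symm
  refine Finset.sum_bij (fun p _ => (D p.1).edge p.2)
    (fun p _ => G.mem_edgeFinset.2 ((D p.1).edge_mem p.2)) ?_ ?_ (fun _ _ => rfl)
  · rintro ⟨j, i⟩ - ⟨k, i'⟩ - h
    obtain rfl : j = k := by
      by_contra hjk
      exact Set.disjoint_left.1 (hdisj j k hjk) ⟨i, rfl⟩ ⟨i', h.symm⟩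
    obtain rfl : i = i' := (D j).edge_inj h
    rfl
  · intro e he
    rw [SimpleGraph.mem_edgeFinset, ← hcover, Set.mem_iUnion] at he
    obtain ⟨j, i, rfl⟩ := he
    exact ⟨⟨j, i⟩, Finset.mem_univ _, rfl⟩

end ADPath

theorem abs_sum_incoming_le_one {V : Type*} [Fintype V] [DecidableEq V] {G : SimpleGraph V}
    [DecidableRel G.Adj] {μ : Sym2 V → V × V} (hμ : ∀ e ∈ G.edgeSet, Sym2.mk.uncurry (μ e) = e)
    {ι : Type*} [Fintype ι] (D : ι → ADPath G μ)
    (hdisj : ∀ j k, j ≠ k → Disjoint (D j).edges (D k).edges)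
    (hcover : (⋃ j, (D j).edges) = G.edgeSet)
    (hin : ∀ v : V, ∀ j k, (D j).IsIncomingEndpoint v → (D k).IsIncomingEndpoint v → j = k)
    {q : Sym2 V → ℤ} (hq : ∀ e ∈ G.edgeSet, q e = 1 ∨ q e = -1)
    (halt : ∀ j, ∀ (i : ℕ) (h1 : i + 1 < (D j).len),
      q ((D j).edge ⟨i + 1, h1⟩) = -q ((D j).edge ⟨i, Nat.lt_of_succ_lt h1⟩)) (v : V) :
    |∑ e ∈ G.edgeFinset.filter (fun e => (μ e).2 = v), q e| ≤ 1 := by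
  rw [Finset.sum_filter, ADPath.sum_edgeFinset_eq_sum_sum_edge D hdisj hcover]
  refine abs_sum_le_of_subsingleton_support zero_le_one
    (fun j => (D j).abs_incomingSum_le_one hμ hq (halt j) v) fun j hj k hk => hin v j k ?_ ?_
  · exact (D j).isIncomingEndpoint_of_incomingSum_ne_zero hμ hq (halt j) hj
  · exact (D k).isIncomingEndpoint_of_incomingSum_ne_zero hμ hq (halt k) hk

/-- alternately coloring the paths of an AD paths decomposition of degree
at most 1 yields an oriented degree-splitting with discrepancy at most 1. -/
theorem ad_paths_alternate_coloring_discrepancy {V : Type*} [Fintype V] [DecidableEq V]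
    (G : SimpleGraph V) [DecidableRel G.Adj] (μ : Sym2 V → V × V)
    (hμ : ∀ e ∈ G.edgeSet, Sym2.mk.uncurry (μ e) = e)
    (n : ℕ) (D : Fin n → ADPath G μ)
    (hdisj : ∀ j k, j ≠ k → Disjoint (D j).edges (D k).edges)
    (hcover : (⋃ j, (D j).edges) = G.edgeSet)
    (hin : ∀ v : V, ∀ j k, (D j).IsIncomingEndpoint v → (D k).IsIncomingEndpoint v → j = k)
    (hout : ∀ v : V, ∀ j k, (D j).IsOutgoingEndpoint v → (D k).IsOutgoingEndpoint v → j = k)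
    (q : Sym2 V → ℤ) (hq : ∀ e ∈ G.edgeSet, q e = 1 ∨ q e = -1)
    (halt : ∀ j, ∀ (i : ℕ) (h1 : i + 1 < (D j).len),
      q ((D j).edge ⟨i + 1, h1⟩) = - q ((D j).edge ⟨i, Nat.lt_of_succ_lt h1⟩)) :
    ∀ v : V,
      |∑ e ∈ G.edgeFinset.filter (fun e => (μ e).2 = v), q e| ≤ 1 ∧
      |∑ e ∈ G.edgeFinset.filter (fun e => (μ e).1 = v), q e| ≤ 1 := by
  intro v
  refine ⟨abs_sum_incoming_le_one hμ D hdisj hcover hin hq halt v, ?_⟩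
  exact abs_sum_incoming_le_one (μ := Prod.swap ∘ μ) (fun e he => Sym2.eq_swap.trans (hμ e he))
    (fun j => (D j).swapOrientation) hdisj hcover hout hq halt v
end

section
/- Let G = (V, E) be a finite simple graph and let μ be an orientation of its edges. Then there exists an assignment q : E → {−1, 1} such that for every vertex v ∈ V, both the incoming discrepancy |Σ_{e incoming to v} q(e)| and the outgoing discrepancy |Σ_{e outgoing from v} q(e)| are at most 1. -/
/-!
Signing an edge by `-1` is the same as reversing it, so it suffices to orient a finite multigraph
so that at every vertex indegree and outdegree differ by at most one. If two edges meet at a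
vertex, splice them into one edge (reversing one of them if needed), orient the smaller graph
recursively and give both original edges the orientation of the spliced one; once no two edges
meet, there is nothing to do. The oriented graph `G` is turned into such a multigraph on
`V × Bool` by letting each edge `u → v` run from the out-copy `(u, false)` of `u` to the in-copy
`(v, true)` of `v`: the signed degree of `(v, false)` is the outgoing discrepancy of `v`, that
of `(v, true)` minus the incoming one.
-/

namespace OrientedSplit

section Incidence

variable {W : Type*} [DecidableEq W]

/-- The signed incidence of the arrow `p` at the node `u`: `1` at its tail, `-1` at its head,
`0` elsewhere (and at a loop). -/
def incidence (u : W) (p : W × W) : ℤ :=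
  (if p.1 = u then 1 else 0) - (if p.2 = u then 1 else 0)

lemma abs_incidence_le_one (u : W) (p : W × W) : |incidence u p| ≤ 1 := by
  unfold incidence; split_ifs <;> norm_num

lemma exists_splice {w : W} {p r : W × W} (hp : incidence w p ≠ 0) (hr : incidence w r ≠ 0) :
    ∃ ε : ℤ, (ε = 1 ∨ ε = -1) ∧
      ∃ m : W × W, ∀ u, incidence u p + ε * incidence u r = incidence u m := by
  obtain ⟨x, y⟩ := p
  obtain ⟨x', y'⟩ := r
  simp only [incidence] at hp hr ⊢
  by_cases hx : x = w <;> by_cases hy : y = w <;> by_cases hx' : x' = w <;>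
    by_cases hy' : y' = w <;> simp [hx, hy, hx', hy'] at hp hr <;> subst_vars
  -- `w` is the tail or the head of each of `p` and `r`; `m` joins their other ends.
  · exact ⟨-1, Or.inr rfl, (y', y), fun u => by split_ifs <;> ring⟩
  · exact ⟨1, Or.inl rfl, (x', y), fun u => by split_ifs <;> ring⟩
  · exact ⟨1, Or.inl rfl, (x, y'), fun u => by split_ifs <;> ring⟩
  · exact ⟨-1, Or.inr rfl, (x, x'), fun u => by split_ifs <;> ring⟩

variable {ι : Type*}

lemma abs_sum_incidence_le_one_of_pairwise_disjoint {s : Finset ι} {f : ι → W × W} (u : W)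
    (hdisj : ∀ i ∈ s, ∀ j ∈ s, incidence u (f i) ≠ 0 → incidence u (f j) ≠ 0 → i = j) :
    |∑ i ∈ s, incidence u (f i)| ≤ 1 := by
  by_cases h : ∃ i ∈ s, incidence u (f i) ≠ 0
  · obtain ⟨i, hi, hui⟩ := h
    rw [Finset.sum_eq_single_of_mem i hi fun j hj hji => by_contra fun huj =>
      hji (hdisj j hj i hi huj hui)]
    exact abs_incidence_le_one u (f i)
  · push Not at h
    rw [Finset.sum_eq_zero h, abs_zero]
    exact zero_le_one

lemma sum_incidence_update_splice [DecidableEq ι] {s : Finset ι} {f : ι → W × W} {i j : ι}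
    (hi : i ∈ s) (hj : j ∈ s) (hij : i ≠ j) {ε : ℤ} {m : W × W}
    (hm : ∀ u, incidence u (f i) + ε * incidence u (f j) = incidence u m) (q : ι → ℤ) (u : W) :
    ∑ k ∈ s, Function.update q j (ε * q i) k * incidence u (f k) =
      ∑ k ∈ s.erase j, q k * incidence u (Function.update f i m k) := by
  have hi' : i ∈ s.erase j := Finset.mem_erase.mpr ⟨hij, hi⟩
  have hrest : ∑ k ∈ (s.erase j).erase i, Function.update q j (ε * q i) k * incidence u (f k) =
      ∑ k ∈ (s.erase j).erase i, q k * incidence u (Function.update f i m k) := by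
    refine Finset.sum_congr rfl fun k hk => ?_
    obtain ⟨hki, hk⟩ := Finset.mem_erase.mp hk
    rw [Function.update_of_ne (Finset.ne_of_mem_erase hk), Function.update_of_ne hki]
  rw [← Finset.sum_erase_add s _ hj, ← Finset.sum_erase_add (s.erase j) _ hi',
    ← Finset.sum_erase_add (s.erase j) _ hi', hrest, Function.update_of_ne hij,
    Function.update_self, Function.update_self, ← hm u]
  ring

theorem exists_signing_abs_sum_incidence_le_one [DecidableEq ι] (s : Finset ι) (f : ι → W × W) :
    ∃ q : ι → ℤ, (∀ i ∈ s, q i = 1 ∨ q i = -1) ∧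
      ∀ u : W, |∑ i ∈ s, q i * incidence u (f i)| ≤ 1 := by
  induction s using Finset.strongInduction generalizing f with
  | H s ih =>
  by_cases h : ∃ u : W, ∃ i ∈ s, ∃ j ∈ s, i ≠ j ∧ incidence u (f i) ≠ 0 ∧ incidence u (f j) ≠ 0
  · obtain ⟨w, i, hi, j, hj, hij, hwi, hwj⟩ := h
    obtain ⟨ε, hε, m, hm⟩ := exists_splice hwi hwj
    obtain ⟨q, hq, hqsum⟩ :=
      ih (s.erase j) (Finset.erase_ssubset hj) (Function.update f i m)
    have hqi := hq i (Finset.mem_erase.mpr ⟨hij, hi⟩)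
    refine ⟨Function.update q j (ε * q i), fun k hk => ?_, fun u => ?_⟩
    · rcases eq_or_ne k j with rfl | hkj
      · rw [Function.update_self]
        rcases hε with rfl | rfl <;> rcases hqi with h | h <;> rw [h] <;> norm_num
      · rw [Function.update_of_ne hkj]
        exact hq k (Finset.mem_erase.mpr ⟨hkj, hk⟩)
    · rw [sum_incidence_update_splice hi hj hij hm]
      exact hqsum u
  · push Not at h
    refine ⟨fun _ => 1, fun _ _ => Or.inl rfl, fun u => ?_⟩
    simp only [one_mul]
    exact abs_sum_incidence_le_one_of_pairwise_disjoint u fun i hi j hj hui huj =>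
      by_contra fun hij => huj (h u i hi j hj hij hui)

end Incidence

section Doubling

variable {V : Type*} [DecidableEq V]

def doubledArrow (p : V × V) : (V × Bool) × (V × Bool) := ((p.1, false), (p.2, true))

lemma incidence_out_doubledArrow (v : V) (p : V × V) :
    incidence (v, false) (doubledArrow p) = if p.1 = v then 1 else 0 := by
  simp [incidence, doubledArrow]

lemma incidence_in_doubledArrow (v : V) (p : V × V) :
    incidence (v, true) (doubledArrow p) = -if p.2 = v then 1 else 0 := by
  simp [incidence, doubledArrow]

end Doubling

end OrientedSplit

theorem oriented_degree_splitting_exists_general {V : Type*} [Fintype V] [DecidableEq V]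
    (G : SimpleGraph V) [DecidableRel G.Adj] (μ : Sym2 V → V × V) :
    ∃ q : Sym2 V → ℤ,
      (∀ e ∈ G.edgeFinset, q e = 1 ∨ q e = -1) ∧
      ∀ v : V,
        |∑ e ∈ G.edgeFinset.filter (fun e => (μ e).2 = v), q e| ≤ 1 ∧
        |∑ e ∈ G.edgeFinset.filter (fun e => (μ e).1 = v), q e| ≤ 1 := by
  obtain ⟨q, hq, hsum⟩ :=
    OrientedSplit.exists_signing_abs_sum_incidence_le_one G.edgeFinset
      (fun e => OrientedSplit.doubledArrow (μ e))
  refine ⟨q, hq, fun v => ⟨?_, ?_⟩⟩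
  · simpa [OrientedSplit.incidence_in_doubledArrow, Finset.sum_filter] using hsum (v, true)
  · simpa [OrientedSplit.incidence_out_doubledArrow, Finset.sum_filter] using hsum (v, false)

/-- every oriented graph admits an oriented degree-splitting with
discrepancy at most 1: each vertex has incoming and outgoing discrepancies at most 1. -/
theorem oriented_degree_splitting_exists {V : Type*} [Fintype V] [DecidableEq V]
    (G : SimpleGraph V) [DecidableRel G.Adj] (μ : Sym2 V → V × V)
    (hμ : ∀ e ∈ G.edgeSet, Sym2.mk (μ e).1 (μ e).2 = e) :
    ∃ q : Sym2 V → ℤ,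
      (∀ e ∈ G.edgeFinset, q e = 1 ∨ q e = -1) ∧
      ∀ v : V,
        |∑ e ∈ G.edgeFinset.filter (fun e => (μ e).2 = v), q e| ≤ 1 ∧
        |∑ e ∈ G.edgeFinset.filter (fun e => (μ e).1 = v), q e| ≤ 1 :=
  oriented_degree_splitting_exists_general G μ
end

section
/- Let G = (V, E) be a finite simple graph with an orientation μ, and let i be a natural number. Then there exists a partition of E into 2^i pairwise disjoint sets E_1, …, E_{2^i} such that for every vertex v ∈ V and every j ∈ {1, …, 2^i}: indeg(v)/2^i − 1 ≤ indeg_j(v) ≤ indeg(v)/2^i + 1 and outdeg(v)/2^i − 1 ≤ outdeg_j(v) ≤ outdeg(v)/2^i + 1 (as inequalities between real numbers), where indeg_j(v) and outdeg_j(v) denote the numbers of edges of E_j that are incoming to v and outgoing from v, respectively. -/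
/-!
Splitting every vertex into a tail copy and a head copy turns `μ` into a bipartite multigraph in
which the out- and in-degree of `v` are the degrees of its two copies. Every finite multigraph has
an orientation with `|outdeg - indeg| ≤ 1` at each vertex: two edges `wx`, `wy` at a common vertex
are replaced by one edge `xy`, and an orientation of `xy` extends to the path `x w y` without
changing any net out-degree. In the bipartite multigraph, the edges oriented from the tail side to
the head side and the remaining ones form two halves whose degrees differ by at most one at every
vertex. Halving `i` times gives `2^i` parts with `|2^i deg_j(v) - deg(v)| ≤ 2^i - 1`.
-/

/-- The number of edges of `F` that are incoming to `v` under the orientation `μ`. -/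
def inCount {V : Type*} [DecidableEq V] (μ : Sym2 V → V × V) (F : Finset (Sym2 V)) (v : V) : ℕ :=
  (F.filter (fun e => (μ e).2 = v)).card

/-- The number of edges of `F` that are outgoing from `v` under the orientation `μ`. -/
def outCount {V : Type*} [DecidableEq V] (μ : Sym2 V → V × V) (F : Finset (Sym2 V)) (v : V) : ℕ :=
  (F.filter (fun e => (μ e).1 = v)).card

open Finset Function

section Orientation

variable {α W : Type*} [DecidableEq W]

def arcSign (a : W × W) (w : W) : ℤ := (if a.1 = w then 1 else 0) - if a.2 = w then 1 else 0

def netOutdeg (d : α → W × W) (S : Finset α) (w : W) : ℤ := ∑ e ∈ S, arcSign (d e) w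

lemma arcSign_add_arcSign (a w b v : W) :
    arcSign (a, w) v + arcSign (w, b) v = arcSign (a, b) v := by
  simp only [arcSign]; ring

lemma abs_arcSign_le (a : W × W) (w : W) : |arcSign a w| ≤ if w ∈ s(a.1, a.2) then 1 else 0 := by
  simp only [arcSign, Sym2.mem_iff]
  split_ifs <;> simp_all

lemma abs_netOutdeg_le_card (d : α → W × W) (S : Finset α) (w : W) :
    |netOutdeg d S w| ≤ #{e ∈ S | w ∈ s((d e).1, (d e).2)} := by
  calc |netOutdeg d S w| ≤ ∑ e ∈ S, |arcSign (d e) w| := abs_sum_le_sum_abs _ _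
    _ ≤ ∑ e ∈ S, if w ∈ s((d e).1, (d e).2) then 1 else 0 :=
      sum_le_sum fun e _ => abs_arcSign_le _ _
    _ = _ := sum_boole _ _

variable [DecidableEq α]

lemma netOutdeg_update_update {d : α → W × W} {S : Finset α} {e₁ e₂ : α} {u₁ u₂ : W × W}
    (hne : e₁ ≠ e₂) (h₁ : e₁ ∈ S) (h₂ : e₂ ∈ S)
    (hsplice : ∀ v, arcSign u₁ v + arcSign u₂ v = arcSign (d e₁) v) :
    netOutdeg (update (update d e₁ u₁) e₂ u₂) S = netOutdeg d (S.erase e₂) := by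
  have h₁' : e₁ ∈ S.erase e₂ := mem_erase.2 ⟨hne, h₁⟩
  ext v
  rw [netOutdeg, netOutdeg, ← add_sum_erase _ _ h₂, ← add_sum_erase _ _ h₁',
    ← add_sum_erase _ _ h₁', ← hsplice, update_self, update_of_ne hne, update_self]
  rw [sum_congr rfl fun e he => by
    rw [update_of_ne (ne_of_mem_erase (mem_of_mem_erase he)), update_of_ne (ne_of_mem_erase he)]]
  ring

lemma exists_orientation_of_splice {g : α → Sym2 W} {S : Finset α} {e₁ e₂ : α} {w x y : W}
    (hne : e₁ ≠ e₂) (h₁ : e₁ ∈ S) (h₂ : e₂ ∈ S) (hx : g e₁ = s(w, x)) (hy : g e₂ = s(w, y))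
    {d : α → W × W} (hd : ∀ e, s((d e).1, (d e).2) = update g e₁ s(x, y) e) :
    ∃ d' : α → W × W, (∀ e, s((d' e).1, (d' e).2) = g e) ∧
      netOutdeg d' S = netOutdeg d (S.erase e₂) := by
  have horient : ∀ u₁ u₂ : W × W, s(u₁.1, u₁.2) = g e₁ → s(u₂.1, u₂.2) = g e₂ →
      ∀ e, s((update (update d e₁ u₁) e₂ u₂ e).1, (update (update d e₁ u₁) e₂ u₂ e).2) = g e := by
    intro u₁ u₂ hu₁ hu₂ e
    by_cases he₂ : e = e₂
    · subst he₂; rw [update_self, hu₂]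
    by_cases he₁ : e = e₁
    · subst he₁; rw [update_of_ne he₂, update_self, hu₁]
    rw [update_of_ne he₂, update_of_ne he₁, hd, update_of_ne he₁]
  have hde₁ := hd e₁
  rw [update_self] at hde₁
  rcases hde : d e₁ with ⟨a, b⟩
  rw [hde, Sym2.eq_iff] at hde₁
  rcases hde₁ with ⟨rfl, rfl⟩ | ⟨rfl, rfl⟩
  · refine ⟨_, horient (a, w) (w, b) (by rw [hx, Sym2.eq_swap]) hy.symm,
      netOutdeg_update_update hne h₁ h₂ fun v => ?_⟩
    rw [hde, arcSign_add_arcSign]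
  · refine ⟨_, horient (w, b) (a, w) hx.symm (by rw [hy, Sym2.eq_swap]),
      netOutdeg_update_update hne h₁ h₂ fun v => ?_⟩
    rw [hde, add_comm, arcSign_add_arcSign]

theorem exists_balanced_orientation (g : α → Sym2 W) (S : Finset α) :
    ∃ d : α → W × W, (∀ e, s((d e).1, (d e).2) = g e) ∧ ∀ w, |netOutdeg d S w| ≤ 1 := by
  induction S using Finset.strongInduction generalizing g with
  | H S ih =>
  by_cases hpair : ∃ w, ∃ e₁ ∈ S, ∃ e₂ ∈ S, e₁ ≠ e₂ ∧ w ∈ g e₁ ∧ w ∈ g e₂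
  · obtain ⟨w, e₁, h₁, e₂, h₂, hne, hw₁, hw₂⟩ := hpair
    obtain ⟨x, hx⟩ := Sym2.mem_iff_exists.1 hw₁
    obtain ⟨y, hy⟩ := Sym2.mem_iff_exists.1 hw₂
    obtain ⟨d, hd, hbal⟩ := ih (S.erase e₂) (erase_ssubset h₂) (update g e₁ s(x, y))
    obtain ⟨d', hd', hnet⟩ := exists_orientation_of_splice hne h₁ h₂ hx hy hd
    exact ⟨d', hd', hnet ▸ hbal⟩
  · push Not at hpair
    choose d hd using fun e => Quot.exists_rep (g e)
    refine ⟨d, hd, fun w => (abs_netOutdeg_le_card d S w).trans ?_⟩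
    simp only [hd, Nat.cast_le_one, card_le_one, mem_filter]
    exact fun e₁ ⟨h₁, hw₁⟩ e₂ ⟨h₂, hw₂⟩ => by_contra fun hne => hpair w e₁ h₁ e₂ h₂ hne hw₁ hw₂

end Orientation

section Bipartite

variable {α A B : Type*}

def bipartiteEdge (p : α → A) (q : α → B) (e : α) : Sym2 (A ⊕ B) := s(.inl (p e), .inr (q e))

@[simp]
lemma inl_mem_bipartiteEdge {p : α → A} {q : α → B} {e : α} {a : A} :
    .inl a ∈ bipartiteEdge p q e ↔ p e = a := by
  simp [bipartiteEdge, eq_comm]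

@[simp]
lemma inr_mem_bipartiteEdge {p : α → A} {q : α → B} {e : α} {b : B} :
    .inr b ∈ bipartiteEdge p q e ↔ q e = b := by
  simp [bipartiteEdge, eq_comm]

variable [DecidableEq α] [DecidableEq A] [DecidableEq B]

theorem exists_bipartite_halving (p : α → A) (q : α → B) (S : Finset α) :
    ∃ T T' : Finset α, Disjoint T T' ∧ T ∪ T' = S ∧ ∀ c,
      |(#{e ∈ T | c ∈ bipartiteEdge p q e} : ℤ) - #{e ∈ T' | c ∈ bipartiteEdge p q e}| ≤ 1 := by
  obtain ⟨d, hd, hbal⟩ := exists_balanced_orientation (bipartiteEdge p q) S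
  let forward e := d e = (.inl (p e), .inr (q e))
  refine ⟨{e ∈ S | forward e}, {e ∈ S | ¬forward e}, disjoint_filter_filter_not _ _ _,
    filter_union_filter_not_eq _ _, fun c => ?_⟩
  let side : ℤ := if c.isLeft then 1 else -1
  have harc : ∀ e, arcSign (d e) c = side *
      if forward e then (if c ∈ bipartiteEdge p q e then 1 else 0)
      else -(if c ∈ bipartiteEdge p q e then 1 else 0) := by
    intro e
    have := hd e
    rw [bipartiteEdge, Sym2.eq_iff] at this
    rcases this with ⟨h₁, h₂⟩ | ⟨h₁, h₂⟩ <;> cases c <;>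
      simp [forward, side, arcSign, Prod.ext_iff, h₁, h₂, eq_comm, apply_ite Neg.neg]
  have hnet : netOutdeg d S c = side * (#{e ∈ {e ∈ S | forward e} | c ∈ bipartiteEdge p q e} -
      #{e ∈ {e ∈ S | ¬forward e} | c ∈ bipartiteEdge p q e} : ℤ) := by
    rw [netOutdeg, sum_congr rfl fun e _ => harc e, ← mul_sum, sum_ite, sum_neg_distrib,
      sum_boole, sum_boole, sub_eq_add_neg]
  have hside : |side| = 1 := by
    unfold side; split_ifs <;> simp
  simpa [hnet, abs_mul, hside] using hbal c

end Bipartite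

section Split

variable {α γ ι κ : Type*} [DecidableEq α] (P : α → γ → Prop) [∀ e c, Decidable (P e c)]

structure IsBalancedSplit [Fintype ι] (k : ℕ) (S : Finset α) (E : ι → Finset α) : Prop where
  pairwise_disjoint : Pairwise (Disjoint on E)
  biUnion_eq : univ.biUnion E = S
  abs_sub_le : ∀ j c, |k * (#{e ∈ E j | P e c} : ℤ) - #{e ∈ S | P e c}| ≤ k - 1

variable {P} [Fintype ι] [Fintype κ]

lemma isBalancedSplit_one [Unique ι] (S : Finset α) : IsBalancedSplit P 1 S fun _ : ι => S where
  pairwise_disjoint := Subsingleton.pairwise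
  biUnion_eq := by simp
  abs_sub_le _ _ := by simp

lemma IsBalancedSplit.comp_equiv {k : ℕ} {S : Finset α} {E : ι → Finset α}
    (h : IsBalancedSplit P k S E) (σ : κ ≃ ι) : IsBalancedSplit P k S (E ∘ σ) where
  pairwise_disjoint := h.pairwise_disjoint.comp_of_injective σ.injective
  biUnion_eq := by
    rw [← h.biUnion_eq]
    ext
    simp only [mem_biUnion, mem_univ, true_and, comp_apply]
    exact (σ.surjective.exists (p := fun j => _ ∈ E j)).symm
  abs_sub_le j := h.abs_sub_le (σ j)

lemma IsBalancedSplit.sumElim {k : ℕ} {S T T' : Finset α} {E E' : ι → Finset α}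
    (hdisj : Disjoint T T') (hunion : T ∪ T' = S)
    (hhalf : ∀ c, |(#{e ∈ T | P e c} : ℤ) - #{e ∈ T' | P e c}| ≤ 1)
    (h : IsBalancedSplit P k T E) (h' : IsBalancedSplit P k T' E') :
    IsBalancedSplit P (2 * k) S (Sum.elim E E') where
  pairwise_disjoint := by
    have hsub : ∀ j j', Disjoint (E j) (E' j') := fun j j' =>
      hdisj.mono (h.biUnion_eq ▸ subset_biUnion_of_mem E (mem_univ j))
        (h'.biUnion_eq ▸ subset_biUnion_of_mem E' (mem_univ j'))
    rintro (j | j) (j' | j') hne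
    · exact h.pairwise_disjoint fun hj => hne (congrArg Sum.inl hj)
    · exact hsub j j'
    · exact (hsub j' j).symm
    · exact h'.pairwise_disjoint fun hj => hne (congrArg Sum.inr hj)
  biUnion_eq := by
    rw [← hunion, ← h.biUnion_eq, ← h'.biUnion_eq]
    ext
    simp [Sum.exists]
  abs_sub_le j c := by
    have hcount : (#{e ∈ S | P e c} : ℤ) = #{e ∈ T | P e c} + #{e ∈ T' | P e c} := by
      rw [← hunion, filter_union, card_union_of_disjoint (disjoint_filter_filter hdisj)]
      push_cast; rfl
    have hhalf := abs_le.1 (hhalf c)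
    rcases j with j | j
    · have hj := abs_le.1 (h.abs_sub_le j c)
      rw [abs_le]; push_cast [hcount]; simp only [Sum.elim_inl]; constructor <;> linarith
    · have hj := abs_le.1 (h'.abs_sub_le j c)
      rw [abs_le]; push_cast [hcount]; simp only [Sum.elim_inr]; constructor <;> linarith

theorem exists_isBalancedSplit_pow_two
    (halve : ∀ S : Finset α, ∃ T T' : Finset α, Disjoint T T' ∧ T ∪ T' = S ∧
      ∀ c, |(#{e ∈ T | P e c} : ℤ) - #{e ∈ T' | P e c}| ≤ 1)
    (i : ℕ) (S : Finset α) : ∃ E : Fin (2 ^ i) → Finset α, IsBalancedSplit P (2 ^ i) S E := by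
  induction i generalizing S with
  | zero => exact ⟨fun _ => S, isBalancedSplit_one (ι := Fin 1) S⟩
  | succ i ih =>
    obtain ⟨T, T', hdisj, hunion, hhalf⟩ := halve S
    obtain ⟨E, hE⟩ := ih T
    obtain ⟨E', hE'⟩ := ih T'
    rw [pow_succ']
    exact ⟨_, (hE.sumElim hdisj hunion hhalf hE').comp_equiv
      ((finCongr (two_mul _)).trans finSumFinEquiv.symm)⟩

end Split

lemma div_sub_one_le_and_le_div_add_one {K : Type*} [Field K] [LinearOrder K]
    [IsStrictOrderedRing K] {k x n : K} (hk : 0 < k) (h : |k * x - n| ≤ k - 1) :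
    n / k - 1 ≤ x ∧ x ≤ n / k + 1 := by
  rw [abs_le] at h
  rw [sub_le_iff_le_add, div_le_iff₀ hk, ← sub_le_iff_le_add, le_div_iff₀ hk]
  constructor <;> linarith

theorem partition_oriented_degree_bounds_general {V : Type*} [Fintype V] [DecidableEq V]
    (G : SimpleGraph V) [DecidableRel G.Adj] (μ : Sym2 V → V × V) (i : ℕ) :
    ∃ E : Fin (2 ^ i) → Finset (Sym2 V),
      (∀ j k, j ≠ k → Disjoint (E j) (E k)) ∧
      Finset.univ.biUnion E = G.edgeFinset ∧
      ∀ (v : V) (j : Fin (2 ^ i)),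
        ((inCount μ G.edgeFinset v : ℝ) / 2 ^ i - 1 ≤ (inCount μ (E j) v : ℝ) ∧
         (inCount μ (E j) v : ℝ) ≤ (inCount μ G.edgeFinset v : ℝ) / 2 ^ i + 1) ∧
        ((outCount μ G.edgeFinset v : ℝ) / 2 ^ i - 1 ≤ (outCount μ (E j) v : ℝ) ∧
         (outCount μ (E j) v : ℝ) ≤ (outCount μ G.edgeFinset v : ℝ) / 2 ^ i + 1) := by
  let g := bipartiteEdge (fun e : Sym2 V => (μ e).1) (fun e => (μ e).2)
  obtain ⟨E, hE⟩ := exists_isBalancedSplit_pow_two (P := fun e c => c ∈ g e)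
    (exists_bipartite_halving _ _) i G.edgeFinset
  refine ⟨E, fun j k hjk => hE.pairwise_disjoint hjk, hE.biUnion_eq, fun v j => ⟨?_, ?_⟩⟩
  · have := hE.abs_sub_le j (.inr v)
    simp only [g, inr_mem_bipartiteEdge] at this
    exact div_sub_one_le_and_le_div_add_one (by positivity) (by exact_mod_cast this)
  · have := hE.abs_sub_le j (.inl v)
    simp only [g, inl_mem_bipartiteEdge] at this
    exact div_sub_one_le_and_le_div_add_one (by positivity) (by exact_mod_cast this)

/-- E can be partitioned into 2^i parts so that for each vertex, the numbers of
incoming and outgoing edges in every part are within 1 of `indeg(v)/2^i` and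
`outdeg(v)/2^i`, respectively. -/
theorem partition_oriented_degree_bounds {V : Type*} [Fintype V] [DecidableEq V]
    (G : SimpleGraph V) [DecidableRel G.Adj] (μ : Sym2 V → V × V)
    (hμ : ∀ e ∈ G.edgeSet, Sym2.mk (μ e).1 (μ e).2 = e) (i : ℕ) :
    ∃ E : Fin (2 ^ i) → Finset (Sym2 V),
      (∀ j k, j ≠ k → Disjoint (E j) (E k)) ∧
      Finset.univ.biUnion E = G.edgeFinset ∧
      ∀ (v : V) (j : Fin (2 ^ i)),
        ((inCount μ G.edgeFinset v : ℝ) / 2 ^ i - 1 ≤ (inCount μ (E j) v : ℝ) ∧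
         (inCount μ (E j) v : ℝ) ≤ (inCount μ G.edgeFinset v : ℝ) / 2 ^ i + 1) ∧
        ((outCount μ G.edgeFinset v : ℝ) / 2 ^ i - 1 ≤ (outCount μ (E j) v : ℝ) ∧
         (outCount μ (E j) v : ℝ) ≤ (outCount μ G.edgeFinset v : ℝ) / 2 ^ i + 1) :=
  partition_oriented_degree_bounds_general G μ i
end

section
/- Let G = (V, E) be a finite simple graph with maximum degree Δ and with an orientation μ, and let i be a natural number. Then there exists a partition of E into 2^i pairwise disjoint sets E_1, …, E_{2^i} such that for every j ∈ {1, …, 2^i}, the maximum degree of the spanning subgraph (V, E_j) is at most Δ/2^i + 2 (as an inequality between real numbers). -/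
open Finset Function

def splitAlternately {α : Type*} : List α → List α × List α
  | [] => ([], [])
  | x :: xs => (x :: (splitAlternately xs).2, (splitAlternately xs).1)

theorem splitAlternately_perm {α : Type*} (L : List α) :
    ((splitAlternately L).1 ++ (splitAlternately L).2).Perm L := by
  induction L with
  | nil => rfl
  | cons x xs ih => simpa [splitAlternately] using (List.perm_append_comm.trans ih).cons x

namespace SimpleGraph.Walk

variable {V : Type*} {G : SimpleGraph V}

theorem abs_countP_splitAlternately_sub_le [DecidableEq V] {u w : V} (p : G.Walk u w) (v : V) :
    |((splitAlternately p.edges).1.countP (v ∈ ·) : ℤ) -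
        (splitAlternately p.edges).2.countP (v ∈ ·) - if u = v then 1 else 0| ≤
      if w = v then 1 else 0 := by
  induction p with
  | nil => split_ifs <;> simp [splitAlternately]
  | @cons u x w h q ih =>
    set a := ((splitAlternately q.edges).1.countP (v ∈ ·) : ℤ)
    set b := ((splitAlternately q.edges).2.countP (v ∈ ·) : ℤ)
    have hmem : ((if v ∈ s(u, x) then 1 else 0 : ℕ) : ℤ) =
        (if u = v then 1 else 0) + if x = v then 1 else 0 := by
      have := h.ne
      by_cases hu : u = v <;> by_cases hx : x = v <;> simp_all [eq_comm]
    have hstep : ((splitAlternately (cons h q).edges).1.countP (v ∈ ·) : ℤ) -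
        (splitAlternately (cons h q).edges).2.countP (v ∈ ·) - (if u = v then 1 else 0) =
        -(a - b - if x = v then 1 else 0) := by
      simp only [edges_cons, splitAlternately, List.countP_cons, decide_eq_true_eq, Nat.cast_add,
        hmem, a, b]
      ring
    rwa [hstep, abs_neg]

theorem IsTrail.mk_mem_edges_of_forall_length_le {u w x : V} {p : G.Walk u w} (hp : p.IsTrail)
    (hmax : ∀ (u' w' : V) (q : G.Walk u' w'), q.IsTrail → q.length ≤ p.length)
    (h : G.Adj u x) : s(u, x) ∈ p.edges := by
  by_contra hx
  rw [Sym2.eq_swap] at hx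
  simpa using hmax _ _ (cons h.symm p) ((isTrail_cons h.symm p).2 ⟨hp, hx⟩)

end SimpleGraph.Walk

theorem SimpleGraph.exists_isTrail_saturated_ends {V : Type*} {G : SimpleGraph V}
    [Finite G.edgeSet] {x y : V} (hxy : G.Adj x y) :
    ∃ (u w : V) (p : G.Walk u w), p.IsTrail ∧ p.edges ≠ [] ∧
      (∀ z, G.Adj u z → s(u, z) ∈ p.edges) ∧ ∀ z, G.Adj w z → s(w, z) ∈ p.edges := by
  have : Nonempty V := ⟨x⟩
  obtain ⟨u, w, p, hp, hmax⟩ := Walk.exists_isTrail_forall_isTrail_length_le_length G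
  have hlen : 1 ≤ p.length := hmax x y (.cons hxy .nil) (by simp)
  refine ⟨u, w, p, hp, List.ne_nil_of_length_pos (by rwa [Walk.length_edges]),
    fun z h => hp.mk_mem_edges_of_forall_length_le hmax h, fun z h => ?_⟩
  simpa using hp.reverse.mk_mem_edges_of_forall_length_le (by simpa using hmax) h

open SimpleGraph

section

variable {V : Type*} [DecidableEq V]

def degreeIn (F : Finset (Sym2 V)) (v : V) : ℕ := #{e ∈ F | v ∈ e}

theorem degreeIn_mono {A B : Finset (Sym2 V)} (h : A ⊆ B) (v : V) :
    degreeIn A v ≤ degreeIn B v :=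
  card_le_card (filter_subset_filter _ h)

theorem degreeIn_union {A B : Finset (Sym2 V)} (h : Disjoint A B) (v : V) :
    degreeIn (A ∪ B) v = degreeIn A v + degreeIn B v := by
  rw [degreeIn, filter_union, card_union_of_disjoint (disjoint_filter_filter h)]
  rfl

theorem degreeIn_toFinset {L : List (Sym2 V)} (h : L.Nodup) (v : V) :
    degreeIn L.toFinset v = L.countP (v ∈ ·) := by
  rw [degreeIn, List.countP_eq_length_filter, ← List.toFinset_card_of_nodup (h.filter _)]
  congr 1
  ext e
  simp

theorem exists_trail_split {F : Finset (Sym2 V)} (hF : ∀ e ∈ F, ¬e.IsDiag) (hne : F.Nonempty) :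
    ∃ T ⊆ F, T.Nonempty ∧ ∃ A ⊆ T, ∀ v,
      ((∀ e ∈ F, v ∈ e → e ∈ T) ∧ |2 * (degreeIn A v : ℤ) - degreeIn T v| ≤ 2) ∨
        2 * degreeIn A v = degreeIn T v := by
  set H := fromEdgeSet (F : Set (Sym2 V))
  have hadj {x y : V} (h : s(x, y) ∈ F) : H.Adj x y :=
    (fromEdgeSet_adj _).2 ⟨h, fun hxy => hF _ h (Sym2.mk_isDiag_iff.2 hxy)⟩
  have : Finite H.edgeSet :=
    (F.finite_toSet.subset (edgeSet_fromEdgeSet _ ▸ Set.sdiff_subset)).to_subtype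
  obtain ⟨e₀, he₀⟩ := hne
  induction e₀ using Sym2.ind with | _ x y =>
  obtain ⟨u, w, p, hp, hne, hu, hw⟩ := exists_isTrail_saturated_ends (hadj he₀)
  have hclosed : ∀ v, (v = u ∨ v = w) → ∀ e ∈ F, v ∈ e → e ∈ p.edges := by
    rintro v hv e he hve
    obtain ⟨z, rfl⟩ := Sym2.mem_iff_exists.1 hve
    rcases hv with rfl | rfl
    exacts [hu z (hadj he), hw z (hadj he)]
  have hpF (e : Sym2 V) (he : e ∈ p.edges) : e ∈ F := by
    have := p.edges_subset_edgeSet he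
    rw [edgeSet_fromEdgeSet] at this
    exact this.1
  set L := splitAlternately p.edges
  have hperm := splitAlternately_perm p.edges
  have hnodup : (L.1 ++ L.2).Nodup := hperm.nodup_iff.2 hp.edges_nodup
  refine ⟨p.edges.toFinset, fun e he => hpF e (List.mem_toFinset.1 he),
    List.toFinset_nonempty_iff _ |>.2 hne, L.1.toFinset, fun e he => ?_, fun v => ?_⟩
  · exact List.mem_toFinset.2 (hperm.subset (List.mem_append_left _ (List.mem_toFinset.1 he)))
  have hdeg : 2 * (degreeIn L.1.toFinset v : ℤ) - degreeIn p.edges.toFinset v =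
      L.1.countP (v ∈ ·) - L.2.countP (v ∈ ·) := by
    rw [degreeIn_toFinset hp.edges_nodup, degreeIn_toFinset (List.nodup_append.1 hnodup).1,
      ← hperm.countP_eq, List.countP_append]
    push_cast
    ring
  have hwalk := p.abs_countP_splitAlternately_sub_le v
  by_cases hv : v = u ∨ v = w
  · refine .inl ⟨fun e he hve => List.mem_toFinset.2 (hclosed v hv e he hve), ?_⟩
    rw [hdeg, abs_le]
    rw [abs_le] at hwalk
    split_ifs at hwalk <;> constructor <;> linarith
  · rw [not_or] at hv
    rw [if_neg (Ne.symm hv.1), if_neg (Ne.symm hv.2), sub_zero, abs_nonpos_iff, ← hdeg] at hwalk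
    exact .inr (by omega)

theorem exists_subset_abs_two_mul_degreeIn_sub_le (F : Finset (Sym2 V))
    (hF : ∀ e ∈ F, ¬e.IsDiag) : ∃ A ⊆ F, ∀ v, |2 * (degreeIn A v : ℤ) - degreeIn F v| ≤ 2 := by
  induction F using Finset.strongInduction with | H F ih =>
  rcases F.eq_empty_or_nonempty with rfl | hne
  · exact ⟨∅, empty_subset _, fun v => by simp [degreeIn]⟩
  obtain ⟨T, hTF, hT, A, hAT, hsplit⟩ := exists_trail_split hF hne
  obtain ⟨A', hA', hbal⟩ :=
    ih (F \ T) (sdiff_ssubset hTF hT) fun e he => hF e (mem_sdiff.1 he).1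
  refine ⟨A' ∪ A, union_subset (hA'.trans sdiff_subset) (hAT.trans hTF), fun v => ?_⟩
  have hF_eq : degreeIn F v = degreeIn (F \ T) v + degreeIn T v := by
    rw [← degreeIn_union sdiff_disjoint, sdiff_union_of_subset hTF]
  rw [degreeIn_union (sdiff_disjoint.mono hA' hAT), hF_eq]
  rcases hsplit v with ⟨hclosed, hA⟩ | hA
  · have h0 : degreeIn (F \ T) v = 0 := by
      rw [degreeIn, card_eq_zero, filter_eq_empty_iff]
      exact fun e he hve => (mem_sdiff.1 he).2 (hclosed e (mem_sdiff.1 he).1 hve)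
    have h0' : degreeIn A' v = 0 := Nat.eq_zero_of_le_zero (h0 ▸ degreeIn_mono hA' v)
    simpa [h0, h0'] using hA
  · have := hbal v
    rw [abs_le] at this ⊢
    omega

theorem exists_halving_refinement {ι : Type*} [Fintype ι] (E : ι → Finset (Sym2 V))
    (hE : ∀ j, ∀ e ∈ E j, ¬e.IsDiag) (hdisj : Pairwise (Disjoint on E)) :
    ∃ E' : ι × Bool → Finset (Sym2 V), Pairwise (Disjoint on E') ∧
      univ.biUnion E' = univ.biUnion E ∧
      ∀ j b v, 2 * degreeIn (E' (j, b)) v ≤ degreeIn (E j) v + 2 := by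
  choose A hAE hA using fun j => exists_subset_abs_two_mul_degreeIn_sub_le (E j) (hE j)
  set E' : ι × Bool → Finset (Sym2 V) := fun p => bif p.2 then A p.1 else E p.1 \ A p.1
  have hE' (p : ι × Bool) : E' p ⊆ E p.1 := by
    rcases p with ⟨j, _ | _⟩
    exacts [sdiff_subset, hAE j]
  refine ⟨E', ?_, ?_, ?_⟩
  · rintro ⟨j, b⟩ ⟨k, c⟩ hjk
    by_cases hjk' : j = k
    · subst hjk'
      have hbc : b ≠ c := by simpa using hjk
      cases b <;> cases c <;> simp only [ne_eq, not_true_eq_false] at hbc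
      exacts [sdiff_disjoint, disjoint_sdiff]
    · exact (hdisj hjk').mono (hE' _) (hE' _)
  · ext e
    simp only [mem_biUnion, mem_univ, true_and, Prod.exists, Bool.exists_bool, E', cond]
    refine exists_congr fun j => ⟨?_, fun he => ?_⟩
    · rintro (he | he)
      exacts [(mem_sdiff.1 he).1, hAE j he]
    · by_cases hA : e ∈ A j
      exacts [.inr hA, .inl (mem_sdiff.2 ⟨he, hA⟩)]
  · rintro j b v
    have := hA j v
    rw [abs_le] at this
    have hsum : degreeIn (E j) v = degreeIn (A j) v + degreeIn (E j \ A j) v := by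
      rw [← degreeIn_union disjoint_sdiff, union_sdiff_of_subset (hAE j)]
    cases b <;> simp only [E', cond] <;> omega

theorem exists_partition_degreeIn_le (F : Finset (Sym2 V)) (hF : ∀ e ∈ F, ¬e.IsDiag) (i : ℕ) :
    ∃ E : Fin (2 ^ i) → Finset (Sym2 V), Pairwise (Disjoint on E) ∧ univ.biUnion E = F ∧
      ∀ j v, 2 ^ i * degreeIn (E j) v + 2 ≤ degreeIn F v + 2 ^ (i + 1) := by
  induction i with
  | zero => exact ⟨fun _ => F, Subsingleton.pairwise (α := Fin 1), by simp, fun _ _ => by simp⟩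
  | succ i ih =>
    obtain ⟨E, hdisj, hcover, hdeg⟩ := ih
    have hE (j : Fin (2 ^ i)) : ∀ e ∈ E j, ¬e.IsDiag := fun e he =>
      hF e (hcover ▸ mem_biUnion.2 ⟨j, mem_univ _, he⟩)
    obtain ⟨E', hdisj', hcover', hdeg'⟩ := exists_halving_refinement E hE hdisj
    let σ : Fin (2 ^ (i + 1)) ≃ Fin (2 ^ i) × Bool := Fintype.equivOfCardEq (by simp [pow_succ])
    refine ⟨E' ∘ σ, hdisj'.comp_of_injective σ.injective, ?_, fun j v => ?_⟩
    · rw [← hcover, ← hcover']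
      ext e
      simp [σ.exists_congr_left]
    · have h1 := hdeg' (σ j).1 (σ j).2 v
      have h2 := hdeg (σ j).1 v
      calc 2 ^ (i + 1) * degreeIn (E' (σ j)) v + 2
          = 2 ^ i * (2 * degreeIn (E' ((σ j).1, (σ j).2)) v) + 2 := by ring
        _ ≤ 2 ^ i * (degreeIn (E (σ j).1) v + 2) + 2 := by gcongr
        _ = 2 ^ i * degreeIn (E (σ j).1) v + 2 + 2 ^ (i + 1) := by ring
        _ ≤ degreeIn F v + 2 ^ (i + 1 + 1) := by rw [pow_succ 2 (i + 1)]; omega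

theorem degreeIn_edgeFinset [Fintype V] (G : SimpleGraph V) [DecidableRel G.Adj] (v : V) :
    degreeIn G.edgeFinset v = G.degree v := by
  rw [← card_incidenceFinset_eq_degree, incidenceFinset_eq_filter]
  rfl

theorem maxDegreeOn_le_of_forall_degreeIn_le [Fintype V] {F : Finset (Sym2 V)} {b : ℝ}
    (hb : 0 ≤ b) (h : ∀ v, (degreeIn F v : ℝ) ≤ b) : (maxDegreeOn F : ℝ) ≤ b :=
  calc (maxDegreeOn F : ℝ) ≤ ⌊b⌋₊ := Nat.cast_le.2 (Finset.sup_le fun v _ => Nat.le_floor (h v))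
    _ ≤ b := Nat.floor_le hb

end

theorem oriented_partition_maxDegree_bound_general {V : Type*} [Fintype V] [DecidableEq V]
    (G : SimpleGraph V) [DecidableRel G.Adj] (i : ℕ) :
    ∃ E : Fin (2 ^ i) → Finset (Sym2 V),
      (∀ j k, j ≠ k → Disjoint (E j) (E k)) ∧
      Finset.univ.biUnion E = G.edgeFinset ∧
      ∀ j, (maxDegreeOn (E j) : ℝ) ≤ (G.maxDegree : ℝ) / 2 ^ i + 2 := by
  obtain ⟨E, hdisj, hcover, hdeg⟩ := exists_partition_degreeIn_le G.edgeFinset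
    (fun e he => G.not_isDiag_of_mem_edgeSet (mem_edgeFinset.1 he)) i
  refine ⟨E, fun j k => @hdisj j k, hcover, fun j =>
    maxDegreeOn_le_of_forall_degreeIn_le (by positivity) fun v => ?_⟩
  have hnat : degreeIn (E j) v * 2 ^ i ≤ G.maxDegree + 2 * 2 ^ i := by
    have h := hdeg j v
    rw [degreeIn_edgeFinset, pow_succ] at h
    linarith [G.degree_le_maxDegree v]
  have hpos : (0 : ℝ) < 2 ^ i := by positivity
  rw [div_add' _ _ _ hpos.ne', le_div_iff₀ hpos]
  exact_mod_cast hnat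

/-- for an oriented graph, E can be partitioned into 2^i parts whose
maximum degrees are at most `Δ/2^i + 2`. -/
theorem oriented_partition_maxDegree_bound {V : Type*} [Fintype V] [DecidableEq V]
    (G : SimpleGraph V) [DecidableRel G.Adj] (μ : Sym2 V → V × V)
    (hμ : ∀ e ∈ G.edgeSet, Sym2.mk (μ e).1 (μ e).2 = e) (i : ℕ) :
    ∃ E : Fin (2 ^ i) → Finset (Sym2 V),
      (∀ j k, j ≠ k → Disjoint (E j) (E k)) ∧
      Finset.univ.biUnion E = G.edgeFinset ∧
      ∀ j, (maxDegreeOn (E j) : ℝ) ≤ (G.maxDegree : ℝ) / 2 ^ i + 2 :=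
  oriented_partition_maxDegree_bound_general G i
end

section
/- Let G = (V, E) be a finite simple graph with arboricity at most α, i.e., |E(G[S])| ≤ α·(|S| − 1) for every subset S ⊆ V with |S| ≥ 2. Then G admits an acyclic orientation μ of its edges in which every vertex has outdegree at most 2α. -/
/-!
Counting edge–endpoint incidences inside `S` shows that a vertex set `S` spanning at most
`α (|S| - 1)` edges contains a vertex with at most `2α` neighbours in `S`: the graph is
`2α`-degenerate. Repeatedly removing such a vertex ranks the vertices so that each has at most
`2α` neighbours of higher rank. Orienting every edge towards its higher-ranked end is acyclic,
because ranks strictly increase along directed walks, and has outdegree at most `2α`.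
-/

open Finset Function

namespace Sym2

variable {V β : Type*} [LinearOrder β]

def sortBy (f : V → β) (hf : Injective f) : Sym2 V → V × V :=
  Sym2.lift ⟨fun a b => if f a < f b then (a, b) else (b, a), fun a b => by
    rcases lt_trichotomy (f a) (f b) with h | h | h
    · simp [h, h.not_gt]
    · simp [hf h]
    · simp [h, h.not_gt]⟩

variable {f : V → β} (hf : Injective f)

theorem sortBy_mk (a b : V) : sortBy f hf s(a, b) = if f a < f b then (a, b) else (b, a) := rfl

theorem mk_sortBy (e : Sym2 V) : s((sortBy f hf e).1, (sortBy f hf e).2) = e := by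
  induction e using Sym2.ind with
  | _ a b => rw [sortBy_mk]; split_ifs <;> simp [Sym2.eq_swap]

theorem sortBy_fst_lt_snd {e : Sym2 V} (he : ¬ e.IsDiag) :
    f (sortBy f hf e).1 < f (sortBy f hf e).2 := by
  induction e using Sym2.ind with
  | _ a b =>
    have hab : f a ≠ f b := hf.ne (by simpa using he)
    rw [sortBy_mk]
    split_ifs with h
    · exact h
    · exact lt_of_le_of_ne (not_lt.1 h) hab.symm

end Sym2

namespace SimpleGraph

variable {V : Type*} {G : SimpleGraph V}

section Degeneracy

variable [DecidableRel G.Adj]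

def IsDegenerate (G : SimpleGraph V) [DecidableRel G.Adj] (k : ℕ) : Prop :=
  ∀ S : Finset V, S.Nonempty → ∃ v ∈ S, #{w ∈ S | G.Adj v w} ≤ k

theorem card_filter_adj_lt_card {S : Finset V} {v : V} (hv : v ∈ S) :
    #{w ∈ S | G.Adj v w} < #S :=
  card_lt_card <| (ssubset_iff_of_subset (filter_subset _ _)).2 ⟨v, hv, by simp⟩

theorem IsDegenerate.exists_rank {k : ℕ} (hG : G.IsDegenerate k) (S : Finset V) :
    ∃ f : V → ℕ, Set.InjOn f S ∧
      ∀ v ∈ S, #{w ∈ S | G.Adj v w ∧ f v < f w} ≤ k := by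
  classical
  induction S using Finset.strongInduction with
  | H S ih =>
    obtain rfl | hS := S.eq_empty_or_nonempty
    · exact ⟨0, by simp, by simp⟩
    obtain ⟨v, hv, hvdeg⟩ := hG S hS
    obtain ⟨f, hf_inj, hf⟩ := ih (S.erase v) (erase_ssubset hv)
    refine ⟨fun w => if w = v then 0 else f w + 1, fun a ha b hb hab => ?_, fun u hu => ?_⟩
    · by_cases hav : a = v <;> by_cases hbv : b = v
      · exact hav.trans hbv.symm
      · simp [hav, hbv] at hab
      · simp [hav, hbv] at hab
      · simp only [hav, hbv, if_false, add_left_inj] at hab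
        exact hf_inj (mem_erase.2 ⟨hav, ha⟩) (mem_erase.2 ⟨hbv, hb⟩) hab
    · by_cases huv : u = v
      · subst huv
        exact (card_le_card fun w hw => by simp_all).trans hvdeg
      · refine (card_le_card fun w hw => ?_).trans (hf u (mem_erase.2 ⟨huv, hu⟩))
        by_cases hwv : w = v <;> simp_all

variable [Fintype V] [DecidableEq V]

theorem card_mul_le_two_mul_card_edges_within {S : Finset V} {m : ℕ}
    (hm : ∀ v ∈ S, m ≤ #{w ∈ S | G.Adj v w}) :
    #S * m ≤ 2 * #{e ∈ G.edgeFinset | ∀ v ∈ e, v ∈ S} := by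
  have hcount := card_nsmul_le_card_nsmul (r := fun v e => v ∈ e) (m := m) (n := 2)
    (s := S) (t := {e ∈ G.edgeFinset | ∀ v ∈ e, v ∈ S}) (fun v hv => ?_) (fun e _ => ?_)
  · simpa [mul_comm] using hcount
  · refine (hm v hv).trans (card_le_card_of_injOn (fun w => s(v, w)) (fun w hw => ?_) ?_)
    · simp only [coe_filter, Set.mem_ofPred_eq] at hw
      simp [Sym2.mem_iff, hw.2, hv, hw.1]
    · intro w _ w' _ h
      exact Sym2.congr_right.1 h
  · calc #(S.bipartiteBelow (fun v e => v ∈ e) e) ≤ #e.toFinset :=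
          card_le_card fun v hv => Sym2.mem_toFinset.2 (mem_bipartiteBelow _ |>.1 hv).2
      _ ≤ 2 := by rw [Sym2.card_toFinset]; split_ifs <;> omega

theorem isDegenerate_two_mul_of_card_edges_within_le {α : ℕ}
    (harb : ∀ S : Finset V, 2 ≤ #S →
      #{e ∈ G.edgeFinset | ∀ v ∈ e, v ∈ S} ≤ α * (#S - 1)) :
    G.IsDegenerate (2 * α) := by
  intro S ⟨v, hv⟩
  by_contra! hdeg
  have hS : 2 * α + 2 ≤ #S := lt_of_le_of_lt (hdeg v hv) (card_filter_adj_lt_card hv)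
  have hcount := card_mul_le_two_mul_card_edges_within hdeg
  have hedges := harb S (by omega)
  have hsub : α * (#S - 1) ≤ α * #S := Nat.mul_le_mul_left _ (Nat.sub_le _ _)
  nlinarith

end Degeneracy

section Orientation

variable {β : Type*} [LinearOrder β] {f : V → β} (hf : Injective f)

theorem not_exists_cycle_sortBy :
    ¬ ∃ (n : ℕ) (c : Fin (n + 1) → V), 0 < n ∧ c 0 = c (Fin.last n) ∧
      ∀ i : Fin n, G.Adj (c i.castSucc) (c i.succ) ∧
        Sym2.sortBy f hf s(c i.castSucc, c i.succ) = (c i.castSucc, c i.succ) := by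
  rintro ⟨n, c, hn, hclosed, hsteps⟩
  have hmono : StrictMono (f ∘ c) := Fin.strictMono_iff_lt_succ.2 fun i => by
    obtain ⟨hadj, hdir⟩ := hsteps i
    simpa [hdir] using Sym2.sortBy_fst_lt_snd hf (Sym2.mk_isDiag_iff.not.2 hadj.ne)
  exact (hmono (Fin.lt_last_iff_ne_last.2 (by simp [Fin.ext_iff, hn.ne]))).ne
    (congrArg f hclosed)

theorem card_filter_sortBy_fst_eq_le [Fintype V] [DecidableEq V] [DecidableRel G.Adj] (v : V) :
    #{e ∈ G.edgeFinset | (Sym2.sortBy f hf e).1 = v} ≤ #{w | G.Adj v w ∧ f v < f w} := by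
  refine card_le_card_of_injOn (fun e => (Sym2.sortBy f hf e).2) (fun e he => ?_) ?_
  · simp only [coe_filter, Set.mem_ofPred_eq, mem_edgeFinset] at he
    obtain ⟨he, rfl⟩ := he
    have hadj : G.Adj (Sym2.sortBy f hf e).1 (Sym2.sortBy f hf e).2 := by
      rwa [← mem_edgeSet, Sym2.mk_sortBy]
    simpa [hadj] using Sym2.sortBy_fst_lt_snd hf (G.not_isDiag_of_mem_edgeSet he)
  · intro e he e' he' h
    simp only [coe_filter, Set.mem_ofPred_eq] at he he'
    rw [← Sym2.mk_sortBy hf e, ← Sym2.mk_sortBy hf e', he.2, he'.2]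
    exact congrArg (s(v, ·)) h

end Orientation

end SimpleGraph

/-- a graph of arboricity at most `α` admits an acyclic orientation in which
every vertex has outdegree at most `2α`. -/
theorem acyclic_orientation_of_arboricity {V : Type*} [Fintype V] [DecidableEq V]
    (G : SimpleGraph V) [DecidableRel G.Adj] (α : ℕ)
    (harb : ∀ S : Finset V, 2 ≤ S.card →
      (G.edgeFinset.filter (fun e => ∀ v ∈ e, v ∈ S)).card ≤ α * (S.card - 1)) :
    ∃ μ : Sym2 V → V × V,
      (∀ e ∈ G.edgeSet, Sym2.mk (μ e).1 (μ e).2 = e) ∧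
      (∀ v : V, (G.edgeFinset.filter (fun e => (μ e).1 = v)).card ≤ 2 * α) ∧
      ¬ ∃ (n : ℕ) (c : Fin (n + 1) → V), 0 < n ∧ c 0 = c (Fin.last n) ∧
          ∀ i : Fin n, G.Adj (c i.castSucc) (c i.succ) ∧
            μ s(c i.castSucc, c i.succ) = (c i.castSucc, c i.succ) := by
  obtain ⟨f, hf, hout⟩ := 
    (SimpleGraph.isDegenerate_two_mul_of_card_edges_within_le harb).exists_rank univ
  have hinj : Injective f := by rwa [coe_univ, Set.injOn_univ] at hf
  refine ⟨Sym2.sortBy f hinj, fun e _ => Sym2.mk_sortBy hinj e, fun v => ?_,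
    SimpleGraph.not_exists_cycle_sortBy hinj⟩
  exact (SimpleGraph.card_filter_sortBy_fst_eq_le hinj v).trans (hout v (mem_univ v))
end

section
/- Let G = (V, E) be a finite simple graph admitting an acyclic orientation μ in which every vertex has outdegree at most k. Then E can be partitioned into k pairwise disjoint sets F_1, …, F_k such that each spanning subgraph (V, F_j) is a forest (contains no cycle); consequently, |E(G[S])| ≤ k·(|S| − 1) for every subset S ⊆ V with |S| ≥ 2, i.e., G has arboricity at most k. -/
/-!
Ranking each vertex by the number of vertices reachable from it along arcs, acyclicity makes every
arc strictly decrease the rank. Numbering the (at most `k`) out-arcs of each vertex and letting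
`F j` collect the arcs numbered `j`, every vertex is the tail of at most one edge of `F j`; on a
cycle in `F j` the vertex of maximal rank would be the tail of both of its cycle edges. For the
count, the vertex of minimal rank in `S` is the tail of no edge inside `S`, and every other vertex
of `S` is the tail of at most `k`.
-/

open Finset SimpleGraph

theorem Relation.TransGen.exists_fin_chain {α : Type*} {R : α → α → Prop} {a b : α}
    (h : Relation.TransGen R a b) :
    ∃ (n : ℕ) (c : Fin (n + 1) → α), 0 < n ∧ c 0 = a ∧ c (Fin.last n) = b ∧
      ∀ i : Fin n, R (c i.castSucc) (c i.succ) := by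
  induction h using Relation.TransGen.head_induction_on with
  | single hab => exact ⟨1, ![_, _], one_pos, rfl, rfl, fun i => by fin_cases i; exact hab⟩
  | head hac _ ih =>
    obtain ⟨n, c, -, hc0, hcl, hstep⟩ := ih
    refine ⟨n + 1, Fin.cons _ c, n.succ_pos, rfl, by simpa [← Fin.succ_last] using hcl, ?_⟩
    refine Fin.cases (by simpa [hc0] using hac) fun i => ?_
    simpa [← Fin.succ_castSucc] using hstep i

theorem Relation.exists_rank_of_irrefl_transGen {α : Type*} [Fintype α] {R : α → α → Prop}
    (h : ∀ a, ¬Relation.TransGen R a a) : ∃ r : α → ℕ, ∀ a b, R a b → r b < r a := by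
  classical
  refine ⟨fun a => #{u | Relation.TransGen R a u}, fun a b hab => card_lt_card ?_⟩
  refine ssubset_iff_of_subset (fun u hu => ?_) |>.mpr ⟨b, ?_, ?_⟩
  · simp only [mem_filter, mem_univ, true_and] at hu ⊢
    exact .head hab hu
  · simpa using Relation.TransGen.single hab
  · simpa using h b

theorem Finset.exists_lt_injOn_filter_of_card_filter_le {α β : Type*}
    [DecidableEq α] [DecidableEq β] (s : Finset α) (t : α → β) {k : ℕ}
    (h : ∀ b, #{a ∈ s | t a = b} ≤ k) :
    ∃ c : α → ℕ, (∀ a ∈ s, c a < k) ∧ ∀ b, Set.InjOn c ↑{a ∈ s | t a = b} := by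
  refine ⟨fun a => {a' ∈ s | t a' = t a}.toList.idxOf a, fun a ha => ?_,
    fun b a ha a' ha' hc => ?_⟩
  · refine (List.idxOf_lt_length_iff.mpr ?_).trans_le ?_
    · simpa using ha
    · simpa using h (t a)
  · simp only [coe_filter, Set.mem_ofPred_eq] at ha ha'
    simp only [ha.2, ha'.2] at hc
    exact (List.idxOf_inj (by simpa using ha)).mp hc

namespace SimpleGraph

theorem isAcyclic_of_subsingleton_lower_neighbors {V α : Type*} [LinearOrder α]
    (H : SimpleGraph V) (f : V → α) (hne : ∀ ⦃v w⦄, H.Adj v w → f v ≠ f w)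
    (hlow : ∀ v, {w | H.Adj v w ∧ f w < f v}.Subsingleton) : H.IsAcyclic := by
  classical
  intro u c hc
  obtain ⟨v, hv, hmax⟩ := c.support.toFinset.exists_max_image f ⟨u, by simp⟩
  obtain ⟨x, y, hxy, hN⟩ := Set.ncard_eq_two.mp
    (hc.ncard_neighborSet_toSubgraph_eq_two (List.mem_toFinset.mp hv))
  have hlower : ∀ w ∈ c.toSubgraph.neighborSet v, H.Adj v w ∧ f w < f v := fun w hw =>
    have hadj : H.Adj v w := c.toSubgraph.adj_sub hw
    ⟨hadj, (hmax w (by simpa using c.mem_support_of_adj_toSubgraph hw.symm)).lt_of_ne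
      (hne hadj).symm⟩
  exact hxy (hlow v (hlower x (by simp [hN])) (hlower y (by simp [hN])))

variable {V : Type*} {G : SimpleGraph V} {μ : Sym2 V → V × V} {r : V → ℕ}

theorem orientation_eq_or_eq (hμ : ∀ e ∈ G.edgeSet, s((μ e).1, (μ e).2) = e) {v w : V}
    (hadj : G.Adj v w) : μ s(v, w) = (v, w) ∨ μ s(v, w) = (w, v) := by
  rcases Sym2.eq_iff.mp (hμ _ hadj) with ⟨h₁, h₂⟩ | ⟨h₁, h₂⟩
  · exact .inl (Prod.ext h₁ h₂)
  · exact .inr (Prod.ext h₁ h₂)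

theorem orientation_eq_of_rank_lt (hμ : ∀ e ∈ G.edgeSet, s((μ e).1, (μ e).2) = e)
    (hr : ∀ e ∈ G.edgeSet, r (μ e).2 < r (μ e).1) {v w : V} (hadj : G.Adj v w)
    (hvw : r w < r v) : μ s(v, w) = (v, w) := by
  refine (orientation_eq_or_eq hμ hadj).resolve_right fun h => hvw.not_gt ?_
  simpa [h] using hr s(v, w) hadj

theorem rank_ne_of_adj (hμ : ∀ e ∈ G.edgeSet, s((μ e).1, (μ e).2) = e)
    (hr : ∀ e ∈ G.edgeSet, r (μ e).2 < r (μ e).1) {v w : V} (hadj : G.Adj v w) :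
    r v ≠ r w := by
  rcases orientation_eq_or_eq hμ hadj with h | h
  · simpa [h] using (hr s(v, w) hadj).ne'
  · simpa [h] using (hr s(v, w) hadj).ne

theorem exists_rank_of_acyclic_orientation (hμ : ∀ e ∈ G.edgeSet, s((μ e).1, (μ e).2) = e)
    (hacyc : ¬ ∃ (n : ℕ) (c : Fin (n + 1) → V), 0 < n ∧ c 0 = c (Fin.last n) ∧
        ∀ i : Fin n, G.Adj (c i.castSucc) (c i.succ) ∧
          μ s(c i.castSucc, c i.succ) = (c i.castSucc, c i.succ)) [Finite V] :
    ∃ r : V → ℕ, ∀ e ∈ G.edgeSet, r (μ e).2 < r (μ e).1 := by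
  have := Fintype.ofFinite V
  obtain ⟨r, hr⟩ := Relation.exists_rank_of_irrefl_transGen
    (R := fun a b => G.Adj a b ∧ μ s(a, b) = (a, b)) fun a ha => by
      obtain ⟨n, c, hn, hc0, hcl, hstep⟩ := ha.exists_fin_chain
      exact hacyc ⟨n, c, hn, hc0.trans hcl.symm, hstep⟩
  refine ⟨r, fun e he => hr _ _ ⟨?_, ?_⟩⟩
  · rw [← mem_edgeSet, hμ e he]
    exact he
  · rw [hμ e he]

theorem isAcyclic_fromEdgeSet_of_injOn_fst (hμ : ∀ e ∈ G.edgeSet, s((μ e).1, (μ e).2) = e)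
    (hr : ∀ e ∈ G.edgeSet, r (μ e).2 < r (μ e).1) {F : Set (Sym2 V)} (hF : F ⊆ G.edgeSet)
    (hinj : Set.InjOn (fun e => (μ e).1) F) : (fromEdgeSet F).IsAcyclic := by
  have hG {v w : V} (hadj : (fromEdgeSet F).Adj v w) : G.Adj v w :=
    hF ((fromEdgeSet_adj F).mp hadj).1
  refine isAcyclic_of_subsingleton_lower_neighbors _ r
    (fun v w hadj => rank_ne_of_adj hμ hr (hG hadj)) fun v w ⟨hw, hwv⟩ w' ⟨hw', hw'v⟩ => ?_
  refine Sym2.congr_right.mp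
    (hinj ((fromEdgeSet_adj F).mp hw).1 ((fromEdgeSet_adj F).mp hw').1 ?_)
  simp [orientation_eq_of_rank_lt hμ hr (hG hw) hwv,
    orientation_eq_of_rank_lt hμ hr (hG hw') hw'v]

theorem card_filter_forall_mem_le [Fintype V] [DecidableEq V] [DecidableRel G.Adj]
    (hμ : ∀ e ∈ G.edgeSet, s((μ e).1, (μ e).2) = e)
    (hr : ∀ e ∈ G.edgeSet, r (μ e).2 < r (μ e).1) {k : ℕ}
    (hout : ∀ v : V, #{e ∈ G.edgeFinset | (μ e).1 = v} ≤ k) {S : Finset V} (hS : S.Nonempty) :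
    #{e ∈ G.edgeFinset | ∀ v ∈ e, v ∈ S} ≤ k * (#S - 1) := by
  obtain ⟨v₀, hv₀, hmin⟩ := S.exists_min_image r hS
  have hsub : {e ∈ G.edgeFinset | ∀ v ∈ e, v ∈ S} ⊆
      (S.erase v₀).biUnion fun v => {e ∈ G.edgeFinset | (μ e).1 = v} := by
    intro e he
    obtain ⟨heG, heS⟩ := mem_filter.mp he
    have heG' : e ∈ G.edgeSet := mem_edgeFinset.mp heG
    have hfst : (μ e).1 ∈ e := by
      simpa [hμ e heG'] using Sym2.mem_mk_left (μ e).1 (μ e).2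
    have hsnd : (μ e).2 ∈ e := by
      simpa [hμ e heG'] using Sym2.mem_mk_right (μ e).1 (μ e).2
    have hne : (μ e).1 ≠ v₀ := fun h => (hmin _ (heS _ hsnd)).not_gt (h ▸ hr e heG')
    exact mem_biUnion.mpr ⟨_, mem_erase.mpr ⟨hne, heS _ hfst⟩, mem_filter.mpr ⟨heG, rfl⟩⟩
  calc #{e ∈ G.edgeFinset | ∀ v ∈ e, v ∈ S}
      ≤ ∑ v ∈ S.erase v₀, #{e ∈ G.edgeFinset | (μ e).1 = v} :=
        (card_le_card hsub).trans card_biUnion_le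
    _ ≤ #(S.erase v₀) • k := sum_le_card_nsmul _ _ _ fun v _ => hout v
    _ = k * (#S - 1) := by rw [card_erase_of_mem hv₀, smul_eq_mul, mul_comm]

end SimpleGraph

/-- if `G` admits an acyclic orientation with outdegrees at most `k`, then its
edge set can be partitioned into `k` forests; consequently, `G` has arboricity at most `k`. -/
theorem forests_decomposition_of_acyclic_orientation {V : Type*} [Fintype V] [DecidableEq V]
    (G : SimpleGraph V) [DecidableRel G.Adj] (k : ℕ) (μ : Sym2 V → V × V)
    (hμ : ∀ e ∈ G.edgeSet, Sym2.mk (μ e).1 (μ e).2 = e)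
    (hout : ∀ v : V, (G.edgeFinset.filter (fun e => (μ e).1 = v)).card ≤ k)
    (hacyc : ¬ ∃ (n : ℕ) (c : Fin (n + 1) → V), 0 < n ∧ c 0 = c (Fin.last n) ∧
        ∀ i : Fin n, G.Adj (c i.castSucc) (c i.succ) ∧
          μ s(c i.castSucc, c i.succ) = (c i.castSucc, c i.succ)) :
    (∃ F : Fin k → Finset (Sym2 V),
      (∀ j l, j ≠ l → Disjoint (F j) (F l)) ∧
      Finset.univ.biUnion F = G.edgeFinset ∧
      ∀ j, (SimpleGraph.fromEdgeSet ((F j : Set (Sym2 V)))).IsAcyclic) ∧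
    ∀ S : Finset V, 2 ≤ S.card →
      (G.edgeFinset.filter (fun e => ∀ v ∈ e, v ∈ S)).card ≤ k * (S.card - 1) := by
  obtain ⟨r, hr⟩ := exists_rank_of_acyclic_orientation hμ hacyc
  obtain ⟨c, hc_lt, hc_inj⟩ :=
    G.edgeFinset.exists_lt_injOn_filter_of_card_filter_le (fun e => (μ e).1) hout
  refine ⟨⟨fun j => {e ∈ G.edgeFinset | c e = j}, ?_, ?_, fun j => ?_⟩,
    fun S hS => card_filter_forall_mem_le hμ hr hout (card_pos.mp (by omega))⟩
  · intro j l hjl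
    exact disjoint_filter.mpr fun e _ hj hl => hjl (Fin.ext (hj.symm.trans hl))
  · ext e
    simpa using fun he => ⟨⟨c e, hc_lt e (mem_edgeFinset.mpr he)⟩, rfl⟩
  · refine isAcyclic_fromEdgeSet_of_injOn_fst hμ hr
      (fun e he => mem_edgeFinset.mp (mem_filter.mp he).1) fun e he e' he' h => ?_
    obtain ⟨heG, hej⟩ := mem_filter.mp he
    obtain ⟨heG', he'j⟩ := mem_filter.mp he'
    exact hc_inj (μ e).1 (mem_filter.mpr ⟨heG, rfl⟩) (mem_filter.mpr ⟨heG', h.symm⟩)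
      (hej.trans he'j.symm)
end

section
/- Let G = (V, E) be a finite simple graph with arboricity at most α (i.e., |E(G[S])| ≤ α·(|S| − 1) for every S ⊆ V with |S| ≥ 2), and let i be a natural number with 2^i ≤ α. Then there exists a partition of E into 2^i pairwise disjoint sets E_1, …, E_{2^i} such that each spanning subgraph (V, E_j) has arboricity at most α/2^{i−1} + 1, i.e., |E_j ∩ E(G[S])| ≤ (α/2^{i−1} + 1)·(|S| − 1) for every S ⊆ V with |S| ≥ 2 (inequalities between real numbers). -/
/-!
Double counting in induced subgraphs shows that every nonempty vertex set contains a vertex with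
at most `2α` neighbours inside it, so peeling off such vertices one at a time yields an ordering
of `V` in which every vertex has at most `2α` neighbours above it. Orient every edge upwards and
split the upper neighbours of each vertex into `2^i` groups of size at most
`d = ⌊2α / 2^i⌋ + 1`. The edges of one colour then leave every vertex at most `d` times, and the
topmost vertex of a set `S` has no out-edge inside `S`, so at most `d (|S| - 1)` edges of that
colour lie inside `S`; finally `d ≤ α / 2^(i-1) + 1`.
-/

open Finset Function

theorem Finset.exists_fin_map_card_fiber_le {ι : Type*} (s : Finset ι) {p d : ℕ} [NeZero p]
    (hs : #s ≤ d * p) : ∃ c : ι → Fin p, ∀ j, #{x ∈ s | c x = j} ≤ d := by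
  classical
  rcases Nat.eq_zero_or_pos d with rfl | hd
  · exact ⟨0, by simp_all⟩
  let idx : ι → ℕ := fun x => if hx : x ∈ s then s.equivFin ⟨x, hx⟩ else 0
  have hidx_lt {x} (hx : x ∈ s) : idx x < d * p := by
    simpa [idx, hx] using (s.equivFin ⟨x, hx⟩).2.trans_le hs
  have hidx_inj {x y} (hx : x ∈ s) (hy : y ∈ s) (hxy : idx x = idx y) : x = y := by
    simp only [idx, dif_pos hx, dif_pos hy, Fin.val_inj, s.equivFin.apply_eq_iff_eq,
      Subtype.mk.injEq] at hxy
    exact hxy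
  refine ⟨fun x => if hx : x ∈ s then ⟨idx x / d, Nat.div_lt_of_lt_mul (hidx_lt hx)⟩ else 0,
    fun j => ?_⟩
  -- within a fiber `idx x / d` is fixed, so `idx x % d` determines `x`
  calc #{x ∈ s | _} ≤ #(range d) := by
        refine card_le_card_of_injOn (fun x => idx x % d)
          (fun x _ => mem_range.2 (Nat.mod_lt _ hd)) fun x hx y hy hxy => ?_
        simp only [coe_filter, Set.mem_ofPred_eq] at hx hy
        obtain ⟨hxs, rfl⟩ := hx
        obtain ⟨hys, hxy'⟩ := hy
        simp only [hxs, hys, dite_true, Fin.mk.injEq] at hxy'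
        exact hidx_inj hxs hys (by rw [← Nat.div_add_mod (idx x) d, ← Nat.div_add_mod (idx y) d,
          ← hxy', show idx x % d = idx y % d from hxy])
    _ = d := card_range d

theorem Sym2.injOn_uncurry_mk_of_lt {V β : Type*} [LinearOrder β] (f : V → β) :
    Set.InjOn (Sym2.mk (α := V)).uncurry {x | f x.1 < f x.2} := by
  rintro ⟨a, b⟩ hab ⟨a', b'⟩ hab' h
  rcases Sym2.eq_iff.1 h with h | ⟨rfl, rfl⟩
  · exact Prod.ext h.1 h.2
  · exact absurd (hab.trans hab') (lt_irrefl _)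

theorem card_filter_mem_le_mul_card_sub_one {V β : Type*} [DecidableEq V] [LinearOrder β]
    (f : V → β) {D : Finset (V × V)} (hD : ∀ x ∈ D, f x.1 < f x.2) {d : ℕ}
    (hout : ∀ v, #{x ∈ D | x.1 = v} ≤ d) {S : Finset V} (hS : S.Nonempty) :
    #{x ∈ D | x.1 ∈ S ∧ x.2 ∈ S} ≤ d * (#S - 1) := by
  obtain ⟨top, htop, hmax⟩ := S.exists_max_image f hS
  rw [← card_erase_of_mem htop]
  -- a pair inside `S` never starts at the top of `S`
  refine card_le_mul_card_image_of_maps_to (f := Prod.fst) (fun x hx => ?_) d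
    fun v _ => (card_le_card (filter_subset_filter _ (filter_subset _ _))).trans (hout v)
  rw [mem_filter] at hx
  refine mem_erase.2 ⟨?_, hx.2.1⟩
  rintro hx1
  exact (hD x hx.1).not_ge (hx1 ▸ hmax _ hx.2.2)

namespace SimpleGraph

variable {V : Type*} [Fintype V] [DecidableEq V] (G : SimpleGraph V) [DecidableRel G.Adj]

theorem sum_card_neighborFinset_inter (T : Finset V) :
    ∑ v ∈ T, #(G.neighborFinset v ∩ T) =
      2 * #(G.edgeFinset.filter fun e => ∀ v ∈ e, v ∈ T) := by
  have hE := congrArg card (map_edgeFinset_induce (G := G) (s := (T : Set V)))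
  have hdeg := fun v => congrArg card (map_neighborFinset_induce (G := G) (s := (T : Set V)) v)
  simp only [card_map, card_neighborFinset_eq_degree, coe_sort_coe, toFinset_coe] at hE hdeg
  have hinside : (G.edgeFinset.filter fun e => ∀ v ∈ e, v ∈ T) = G.edgeFinset ∩ T.sym2 := by
    ext; simp [mem_sym2_iff]
  rw [hinside, ← hE, ← sum_coe_sort T]
  simp only [← hdeg]
  convert (G.induce (T : Set V)).sum_degrees_eq_twice_card_edges <;> exact Iff.rfl

theorem exists_card_neighborFinset_inter_le_of_arboricity {α : ℕ}
    (harb : ∀ S : Finset V, 2 ≤ #S →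
      #(G.edgeFinset.filter fun e => ∀ v ∈ e, v ∈ S) ≤ α * (#S - 1))
    {T : Finset V} (hT : T.Nonempty) : ∃ v ∈ T, #(G.neighborFinset v ∩ T) ≤ 2 * α := by
  rcases hT.exists_eq_singleton_or_nontrivial with ⟨v, rfl⟩ | hnontriv
  · exact ⟨v, mem_singleton_self v, by simp⟩
  have hT2 := one_lt_card_iff_nontrivial.2 hnontriv
  refine exists_le_of_sum_le hT ?_
  calc ∑ v ∈ T, #(G.neighborFinset v ∩ T)
      = 2 * #(G.edgeFinset.filter fun e => ∀ v ∈ e, v ∈ T) := G.sum_card_neighborFinset_inter T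
    _ ≤ 2 * (α * (#T - 1)) := Nat.mul_le_mul_left 2 (harb T hT2)
    _ ≤ ∑ _v ∈ T, 2 * α := by
        rw [sum_const, smul_eq_mul]
        nlinarith [Nat.sub_le #T 1]

theorem exists_injective_card_forward_le {k : ℕ}
    (h : ∀ T : Finset V, T.Nonempty → ∃ v ∈ T, #(G.neighborFinset v ∩ T) ≤ k) :
    ∃ f : V → ℕ, Injective f ∧ ∀ v, #{w ∈ G.neighborFinset v | f v < f w} ≤ k := by
  suffices ∀ T : Finset V, ∃ f : V → ℕ, Set.InjOn f T ∧
      ∀ v ∈ T, #{w ∈ G.neighborFinset v ∩ T | f v < f w} ≤ k by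
    obtain ⟨f, hf, hk⟩ := this univ
    exact ⟨f, Set.injOn_univ.1 (by simpa using hf), fun v => by simpa using hk v (mem_univ v)⟩
  intro T
  induction T using Finset.strongInduction with
  | H T ih =>
  rcases T.eq_empty_or_nonempty with rfl | hT
  · exact ⟨0, by simp, by simp⟩
  -- put a vertex of small degree in front of an ordering of the rest
  obtain ⟨v, hv, hvk⟩ := h T hT
  obtain ⟨f, hf, hfk⟩ := ih _ (erase_ssubset hv)
  refine ⟨fun w => if w = v then 0 else f w + 1, fun a ha b hb hab => ?_, fun u hu => ?_⟩
  · simp only at hab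
    split_ifs at hab with hav hbv hbv
    · rw [hav, hbv]
    · exact hf (mem_erase.2 ⟨hav, ha⟩) (mem_erase.2 ⟨hbv, hb⟩) (by omega)
  by_cases huv : u = v
  · subst huv
    exact (card_filter_le _ _).trans hvk
  refine (card_le_card fun w hw => ?_).trans (hfk u (mem_erase.2 ⟨huv, hu⟩))
  simp only [mem_filter, mem_inter, if_neg huv] at hw
  have hwv : w ≠ v := by
    rintro rfl
    simp at hw
  simp only [if_neg hwv] at hw
  simp only [mem_filter, mem_inter, mem_erase]
  exact ⟨⟨hw.1.1, hwv, hw.1.2⟩, by omega⟩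

theorem edgeFinset_eq_image_filter_lt {β : Type*} [LinearOrder β] {f : V → β} (hf : Injective f) :
    G.edgeFinset = ({x : V × V | G.Adj x.1 x.2 ∧ f x.1 < f x.2} : Finset _).image
      Sym2.mk.uncurry := by
  ext e
  induction e using Sym2.ind with | _ a b => ?_
  simp only [mem_edgeFinset, mem_edgeSet, mem_image, mem_filter, mem_univ, true_and,
    Prod.exists, uncurry_apply_pair]
  constructor
  · intro hab
    rcases lt_or_gt_of_ne (hf.ne (G.ne_of_adj hab)) with h | h
    · exact ⟨a, b, ⟨hab, h⟩, rfl⟩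
    · exact ⟨b, a, ⟨hab.symm, h⟩, Sym2.eq_swap⟩
  · rintro ⟨x, y, ⟨hxy, -⟩, h⟩
    rwa [← mem_edgeSet, ← h]

theorem exists_partition_edgeFinset_card_inside_le {f : V → ℕ} (hf : Injective f) {p d : ℕ}
    [NeZero p] (hfwd : ∀ v, #{w ∈ G.neighborFinset v | f v < f w} ≤ d * p) :
    ∃ E : Fin p → Finset (Sym2 V), (∀ j k, j ≠ k → Disjoint (E j) (E k)) ∧
      univ.biUnion E = G.edgeFinset ∧
      ∀ j (S : Finset V), S.Nonempty →
        #((E j).filter fun e => ∀ v ∈ e, v ∈ S) ≤ d * (#S - 1) := by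
  -- colour every edge by the class of its upper end among the forward neighbours of its lower end
  choose c hc using fun v => exists_fin_map_card_fiber_le {w ∈ G.neighborFinset v | f v < f w}
    (hfwd v)
  set P : Finset (V × V) := {x | G.Adj x.1 x.2 ∧ f x.1 < f x.2}
  set D : Fin p → Finset (V × V) := fun j => {x ∈ P | c x.1 x.2 = j}
  have hD_lt {j x} (hx : x ∈ D j) : f x.1 < f x.2 := by
    simp only [D, P, mem_filter, mem_univ, true_and] at hx
    exact hx.1.2
  refine ⟨fun j => (D j).image Sym2.mk.uncurry, fun j k hjk => ?_, ?_, fun j S hS => ?_⟩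
  · refine Finset.disjoint_left.2 fun _ hx hy => ?_
    obtain ⟨x, hxj, rfl⟩ := mem_image.1 hx
    obtain ⟨y, hyk, hxy⟩ := mem_image.1 hy
    obtain rfl := Sym2.injOn_uncurry_mk_of_lt f (hD_lt hyk) (hD_lt hxj) hxy
    simp only [D, mem_filter] at hxj hyk
    exact hjk (hxj.2.symm.trans hyk.2)
  · rw [← biUnion_image, biUnion_filter_eq_of_maps_to fun _ _ => mem_univ _,
      G.edgeFinset_eq_image_filter_lt hf]
  · rw [filter_image]
    refine card_image_le.trans ?_
    simp only [uncurry, Sym2.mem_iff, forall_eq_or_imp, forall_eq]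
    refine card_filter_mem_le_mul_card_sub_one f (fun _ => hD_lt) (fun v => ?_) hS
    refine le_trans (card_le_card_of_injOn Prod.snd (fun x hx => ?_) ?_) (hc v j)
    · simp only [D, P, coe_filter, mem_filter, mem_univ, true_and, Set.mem_ofPred_eq] at hx
      obtain ⟨⟨⟨hadj, hlt⟩, hcj⟩, rfl⟩ := hx
      simp only [coe_filter, mem_filter, mem_neighborFinset, Set.mem_ofPred_eq]
      exact ⟨⟨hadj, hlt⟩, hcj⟩
    · intro x hx y hy hxy
      simp only [coe_filter, Set.mem_ofPred_eq] at hx hy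
      exact Prod.ext (hx.2.trans hy.2.symm) hxy

end SimpleGraph

theorem partition_arboricity_bound_general {V : Type*} [Fintype V] [DecidableEq V]
    (G : SimpleGraph V) [DecidableRel G.Adj] (α : ℕ)
    (harb : ∀ S : Finset V, 2 ≤ S.card →
      (G.edgeFinset.filter (fun e => ∀ v ∈ e, v ∈ S)).card ≤ α * (S.card - 1))
    (i : ℕ) :
    ∃ E : Fin (2 ^ i) → Finset (Sym2 V),
      (∀ j k, j ≠ k → Disjoint (E j) (E k)) ∧
      Finset.univ.biUnion E = G.edgeFinset ∧
      ∀ (j : Fin (2 ^ i)) (S : Finset V), 2 ≤ S.card →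
        (((E j).filter (fun e => ∀ v ∈ e, v ∈ S)).card : ℝ) ≤
          ((α : ℝ) / (2 : ℝ) ^ ((i : ℤ) - 1) + 1) * ((S.card : ℝ) - 1) := by
  obtain ⟨f, hf, hfwd⟩ := G.exists_injective_card_forward_le fun _ hT =>
    G.exists_card_neighborFinset_inter_le_of_arboricity harb hT
  set d := 2 * α / 2 ^ i + 1
  have hdp : 2 * α ≤ d * 2 ^ i :=
    (Nat.lt_mul_div_succ (2 * α) (Nat.two_pow_pos i)).le.trans_eq (mul_comm _ _)
  obtain ⟨E, hdisj, hcover, hinside⟩ :=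
    G.exists_partition_edgeFinset_card_inside_le hf fun v => (hfwd v).trans hdp
  refine ⟨E, hdisj, hcover, fun j S hS => ?_⟩
  have hd : (d : ℝ) ≤ α / 2 ^ ((i : ℤ) - 1) + 1 := by
    rw [zpow_sub₀ two_ne_zero, zpow_one, zpow_natCast, div_div_eq_mul_div, mul_comm]
    have hfloor : ((2 * α / 2 ^ i : ℕ) : ℝ) ≤ 2 * α / 2 ^ i := by exact_mod_cast Nat.cast_div_le
    push_cast [d]
    linarith
  calc (#((E j).filter fun e => ∀ v ∈ e, v ∈ S) : ℝ) ≤ d * ((#S - 1 : ℕ) : ℝ) := by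
        exact_mod_cast hinside j S (card_pos.1 (by omega))
    _ ≤ (α / 2 ^ ((i : ℤ) - 1) + 1) * (#S - 1) := by
        rw [Nat.cast_sub (by omega), Nat.cast_one]
        exact mul_le_mul_of_nonneg_right hd (by simpa using card_pos.1 (by omega))

/-- if `G` has arboricity at most `α` and `2^i ≤ α`, then E can be partitioned
into `2^i` parts each of arboricity at most `α/2^(i-1) + 1`. -/
theorem partition_arboricity_bound {V : Type*} [Fintype V] [DecidableEq V]
    (G : SimpleGraph V) [DecidableRel G.Adj] (α : ℕ)
    (harb : ∀ S : Finset V, 2 ≤ S.card →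
      (G.edgeFinset.filter (fun e => ∀ v ∈ e, v ∈ S)).card ≤ α * (S.card - 1))
    (i : ℕ) (hi : 2 ^ i ≤ α) :
    ∃ E : Fin (2 ^ i) → Finset (Sym2 V),
      (∀ j k, j ≠ k → Disjoint (E j) (E k)) ∧
      Finset.univ.biUnion E = G.edgeFinset ∧
      ∀ (j : Fin (2 ^ i)) (S : Finset V), 2 ≤ S.card →
        (((E j).filter (fun e => ∀ v ∈ e, v ∈ S)).card : ℝ) ≤
          ((α : ℝ) / (2 : ℝ) ^ ((i : ℤ) - 1) + 1) * ((S.card : ℝ) - 1) :=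
  partition_arboricity_bound_general G α harb i
end

section
/- Let G = (V, E) be a finite simple graph with maximum degree Δ and arboricity at most α (i.e., |E(G[S])| ≤ α·(|S| − 1) for every S ⊆ V with |S| ≥ 2), and let h be a natural number with 2^h ≤ α. Then there exists a partition of E into 2^h pairwise disjoint sets E_1, …, E_{2^h} such that for every j ∈ {1, …, 2^h}: (i) the maximum degree of the spanning subgraph (V, E_j) is at most Δ/2^h + 2, and (ii) (V, E_j) has arboricity at most α/2^{h−1} + 1, i.e., |E_j ∩ E(G[S])| ≤ (α/2^{h−1} + 1)·(|S| − 1) for every S ⊆ V with |S| ≥ 2 (inequalities between real numbers). -/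
open Finset Function

section Coloring

variable {X : Type*} {σ τ : X → X}

theorem exists_coloring_of_involutive_of_forall_ne (hσ : Involutive σ) (hτ : Involutive τ)
    (hσx : ∀ x, σ x ≠ x) (hτx : ∀ x, τ x ≠ x) :
    ∃ c : X → Bool, ∀ x, c (σ x) = !c x ∧ c (τ x) = !c x := by
  classical
  let π : Equiv.Perm X := hσ.toPerm.trans hτ.toPerm
  have hσπ (m : ℤ) (x : X) : σ ((π ^ m) x) = (π ^ (-m)) (σ x) := by
    have hconj : hσ.toPerm * π * hσ.toPerm⁻¹ = π⁻¹ := by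
      ext x
      simp [π, Equiv.Perm.inv_def, hσ.toPerm_symm, hτ.toPerm_symm, hσ x]
    rw [← inv_zpow', ← hconj, conj_zpow]
    simp [Equiv.Perm.inv_def, hσ.toPerm_symm, hσ x]
  have hnot (x : X) : ¬ π.SameCycle x (σ x) := by
    rintro ⟨i, hi⟩
    obtain ⟨k, rfl | rfl⟩ := Int.even_or_odd' i
    · apply hσx ((π ^ k) x)
      rw [hσπ, ← hi, ← Equiv.Perm.mul_apply, ← zpow_add]
      congr 2; ring
    · apply hτx ((π ^ (k + 1)) x)
      have hτ_eq : τ ((π ^ (k + 1)) x) = π (σ ((π ^ (k + 1)) x)) := by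
        simp [π, hσ _]
      rw [hτ_eq, hσπ, ← hi, ← Equiv.Perm.mul_apply, ← zpow_one_add, ← Equiv.Perm.mul_apply,
        ← zpow_add]
      congr 2; ring
  have hmap {x y : X} (h : π.SameCycle x y) : π.SameCycle (σ x) (σ y) := by
    obtain ⟨m, rfl⟩ := h
    exact ⟨-m, (hσπ m x).symm⟩
  -- any injective labelling of the `π`-cycles by a linear order will do
  let L : X → Cardinal := fun x =>
    embeddingToCardinal (Quotient.mk (Equiv.Perm.SameCycle.setoid π) x)
  have hL {x y : X} : L x = L y ↔ π.SameCycle x y :=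
    embeddingToCardinal.injective.eq_iff.trans Quotient.eq
  have hflip (x : X) : decide (L (σ x) < L x) = !decide (L x < L (σ x)) := by
    rcases lt_or_gt_of_ne (mt hL.1 (hnot x)) with h | h <;> simp [h, h.not_gt]
  refine ⟨fun x => decide (L x < L (σ x)), fun x => ⟨?_, ?_⟩⟩
  · simpa only [hσ x] using hflip x
  · have hστ : π.SameCycle (σ x) (τ x) := ⟨1, by simp [π, hσ x]⟩
    have h1 : L (τ x) = L (σ x) := hL.2 hστ.symm
    have h2 : L (σ (τ x)) = L x := hL.2 (by simpa [hσ x] using (hmap hστ).symm)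
    simp only [h1, h2, hflip]

def flipFixedPoints [DecidableEq X] (σ : X → X) (p : X × Bool) : X × Bool :=
  if σ p.1 = p.1 then (p.1, !p.2) else (σ p.1, p.2)

theorem Function.Involutive.flipFixedPoints [DecidableEq X] (hσ : Involutive σ) :
    Involutive (flipFixedPoints σ) := by
  rintro ⟨x, b⟩
  by_cases hx : σ x = x
  · simp [_root_.flipFixedPoints, hx]
  · simp [_root_.flipFixedPoints, hx, hσ x, Ne.symm hx]

theorem flipFixedPoints_ne [DecidableEq X] (σ : X → X) (p : X × Bool) :
    flipFixedPoints σ p ≠ p := by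
  unfold flipFixedPoints
  split_ifs with hx <;> simp [Prod.ext_iff, hx]

theorem exists_coloring_of_involutive (hσ : Involutive σ) (hτ : Involutive τ) :
    ∃ c : X → Bool, ∀ x, (σ x ≠ x → c (σ x) = !c x) ∧ (τ x ≠ x → c (τ x) = !c x) := by
  classical
  obtain ⟨c, hc⟩ := exists_coloring_of_involutive_of_forall_ne hσ.flipFixedPoints
    hτ.flipFixedPoints (flipFixedPoints_ne σ) (flipFixedPoints_ne τ)
  refine ⟨fun x => c (x, false), fun x => ⟨fun hx => ?_, fun hx => ?_⟩⟩
  · simpa [flipFixedPoints, hx] using (hc (x, false)).1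
  · simpa [flipFixedPoints, hx] using (hc (x, false)).2

end Coloring

section Pairing

variable {ι A : Type*}

/-- `p` pairs up the elements of `D` within each fiber of `t`, leaving at most one per fiber
unpaired. -/
structure IsFiberPairing (D : Finset ι) (t : ι → A) (p : ι → ι) : Prop where
  involutive : Involutive p
  fiber_apply : ∀ e, t (p e) = t e
  eq_self_of_notMem : ∀ e ∉ D, p e = e
  eq_of_eq_self : ∀ e ∈ D, ∀ e' ∈ D, p e = e → p e' = e' → t e = t e' → e = e'

theorem IsFiberPairing.mem {D : Finset ι} {t : ι → A} {p : ι → ι} (hp : IsFiberPairing D t p)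
    {e : ι} (he : e ∈ D) : p e ∈ D := by
  by_contra h
  have := hp.eq_self_of_notMem _ h
  rw [hp.involutive e] at this
  exact h (this ▸ he)

theorem exists_isFiberPairing (D : Finset ι) (t : ι → A) : ∃ p, IsFiberPairing D t p := by
  classical
  induction D using Finset.strongInduction with
  | H D ih =>
  by_cases hpair : ∃ e ∈ D, ∃ e' ∈ D, e ≠ e' ∧ t e = t e'
  · obtain ⟨e, he, e', he', hne, ht⟩ := hpair
    obtain ⟨p, hp⟩ := ih ((D.erase e).erase e')
      ((erase_ssubset (mem_erase.2 ⟨hne.symm, he'⟩)).trans (erase_ssubset he))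
    have hpe : p e = e := hp.eq_self_of_notMem e (by simp)
    have hpe' : p e' = e' := hp.eq_self_of_notMem e' (by simp)
    have hpx {x : ι} (hx : x ≠ e) (hx' : x ≠ e') : p x ≠ e ∧ p x ≠ e' := by
      refine ⟨fun h => hx ?_, fun h => hx' ?_⟩
      · rw [← hp.involutive x, h, hpe]
      · rw [← hp.involutive x, h, hpe']
    refine ⟨Equiv.swap e e' ∘ p, ⟨fun x => ?_, fun x => ?_, fun x hx => ?_,
      fun x hx y hy hxx hyy hxy => ?_⟩⟩
    · by_cases hx : x = e
      · simp [hx, hpe, hpe']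
      by_cases hx' : x = e'
      · simp [hx', hpe, hpe']
      obtain ⟨h1, h2⟩ := hpx hx hx'
      simp [Equiv.swap_apply_of_ne_of_ne h1 h2, hp.involutive x,
        Equiv.swap_apply_of_ne_of_ne hx hx']
    · simp only [comp_apply, Equiv.swap_apply_def]
      split_ifs with h1 h2
      · rw [← ht, ← h1, hp.fiber_apply]
      · rw [ht, ← h2, hp.fiber_apply]
      · exact hp.fiber_apply x
    · have hxe : x ≠ e := fun h => hx (h ▸ he)
      have hxe' : x ≠ e' := fun h => hx (h ▸ he')
      obtain ⟨h1, h2⟩ := hpx hxe hxe'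
      simp only [comp_apply, Equiv.swap_apply_of_ne_of_ne h1 h2]
      exact hp.eq_self_of_notMem x (by simp [hx])
    · have hfixed {z : ι} (hz : z ∈ D) (hzz : Equiv.swap e e' (p z) = z) :
          z ∈ (D.erase e).erase e' ∧ p z = z := by
        have hze : z ≠ e := by rintro rfl; simp [hpe, hne.symm] at hzz
        have hze' : z ≠ e' := by rintro rfl; simp [hpe', hne] at hzz
        obtain ⟨h1, h2⟩ := hpx hze hze'
        rw [Equiv.swap_apply_of_ne_of_ne h1 h2] at hzz
        exact ⟨by simp [hz, hze, hze'], hzz⟩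
      obtain ⟨hxD, hpx⟩ := hfixed hx hxx
      obtain ⟨hyD, hpy⟩ := hfixed hy hyy
      exact hp.eq_of_eq_self x hxD y hyD hpx hpy hxy
  · exact ⟨id, ⟨fun _ => rfl, fun _ => rfl, fun _ _ => rfl,
      fun x hx y hy _ _ hxy => by_contra fun h => hpair ⟨x, hx, y, hy, h, hxy⟩⟩⟩

theorem two_mul_card_filter_lt {F : Finset ι} {p : ι → ι} (hp : Involutive p)
    (hF : ∀ e ∈ F, p e ∈ F) (hfix : ∀ e ∈ F, ∀ e' ∈ F, p e = e → p e' = e' → e = e')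
    {c : ι → Bool} (hc : ∀ e, p e ≠ e → c (p e) = !c e) (b : Bool) :
    2 * #{e ∈ F | c e = b} < #F + 2 := by
  classical
  have hmoved : #{e ∈ F | c e = b ∧ p e ≠ e} ≤ #{e ∈ F | c e = !b} := by
    refine card_le_card_of_injOn p (fun e he => ?_) (hp.injective.injOn)
    simp only [coe_filter, Set.mem_ofPred_eq] at he ⊢
    exact ⟨hF e he.1, by rw [hc e he.2.2, he.2.1]⟩
  have hfixed : #{e ∈ F | c e = b ∧ p e = e} ≤ 1 :=
    card_le_one.2 fun e he e' he' => by
      simp only [mem_filter] at he he'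
      exact hfix e he.1 e' he'.1 he.2.2 he'.2.2
  have hsplit :
      #{e ∈ F | c e = b} = #{e ∈ F | c e = b ∧ p e = e} + #{e ∈ F | c e = b ∧ p e ≠ e} := by
    rw [← filter_filter, ← filter_filter, card_filter_add_card_filter_not]
  have htotal : #{e ∈ F | c e = b} + #{e ∈ F | c e = !b} = #F := by
    simpa [Bool.eq_not] using card_filter_add_card_filter_not (s := F) (fun e => c e = b)
  omega

end Pairing

section Splitting

variable {ι A B K L : Type*} [DecidableEq A] [DecidableEq B] [DecidableEq K] [DecidableEq L]

/-- Every part `{e ∈ D | f e = j}` meets each fiber of `t` on `D`, of size `n` say, in at most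
`⌈n / k⌉` elements (which is what `k * m < n + k` says about `m`). -/
def SplitsEvenly (k : ℕ) (D : Finset ι) (t : ι → A) (f : ι → K) : Prop :=
  ∀ j a, k * #{e ∈ {e ∈ D | f e = j} | t e = a} < #{e ∈ D | t e = a} + k

theorem splitsEvenly_one (D : Finset ι) (t : ι → A) (f : ι → K) : SplitsEvenly 1 D t f :=
  fun j a => by
    rw [one_mul, filter_comm]
    exact Nat.lt_succ_of_le (card_filter_le _ _)

theorem SplitsEvenly.comp_equiv {k : ℕ} {D : Finset ι} {t : ι → A} {f : ι → K}
    (hf : SplitsEvenly k D t f) (φ : K ≃ L) : SplitsEvenly k D t (φ ∘ f) :=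
  fun j a => by simpa [← Equiv.eq_symm_apply] using hf (φ.symm j) a

theorem SplitsEvenly.prod {m n : ℕ} {D : Finset ι} {t : ι → A} {f : ι → K} {g : ι → L}
    (hf : SplitsEvenly m D t f) (hg : SplitsEvenly n D (fun e => (t e, f e)) g) :
    SplitsEvenly (m * n) D t (fun e => (f e, g e)) := by
  rintro ⟨j, l⟩ a
  have hx := hf j a
  have hy := hg l (a, j)
  have h1 : #{e ∈ {e ∈ D | g e = l} | (t e, f e) = (a, j)} =
      #{e ∈ {e ∈ D | (f e, g e) = (j, l)} | t e = a} := by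
    congr 1; ext e; simp only [mem_filter, Prod.mk.injEq]; tauto
  have h2 : #{e ∈ D | (t e, f e) = (a, j)} = #{e ∈ {e ∈ D | f e = j} | t e = a} := by
    congr 1; ext e; simp only [mem_filter, Prod.mk.injEq]; tauto
  rw [h1, h2] at hy
  nlinarith

theorem IsFiberPairing.splitsEvenly_two {D : Finset ι} {t : ι → A} {p : ι → ι}
    (hp : IsFiberPairing D t p) {c : ι → Bool} (hc : ∀ e, p e ≠ e → c (p e) = !c e) :
    SplitsEvenly 2 D t c := by
  intro b a
  rw [filter_comm]
  refine two_mul_card_filter_lt hp.involutive (fun e he => ?_)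
    (fun e he e' he' hpe hpe' => ?_) hc b
  · rw [mem_filter] at he ⊢
    exact ⟨hp.mem he.1, by rw [hp.fiber_apply, he.2]⟩
  · rw [mem_filter] at he he'
    exact hp.eq_of_eq_self e he.1 e' he'.1 hpe hpe' (he.2.trans he'.2.symm)

theorem exists_splitsEvenly_two (D : Finset ι) (t : ι → A) (s : ι → B) :
    ∃ c : ι → Bool, SplitsEvenly 2 D t c ∧ SplitsEvenly 2 D s c := by
  obtain ⟨p, hp⟩ := exists_isFiberPairing D t
  obtain ⟨q, hq⟩ := exists_isFiberPairing D s
  obtain ⟨c, hc⟩ := exists_coloring_of_involutive hp.involutive hq.involutive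
  exact ⟨c, hp.splitsEvenly_two fun e => (hc e).1, hq.splitsEvenly_two fun e => (hc e).2⟩

theorem exists_splitsEvenly_two_pow (D : Finset ι) (t : ι → A) (s : ι → B) (h : ℕ) :
    ∃ f : ι → Fin (2 ^ h), SplitsEvenly (2 ^ h) D t f ∧ SplitsEvenly (2 ^ h) D s f := by
  induction h with
  | zero => exact ⟨fun _ => 0, splitsEvenly_one D t _, splitsEvenly_one D s _⟩
  | succ h ih =>
    obtain ⟨f, hft, hfs⟩ := ih
    obtain ⟨c, hct, hcs⟩ :=
      exists_splitsEvenly_two D (fun e => (t e, f e)) (fun e => (s e, f e))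
    let φ : Fin (2 ^ h) × Bool ≃ Fin (2 ^ (h + 1)) :=
      Fintype.equivFinOfCardEq (by simp [pow_succ])
    have ht := (hft.prod hct).comp_equiv φ
    have hs := (hfs.prod hcs).comp_equiv φ
    rw [← pow_succ] at ht hs
    exact ⟨_, ht, hs⟩

end Splitting

section Orientation

variable {V β : Type*} [LinearOrder β] (r : V ↪ β)

def lowerEnd : Sym2 V → V :=
  Sym2.lift ⟨fun u v => if r u ≤ r v then u else v, fun u v => by
    by_cases huv : r u ≤ r v <;> by_cases hvu : r v ≤ r u <;>
      simp only [huv, hvu, if_true, if_false]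
    · exact r.injective (le_antisymm huv hvu)
    · exact absurd (le_of_not_ge huv) hvu⟩

def upperEnd : Sym2 V → V :=
  Sym2.lift ⟨fun u v => if r u ≤ r v then v else u, fun u v => by
    by_cases huv : r u ≤ r v <;> by_cases hvu : r v ≤ r u <;>
      simp only [huv, hvu, if_true, if_false]
    · exact r.injective (le_antisymm hvu huv)
    · exact absurd (le_of_not_ge huv) hvu⟩

variable {r}

theorem mk_lowerEnd_upperEnd (e : Sym2 V) : s(lowerEnd r e, upperEnd r e) = e := by
  induction e using Sym2.ind with
  | h u v =>
    simp only [lowerEnd, upperEnd, Sym2.lift_mk]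
    split_ifs
    · rfl
    · exact Sym2.eq_swap

theorem le_lowerEnd_upperEnd (e : Sym2 V) : r (lowerEnd r e) ≤ r (upperEnd r e) := by
  induction e using Sym2.ind with
  | h u v =>
    simp only [lowerEnd, upperEnd, Sym2.lift_mk]
    split_ifs with h
    · exact h
    · exact (lt_of_not_ge h).le

theorem mem_iff_eq_lowerEnd_or_eq_upperEnd {e : Sym2 V} {v : V} :
    v ∈ e ↔ v = lowerEnd r e ∨ v = upperEnd r e := by
  conv_lhs => rw [← mk_lowerEnd_upperEnd (r := r) e]
  exact Sym2.mem_iff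

theorem lowerEnd_lt_upperEnd {e : Sym2 V} (he : ¬e.IsDiag) :
    r (lowerEnd r e) < r (upperEnd r e) := by
  refine (le_lowerEnd_upperEnd e).lt_of_ne fun h => he ?_
  rw [← mk_lowerEnd_upperEnd (r := r) e, r.injective h]
  exact Sym2.mk_isDiag_iff.2 rfl

theorem card_filter_mem_le [DecidableEq V] (F : Finset (Sym2 V)) (v : V) :
    #{e ∈ F | v ∈ e} ≤ #{e ∈ F | lowerEnd r e = v} + #{e ∈ F | upperEnd r e = v} := by
  refine (card_le_card fun e he => ?_).trans (card_union_le _ _)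
  rw [mem_filter, mem_iff_eq_lowerEnd_or_eq_upperEnd (r := r)] at he
  rw [mem_union, mem_filter, mem_filter]
  rcases he with ⟨he, rfl | rfl⟩
  · exact Or.inl ⟨he, rfl⟩
  · exact Or.inr ⟨he, rfl⟩

theorem card_filter_forall_mem_le_sum [Fintype V] [DecidableEq V] {F : Finset (Sym2 V)}
    (hF : ∀ e ∈ F, ¬e.IsDiag) {S : Finset V} {m : V} (hmax : ∀ v ∈ S, r v ≤ r m) :
    #{e ∈ F | ∀ v ∈ e, v ∈ S} ≤ ∑ v ∈ S.erase m, #{e ∈ F | lowerEnd r e = v} := by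
  refine (card_le_card fun e he => ?_).trans card_biUnion_le
  rw [mem_filter] at he
  have hlow : lowerEnd r e ∈ S := he.2 _ (mem_iff_eq_lowerEnd_or_eq_upperEnd.2 (Or.inl rfl))
  have hup : upperEnd r e ∈ S := he.2 _ (mem_iff_eq_lowerEnd_or_eq_upperEnd.2 (Or.inr rfl))
  refine mem_biUnion.2 ⟨lowerEnd r e, mem_erase.2 ⟨fun h => ?_, hlow⟩, mem_filter.2 ⟨he.1, rfl⟩⟩
  have := lowerEnd_lt_upperEnd (r := r) (hF e he.1)
  rw [h] at this
  exact (hmax _ hup).not_gt this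

end Orientation

namespace SimpleGraph

variable {V : Type*} [Fintype V] [DecidableEq V] (G : SimpleGraph V) [DecidableRel G.Adj]

theorem sum_card_neighborFinset_inter_eq (S : Finset V) :
    ∑ v ∈ S, #(G.neighborFinset v ∩ S) = 2 * #{e ∈ G.edgeFinset | ∀ v ∈ e, v ∈ S} := by
  have hdeg (v : (S : Set V)) : (G.induce S).degree v = #(G.neighborFinset v ∩ S) := by
    rw [← card_neighborFinset_eq_degree, ← card_map (.subtype (· ∈ (S : Set V)))]
    convert congrArg card (G.map_neighborFinset_induce v)
    simp
  have hedges : #{e ∈ G.edgeFinset | ∀ v ∈ e, v ∈ S} = #(G.induce S).edgeFinset := by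
    rw [← card_map (Embedding.subtype (· ∈ (S : Set V))).sym2Map]
    convert congrArg card (G.map_edgeFinset_induce (s := (S : Set V))).symm using 4
    ext e; simp [mem_sym2_iff]
  rw [hedges, ← sum_degrees_eq_twice_card_edges, ← Finset.sum_coe_sort S]
  simp only [hdeg]
  rfl

theorem exists_card_neighborFinset_inter_le {α : ℕ}
    (harb : ∀ S : Finset V, 2 ≤ #S → #{e ∈ G.edgeFinset | ∀ v ∈ e, v ∈ S} ≤ α * (#S - 1))
    {S : Finset V} (hS : S.Nonempty) : ∃ v ∈ S, #(G.neighborFinset v ∩ S) ≤ 2 * α := by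
  by_contra! hlarge
  obtain ⟨v, hv⟩ := hS
  obtain ⟨u, hu⟩ := card_pos.1 ((Nat.zero_le _).trans_lt (hlarge v hv))
  rw [mem_inter, mem_neighborFinset] at hu
  have hS2 : 2 ≤ #S := one_lt_card.2 ⟨u, hu.2, v, hv, hu.1.ne'⟩
  have hsum : #S • (2 * α + 1) ≤ ∑ v ∈ S, #(G.neighborFinset v ∩ S) :=
    card_nsmul_le_sum _ _ _ fun v hv => hlarge v hv
  rw [G.sum_card_neighborFinset_inter_eq, smul_eq_mul] at hsum
  have := harb S hS2
  have : α * (#S - 1) + α = α * #S := by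
    rw [← Nat.mul_succ, Nat.succ_eq_add_one, Nat.sub_add_cancel (by omega)]
  nlinarith

theorem exists_embedding_card_filter_lt_le {d : ℕ}
    (hd : ∀ S : Finset V, S.Nonempty → ∃ v ∈ S, #(G.neighborFinset v ∩ S) ≤ d) :
    ∃ r : V ↪ ℕ, ∀ v, #{u ∈ G.neighborFinset v | r v < r u} ≤ d := by
  suffices ∀ S : Finset V, ∃ r : V → ℕ,
      Set.InjOn r S ∧ ∀ v ∈ S, #{u ∈ G.neighborFinset v ∩ S | r v < r u} ≤ d by
    obtain ⟨r, hinj, hr⟩ := this univ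
    refine ⟨⟨r, fun a b h => hinj (by simp) (by simp) h⟩, fun v => ?_⟩
    have := hr v (mem_univ v)
    rwa [inter_univ] at this
  intro S
  induction S using Finset.strongInduction with
  | H S ih =>
  rcases S.eq_empty_or_nonempty with rfl | hS
  · exact ⟨fun _ => 0, by simp, by simp⟩
  obtain ⟨v, hv, hvd⟩ := hd S hS
  obtain ⟨r, hinj, hr⟩ := ih (S.erase v) (erase_ssubset hv)
  -- `v` comes first, so its later neighbors are among its neighbors in `S`
  refine ⟨fun u => if u = v then 0 else r u + 1, fun a ha b hb hab => ?_, fun w hw => ?_⟩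
  · simp only at hab
    split_ifs at hab with h1 h2 h2
    · exact h1.trans h2.symm
    · exact hinj (mem_erase.2 ⟨h1, ha⟩) (mem_erase.2 ⟨h2, hb⟩) (by omega)
  · by_cases hwv : w = v
    · subst hwv
      exact (card_filter_le _ _).trans hvd
    refine le_trans (card_le_card fun u hu => ?_) (hr w (mem_erase.2 ⟨hwv, hw⟩))
    simp only [mem_filter, mem_inter, hwv, if_false] at hu ⊢
    split_ifs at hu with huv
    · omega
    · exact ⟨⟨hu.1.1, mem_erase.2 ⟨huv, hu.1.2⟩⟩, by omega⟩

variable {β : Type*} [LinearOrder β] {r : V ↪ β}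

theorem card_filter_lowerEnd_add_card_filter_upperEnd_le_degree (v : V) :
    #{e ∈ G.edgeFinset | lowerEnd r e = v} + #{e ∈ G.edgeFinset | upperEnd r e = v} ≤
      G.degree v := by
  rw [← card_incidenceFinset_eq_degree, incidenceFinset_eq_filter, ← card_union_of_disjoint]
  · refine card_le_card fun e he => ?_
    rw [mem_union, mem_filter, mem_filter] at he
    rw [mem_filter, mem_iff_eq_lowerEnd_or_eq_upperEnd (r := r)]
    rcases he with ⟨he, rfl⟩ | ⟨he, rfl⟩
    · exact ⟨he, Or.inl rfl⟩
    · exact ⟨he, Or.inr rfl⟩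
  · refine disjoint_filter.2 fun e he hlow hup => ?_
    have := lowerEnd_lt_upperEnd (r := r) (G.not_isDiag_of_mem_edgeSet (mem_edgeFinset.1 he))
    rw [hlow, hup] at this
    exact this.false

theorem card_filter_lowerEnd_le (v : V) :
    #{e ∈ G.edgeFinset | lowerEnd r e = v} ≤ #{u ∈ G.neighborFinset v | r v < r u} := by
  refine card_le_card_of_injOn (upperEnd r) (fun e he => ?_) fun e he e' he' h => ?_
  · rw [coe_filter, Set.mem_ofPred_eq, mem_edgeFinset] at he
    obtain ⟨he, rfl⟩ := he
    have hadj : G.Adj (lowerEnd r e) (upperEnd r e) := by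
      rwa [← mem_edgeSet, mk_lowerEnd_upperEnd]
    simpa [hadj] using lowerEnd_lt_upperEnd (r := r) (G.not_isDiag_of_mem_edgeSet he)
  · rw [coe_filter, Set.mem_ofPred_eq] at he he'
    rw [← mk_lowerEnd_upperEnd (r := r) e, ← mk_lowerEnd_upperEnd (r := r) e', he.2, he'.2, h]

theorem mul_maxDegreeOn_le {F : Finset (Sym2 V)} {k : ℕ}
    (hlow : ∀ v, k * #{e ∈ F | lowerEnd r e = v} < #{e ∈ G.edgeFinset | lowerEnd r e = v} + k)
    (hup : ∀ v, k * #{e ∈ F | upperEnd r e = v} < #{e ∈ G.edgeFinset | upperEnd r e = v} + k) :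
    k * maxDegreeOn F ≤ G.maxDegree + 2 * k := by
  rw [maxDegreeOn, Finset.mul_sup₀]
  refine Finset.sup_le fun v _ => ?_
  have hsplit := Nat.mul_le_mul_left k (card_filter_mem_le (r := r) F v)
  have hdeg := G.card_filter_lowerEnd_add_card_filter_upperEnd_le_degree (r := r) v
  have := G.degree_le_maxDegree v
  have := hlow v
  have := hup v
  rw [mul_add] at hsplit
  omega

theorem mul_card_filter_forall_mem_le {F : Finset (Sym2 V)} (hF : F ⊆ G.edgeFinset) {k d : ℕ}
    (hlow : ∀ v, k * #{e ∈ F | lowerEnd r e = v} < #{e ∈ G.edgeFinset | lowerEnd r e = v} + k)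
    (hout : ∀ v, #{e ∈ G.edgeFinset | lowerEnd r e = v} ≤ d) {S : Finset V} (hS : S.Nonempty) :
    k * #{e ∈ F | ∀ v ∈ e, v ∈ S} ≤ (d + k) * (#S - 1) := by
  obtain ⟨m, hm, hmax⟩ := S.exists_max_image r hS
  have hF' (e) (he : e ∈ F) : ¬e.IsDiag := G.not_isDiag_of_mem_edgeSet (mem_edgeFinset.1 (hF he))
  calc k * #{e ∈ F | ∀ v ∈ e, v ∈ S}
      ≤ k * ∑ v ∈ S.erase m, #{e ∈ F | lowerEnd r e = v} :=
        Nat.mul_le_mul_left k (card_filter_forall_mem_le_sum hF' hmax)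
    _ = ∑ v ∈ S.erase m, k * #{e ∈ F | lowerEnd r e = v} := mul_sum _ _ _
    _ ≤ ∑ v ∈ S.erase m, (d + k) := sum_le_sum fun v _ => by have := hlow v; have := hout v; omega
    _ = (d + k) * (#S - 1) := by rw [sum_const, card_erase_of_mem hm, smul_eq_mul, mul_comm]

end SimpleGraph

theorem partition_maxDegree_and_arboricity_bounds_general {V : Type*} [Fintype V] [DecidableEq V]
    (G : SimpleGraph V) [DecidableRel G.Adj] (α : ℕ)
    (harb : ∀ S : Finset V, 2 ≤ S.card →
      (G.edgeFinset.filter (fun e => ∀ v ∈ e, v ∈ S)).card ≤ α * (S.card - 1))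
    (h : ℕ) :
    ∃ E : Fin (2 ^ h) → Finset (Sym2 V),
      (∀ j k, j ≠ k → Disjoint (E j) (E k)) ∧
      Finset.univ.biUnion E = G.edgeFinset ∧
      ∀ j : Fin (2 ^ h),
        (maxDegreeOn (E j) : ℝ) ≤ (G.maxDegree : ℝ) / 2 ^ h + 2 ∧
        ∀ S : Finset V, 2 ≤ S.card →
          (((E j).filter (fun e => ∀ v ∈ e, v ∈ S)).card : ℝ) ≤
            ((α : ℝ) / (2 : ℝ) ^ ((h : ℤ) - 1) + 1) * ((S.card : ℝ) - 1) := by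
  obtain ⟨r, hr⟩ := G.exists_embedding_card_filter_lt_le fun S hS =>
    G.exists_card_neighborFinset_inter_le harb hS
  have hout (v : V) : #{e ∈ G.edgeFinset | lowerEnd r e = v} ≤ 2 * α :=
    (G.card_filter_lowerEnd_le v).trans (hr v)
  obtain ⟨f, hlow, hup⟩ := exists_splitsEvenly_two_pow G.edgeFinset (lowerEnd r) (upperEnd r) h
  have hpos : (0 : ℝ) < 2 ^ h := by positivity
  refine ⟨fun j => {e ∈ G.edgeFinset | f e = j},
    fun j k hjk => disjoint_filter.2 fun e _ hj hk => hjk (hj.symm.trans hk),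
    biUnion_filter_eq_of_maps_to fun _ _ => mem_univ _, fun j => ⟨?_, fun S hS => ?_⟩⟩
  · rw [div_add' _ _ _ hpos.ne', le_div_iff₀ hpos, mul_comm]
    exact_mod_cast G.mul_maxDegreeOn_le (hlow j) (hup j)
  · have hcoef : (α : ℝ) / 2 ^ ((h : ℤ) - 1) + 1 = (2 * α + 2 ^ h) / 2 ^ h := by
      rw [zpow_sub₀ two_ne_zero, zpow_one, zpow_natCast]
      field_simp
    rw [hcoef, div_mul_eq_mul_div, le_div_iff₀ hpos, mul_comm, ← Nat.cast_pred (by omega)]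
    exact_mod_cast G.mul_card_filter_forall_mem_le (filter_subset _ _) (hlow j) hout
      (card_pos.1 (by omega))

/-- if `G` has maximum degree `Δ`, arboricity at most `α` and `2^h ≤ α`, then E
can be partitioned into `2^h` parts, each of maximum degree at most `Δ/2^h + 2` and of
arboricity at most `α/2^(h-1) + 1`. -/
theorem partition_maxDegree_and_arboricity_bounds {V : Type*} [Fintype V] [DecidableEq V]
    (G : SimpleGraph V) [DecidableRel G.Adj] (α : ℕ)
    (harb : ∀ S : Finset V, 2 ≤ S.card →
      (G.edgeFinset.filter (fun e => ∀ v ∈ e, v ∈ S)).card ≤ α * (S.card - 1))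
    (h : ℕ) (hh : 2 ^ h ≤ α) :
    ∃ E : Fin (2 ^ h) → Finset (Sym2 V),
      (∀ j k, j ≠ k → Disjoint (E j) (E k)) ∧
      Finset.univ.biUnion E = G.edgeFinset ∧
      ∀ j : Fin (2 ^ h),
        (maxDegreeOn (E j) : ℝ) ≤ (G.maxDegree : ℝ) / 2 ^ h + 2 ∧
        ∀ S : Finset V, 2 ≤ S.card →
          (((E j).filter (fun e => ∀ v ∈ e, v ∈ S)).card : ℝ) ≤
            ((α : ℝ) / (2 : ℝ) ^ ((h : ℤ) - 1) + 1) * ((S.card : ℝ) - 1) :=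
  partition_maxDegree_and_arboricity_bounds_general G α harb h
end
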